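/- arXiv:2407.12959 — 5 statements merged into one kernel-verified Lean document; each statement's English description precedes it below -/
import Mathlib

section
/- Let Γ be a finite simple graph with |E(Γ)| < 2|V(Γ)| − 4. Then Γ is not thick, i.e. Γ is not thick of order k for any integer k ≥ 0. -/
open Finset
namespace RACG

variable {V : Type*}

/-- `e` is a non-edge of the graph `G`: an unordered pair of two distinct,
non-adjacent vertices. -/
def IsNonEdge (G : SimpleGraph V) (e : Sym2 V) : Prop :=
  ¬ e.IsDiag ∧ e ∉ G.edgeSet

/-- The vertex subset `S` is *thick of order 0* in `G`: it admits a partition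
`S = A ⊔ B` where neither `G[A]` nor `G[B]` is a clique and every vertex of `A`
is adjacent to every vertex of `B` (i.e. `G[S] = G[A] * G[B]` is a join). -/
def ThickZeroSet (G : SimpleGraph V) (S : Set V) : Prop :=
  ∃ A B : Set V, A ∪ B = S ∧ Disjoint A B ∧
    ¬ G.IsClique A ∧ ¬ G.IsClique B ∧ ∀ a ∈ A, ∀ b ∈ B, G.Adj a b

/-- Adjacency in the square graph `T₁(G)`: two non-edges `f, f'` are adjacent
iff the four vertices of `f ∪ f'` induce a `4`-cycle of `G` with diagonals
`f` and `f'`. -/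
def squareAdj (G : SimpleGraph V) (f f' : Sym2 V) : Prop :=
  IsNonEdge G f ∧ IsNonEdge G f' ∧
    ∃ a b c d : V, f = s(a, c) ∧ f' = s(b, d) ∧
      G.Adj a b ∧ G.Adj b c ∧ G.Adj c d ∧ G.Adj d a

/-- The suspension of a non-edge `f = {u₁, u₂}`: the set of common neighbours
of `u₁` and `u₂`. -/
def susp (G : SimpleGraph V) (f : Sym2 V) : Set V :=
  {v | ∀ u ∈ f, G.Adj v u}

/-- `C` is a connected component of the graph whose vertices are the non-edges
of `G` and whose adjacency relation is `adj`. -/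
def IsComp (G : SimpleGraph V) (adj : Sym2 V → Sym2 V → Prop)
    (C : Set (Sym2 V)) : Prop :=
  ∃ f, IsNonEdge G f ∧ C = {g | IsNonEdge G g ∧ Relation.ReflTransGen adj f g}

/-- The support of a collection `C` of non-edges at level `k`: for `k ≤ 1`
it is the union of the members of `C`; for `k ≥ 2` one also adds the
suspensions based at members of `C`. -/
def supp (G : SimpleGraph V) (k : ℕ) (C : Set (Sym2 V)) : Set V :=
  if k ≤ 1 then {v | ∃ f ∈ C, v ∈ f}
  else {v | ∃ f ∈ C, v ∈ f ∨ v ∈ susp G f}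

/-- The latch-set of `C` at level `k`: all non-edges of `G` contained in
`supp G k C`. -/
def latch (G : SimpleGraph V) (k : ℕ) (C : Set (Sym2 V)) : Set (Sym2 V) :=
  {e | IsNonEdge G e ∧ ∀ v ∈ e, v ∈ supp G k C}

/-- The adjacency relation of the level `k` graph `T_k(G)` (on the non-edges
of `G`), for `k ≥ 1`: `T₁` is the square graph, and in `T_{k+1}` two
non-edges `f₁, f₂` are adjacent iff there are connected components `C₁, C₂`
of `T_k(G)` with `fᵢ ∈ latch_k(Cᵢ)` and `latch_k(C₁) ∩ latch_k(C₂) ≠ ∅`. -/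
def Tadj (G : SimpleGraph V) : ℕ → Sym2 V → Sym2 V → Prop
  | 0 => squareAdj G
  | 1 => squareAdj G
  | (k + 2) => fun f₁ f₂ =>
      ∃ C₁ C₂ : Set (Sym2 V),
        IsComp G (Tadj G (k + 1)) C₁ ∧ IsComp G (Tadj G (k + 1)) C₂ ∧
        f₁ ∈ latch G (k + 1) C₁ ∧ f₂ ∈ latch G (k + 1) C₂ ∧
        (latch G (k + 1) C₁ ∩ latch G (k + 1) C₂).Nonempty

/-- Some connected component `C` of `T_k(G)` has full latch-set, i.e.
`latch_k(C)` is the set of all non-edges of `G`. -/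
def FullAt (G : SimpleGraph V) (k : ℕ) : Prop :=
  ∃ C : Set (Sym2 V), IsComp G (Tadj G k) C ∧
    latch G k C = {e | IsNonEdge G e}

/-- `G` is thick of order `k`: for `k = 0` this means that the whole vertex
set is thick of order `0`; for `k ≥ 1` it means that `k` is the least
integer `≥ 1` such that some connected component of `T_k(G)` has latch-set
equal to the set of all non-edges of `G`. -/
def ThickOfOrder (G : SimpleGraph V) : ℕ → Prop
  | 0 => ThickZeroSet G Set.univ
  | (k + 1) => FullAt G (k + 1) ∧ ∀ j, 1 ≤ j → j < k + 1 → ¬ FullAt G j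

/-- `G` is thick of order at most `k`. -/
def ThickOfOrderAtMost (G : SimpleGraph V) (k : ℕ) : Prop :=
  ∃ k' ≤ k, ThickOfOrder G k'

/-- `G` is thick: thick of some finite order. -/
def Thick (G : SimpleGraph V) : Prop :=
  ∃ k, ThickOfOrder G k

/-- The induced subgraph of `G` on the finset `S` is a *cherry* `K_{1,2}`,
i.e. an induced path on three vertices. -/
def IsCherry [DecidableEq V] (G : SimpleGraph V) (S : Finset V) : Prop :=
  ∃ a b c : V, S = {a, b, c} ∧ a ≠ b ∧ b ≠ c ∧ a ≠ c ∧
    G.Adj a b ∧ G.Adj b c ∧ ¬ G.Adj a c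

end RACG

namespace NT
set_option linter.unusedSectionVars false
open scoped Classical

variable {V : Type*} [Fintype V] (G : SimpleGraph V)

noncomputable def touch (U J : Finset V) : Finset (Sym2 V) :=
  G.edgeFinset.filter (fun e => (∀ v ∈ e, v ∈ U) ∧ ∃ v ∈ e, v ∈ J)

noncomputable def phi (Y : Finset V) : ℕ :=
  if (∃ x ∈ Y, ∃ y ∈ Y, x ≠ y ∧ ¬ G.Adj x y) ∨ 3 ≤ Y.card then 4
  else if Y.card = 2 then 3 else 2 * Y.card

lemma phi_le (Y : Finset V) : phi G Y ≤ 4 := by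
  unfold phi; split_ifs with h1 h2
  · exact le_refl 4
  · omega
  · push_neg at h1; omega

lemma phi_nonedge {Y : Finset V} {x y : V} (hx : x ∈ Y) (hy : y ∈ Y) (hxy : x ≠ y)
    (hna : ¬ G.Adj x y) : phi G Y = 4 := by
  unfold phi; rw [if_pos (Or.inl ⟨x, hx, y, hy, hxy, hna⟩)]

lemma phi_card3 {Y : Finset V} (h : 3 ≤ Y.card) : phi G Y = 4 := by
  unfold phi; rw [if_pos (Or.inr h)]

lemma phi_pos {Y : Finset V} (h : Y.Nonempty) : 2 ≤ phi G Y := by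
  unfold phi; split_ifs with h1 h2
  · omega
  · omega
  · have := card_pos.mpr h; omega

lemma phi_singleton (v : V) : phi G {v} = 2 := by
  unfold phi
  have h1 : ¬ ((∃ x ∈ ({v} : Finset V), ∃ y ∈ ({v} : Finset V), x ≠ y ∧ ¬ G.Adj x y) ∨
      3 ≤ ({v} : Finset V).card) := by
    push_neg
    constructor
    · intro x hx y hy
      simp only [mem_singleton] at hx hy
      subst hx; subst hy
      intro h; exact absurd rfl h
    · simp
  rw [if_neg h1]
  simp

lemma phi_pair_edge {x y : V} (hxy : x ≠ y) (hadj : G.Adj x y) :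
    phi G {x, y} ≤ 3 := by
  unfold phi
  have hcard : ({x, y} : Finset V).card = 2 := card_pair hxy
  have h1 : ¬ ((∃ a ∈ ({x, y} : Finset V), ∃ b ∈ ({x, y} : Finset V), a ≠ b ∧ ¬ G.Adj a b) ∨
      3 ≤ ({x, y} : Finset V).card) := by
    push_neg
    refine ⟨?_, by omega⟩
    intro a ha b hb hab
    simp only [mem_insert, mem_singleton] at ha hb
    rcases ha with rfl | rfl <;> rcases hb with rfl | rfl
    · exact absurd rfl hab
    · simpa using hadj
    · simpa using hadj.symm
    · exact absurd rfl hab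
  rw [if_neg h1, if_pos hcard]

lemma phi_empty : phi G (∅ : Finset V) = 0 := by
  unfold phi
  have h1 : ¬ ((∃ x ∈ (∅ : Finset V), ∃ y ∈ (∅ : Finset V), x ≠ y ∧ ¬ G.Adj x y) ∨
      3 ≤ (∅ : Finset V).card) := by
    push_neg
    constructor
    · intro x hx; simp at hx
    · simp
  rw [if_neg h1]
  simp

lemma phi_insert_le (v : V) (Y : Finset V) : phi G (insert v Y) ≤ phi G Y + 2 := by
  rcases Y.eq_empty_or_nonempty with rfl | hne
  · have h : phi G ({v} : Finset V) = 2 := phi_singleton G v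
    have he : insert v (∅ : Finset V) = {v} := rfl
    rw [he, h, phi_empty]

  · have := phi_pos G hne
    have := phi_le G (insert v Y)
    omega

lemma phi_mono {Y Y' : Finset V} (h : Y ⊆ Y') : phi G Y ≤ phi G Y' := by
  by_cases h1 : (∃ x ∈ Y', ∃ y ∈ Y', x ≠ y ∧ ¬G.Adj x y) ∨ 3 ≤ Y'.card
  · have h4 : phi G Y' = 4 := by unfold phi; rw [if_pos h1]
    rw [h4]; exact phi_le G Y
  · have h1' : ¬ ((∃ x ∈ Y, ∃ y ∈ Y, x ≠ y ∧ ¬G.Adj x y) ∨ 3 ≤ Y.card) := by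
      intro hc
      apply h1
      rcases hc with ⟨x, hx, y, hy, hxy⟩ | hc
      · exact Or.inl ⟨x, h hx, y, h hy, hxy⟩
      · exact Or.inr (le_trans hc (card_le_card h))
    have hle := card_le_card h
    unfold phi
    rw [if_neg h1, if_neg h1']
    push_neg at h1
    split_ifs with h2 h3 h3 <;> omega

def Good (U : Finset V) : Prop :=
  ∀ J ⊆ U, 2 * J.card + phi G (U \ J) ≤ (touch G U J).card + 4

-- membership lemma for touch
lemma mem_touch {U J : Finset V} {e : Sym2 V} :
    e ∈ touch G U J ↔ e ∈ G.edgeSet ∧ (∀ v ∈ e, v ∈ U) ∧ ∃ v ∈ e, v ∈ J := by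
  unfold touch
  simp [SimpleGraph.mem_edgeFinset, and_assoc]

lemma touch_mono {B U J' J : Finset V} (hBU : B ⊆ U) (hJ : J' ⊆ J) :
    touch G B J' ⊆ touch G U J := by
  intro e he
  rw [mem_touch] at he ⊢
  exact ⟨he.1, fun v hv => hBU (he.2.1 v hv), he.2.2.imp (fun v hv => ⟨hv.1, hJ hv.2⟩)⟩

lemma card_add_two {α : Type*} {S F : Finset α} {a b : α} (hS : S ⊆ F) (ha : a ∈ F)
    (hb : b ∈ F) (hab : a ≠ b) (haS : a ∉ S) (hbS : b ∉ S) : S.card + 2 ≤ F.card := by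
  have h1 : insert a (insert b S) ⊆ F := by
    intro x hx
    simp only [mem_insert] at hx
    rcases hx with rfl | rfl | hx
    · exact ha
    · exact hb
    · exact hS hx
  have h2 : (insert a (insert b S)).card = S.card + 2 := by
    rw [card_insert_of_notMem, card_insert_of_notMem hbS]
    simp only [mem_insert]
    push_neg
    exact ⟨hab, haS⟩
  calc S.card + 2 = (insert a (insert b S)).card := h2.symm
    _ ≤ F.card := card_le_card h1

lemma card_add_one {α : Type*} {S F : Finset α} {a : α} (hS : S ⊆ F) (ha : a ∈ F)
    (haS : a ∉ S) : S.card + 1 ≤ F.card := by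
  have h1 : insert a S ⊆ F := by
    intro x hx
    simp only [mem_insert] at hx
    rcases hx with rfl | hx
    · exact ha
    · exact hS hx
  calc S.card + 1 = (insert a S).card := (card_insert_of_notMem haS).symm
    _ ≤ F.card := card_le_card h1


lemma phi_three_of_two {Y : Finset V} (h : 2 ≤ Y.card) : 3 ≤ phi G Y := by
  unfold phi
  split_ifs with h1 h2 <;> omega

lemma good_grow {B : Finset V} {v b₁ b₂ : V} (hG : Good G B) (hv : v ∉ B) (h1 : b₁ ∈ B)
    (h2 : b₂ ∈ B) (hne : b₁ ≠ b₂) (hna : ¬ G.Adj b₁ b₂) (ha1 : G.Adj v b₁)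
    (ha2 : G.Adj v b₂) : Good G (insert v B) := by
  intro J hJ
  have hvb1 : v ≠ b₁ := fun h => hv (h ▸ h1)
  have hvb2 : v ≠ b₂ := fun h => hv (h ▸ h2)
  have he1 : s(v, b₁) ∈ G.edgeSet := G.mem_edgeSet.mpr ha1
  have he2 : s(v, b₂) ∈ G.edgeSet := G.mem_edgeSet.mpr ha2
  have hee : s(v, b₁) ≠ s(v, b₂) := by
    intro h
    rw [Sym2.eq_iff] at h
    rcases h with ⟨-, h⟩ | ⟨h, -⟩
    · exact hne h
    · exact hvb2 h
  have hmemB' : ∀ w, w ∈ (s(v, b₁) : Sym2 V) → w ∈ insert v B := by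
    intro w hw
    rw [Sym2.mem_iff] at hw
    rcases hw with rfl | rfl
    · exact mem_insert_self _ _
    · exact mem_insert_of_mem h1
  have hmemB2' : ∀ w, w ∈ (s(v, b₂) : Sym2 V) → w ∈ insert v B := by
    intro w hw
    rw [Sym2.mem_iff] at hw
    rcases hw with rfl | rfl
    · exact mem_insert_self _ _
    · exact mem_insert_of_mem h2
  have hnotin1 : ∀ (J' : Finset V), s(v, b₁) ∉ touch G B J' := by
    intro J' hc
    rw [mem_touch] at hc
    exact hv (hc.2.1 v (by rw [Sym2.mem_iff]; left; rfl))
  have hnotin2 : ∀ (J' : Finset V), s(v, b₂) ∉ touch G B J' := by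
    intro J' hc
    rw [mem_touch] at hc
    exact hv (hc.2.1 v (by rw [Sym2.mem_iff]; left; rfl))
  by_cases hvJ : v ∈ J
  · -- v ∈ J
    have hJ'B : J.erase v ⊆ B := by
      intro x hx
      rw [mem_erase] at hx
      rcases mem_insert.mp (hJ hx.2) with rfl | hxB
      · exact absurd rfl hx.1
      · exact hxB
    have IH := hG _ hJ'B
    have hYeq : insert v B \ J = B \ J.erase v := by
      ext x
      simp only [mem_sdiff, mem_insert, mem_erase]
      constructor
      · rintro ⟨rfl | hxB, hxJ⟩
        · exact absurd hvJ hxJ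
        · exact ⟨hxB, fun hc => hxJ hc.2⟩
      · rintro ⟨hxB, hxE⟩
        have hxv : x ≠ v := fun h => hv (h ▸ hxB)
        exact ⟨Or.inr hxB, fun hc => hxE ⟨hxv, hc⟩⟩
    have hsub : touch G B (J.erase v) ⊆ touch G (insert v B) J :=
      touch_mono G (subset_insert _ _) (erase_subset _ _)
    have hin1 : s(v, b₁) ∈ touch G (insert v B) J := by
      rw [mem_touch]
      exact ⟨he1, hmemB', ⟨v, by rw [Sym2.mem_iff]; left; rfl, hvJ⟩⟩
    have hin2 : s(v, b₂) ∈ touch G (insert v B) J := by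
      rw [mem_touch]
      exact ⟨he2, hmemB2', ⟨v, by rw [Sym2.mem_iff]; left; rfl, hvJ⟩⟩
    have hcard := card_add_two hsub hin1 hin2 hee (hnotin1 _) (hnotin2 _)
    have hJc : (J.erase v).card = J.card - 1 := card_erase_of_mem hvJ
    have hJpos : 1 ≤ J.card := card_pos.mpr ⟨v, hvJ⟩
    rw [hYeq]
    omega
  · -- v ∉ J
    have hJB : J ⊆ B := by
      intro x hx
      rcases mem_insert.mp (hJ hx) with rfl | hxB
      · exact absurd hx hvJ
      · exact hxB
    have IH := hG J hJB
    have hYeq : insert v B \ J = insert v (B \ J) := by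
      ext x
      simp only [mem_sdiff, mem_insert]
      constructor
      · rintro ⟨rfl | hxB, hxJ⟩
        · exact Or.inl rfl
        · exact Or.inr ⟨hxB, hxJ⟩
      · rintro (rfl | ⟨hxB, hxJ⟩)
        · exact ⟨Or.inl rfl, hvJ⟩
        · exact ⟨Or.inr hxB, hxJ⟩
    have hsub : touch G B J ⊆ touch G (insert v B) J :=
      touch_mono G (subset_insert _ _) (Finset.Subset.refl J)
    rw [hYeq]
    by_cases hb1J : b₁ ∈ J <;> by_cases hb2J : b₂ ∈ J
    · -- both anchors in J : +2 edges
      have hin1 : s(v, b₁) ∈ touch G (insert v B) J := by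
        rw [mem_touch]
        exact ⟨he1, hmemB', ⟨b₁, by rw [Sym2.mem_iff]; right; rfl, hb1J⟩⟩
      have hin2 : s(v, b₂) ∈ touch G (insert v B) J := by
        rw [mem_touch]
        exact ⟨he2, hmemB2', ⟨b₂, by rw [Sym2.mem_iff]; right; rfl, hb2J⟩⟩
      have hcard := card_add_two hsub hin1 hin2 hee (hnotin1 _) (hnotin2 _)
      have hphi := phi_insert_le G v (B \ J)
      omega
    · -- b₁ ∈ J, b₂ ∉ J : +1 edge, phi grows by ≤ 1
      have hin1 : s(v, b₁) ∈ touch G (insert v B) J := by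
        rw [mem_touch]
        exact ⟨he1, hmemB', ⟨b₁, by rw [Sym2.mem_iff]; right; rfl, hb1J⟩⟩
      have hcard := card_add_one hsub hin1 (hnotin1 _)
      have hb2Y : b₂ ∈ B \ J := mem_sdiff.mpr ⟨h2, hb2J⟩
      have hphi : phi G (insert v (B \ J)) ≤ phi G (B \ J) + 1 := by
        by_cases hc : 2 ≤ (B \ J).card
        · have := phi_three_of_two G hc
          have := phi_le G (insert v (B \ J))
          omega
        · -- B \ J = {b₂}
          have hcard1 : (B \ J).card = 1 := by
            have : 1 ≤ (B \ J).card := card_pos.mpr ⟨b₂, hb2Y⟩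
            omega
          obtain ⟨a, ha⟩ := card_eq_one.mp hcard1
          have hab : a = b₂ := by
            have := hb2Y
            rw [ha, mem_singleton] at this
            exact this.symm
          rw [hab] at ha
          rw [ha]
          have h3 := phi_pair_edge G hvb2 ha2
          have h2' := phi_singleton G b₂
          calc phi G (insert v {b₂}) = phi G {v, b₂} := rfl
            _ ≤ 3 := h3
            _ = phi G {b₂} + 1 := by rw [h2']
      omega
    · -- b₂ ∈ J, b₁ ∉ J : symmetric
      have hin2 : s(v, b₂) ∈ touch G (insert v B) J := by
        rw [mem_touch]
        exact ⟨he2, hmemB2', ⟨b₂, by rw [Sym2.mem_iff]; right; rfl, hb2J⟩⟩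
      have hcard := card_add_one hsub hin2 (hnotin2 _)
      have hb1Y : b₁ ∈ B \ J := mem_sdiff.mpr ⟨h1, hb1J⟩
      have hphi : phi G (insert v (B \ J)) ≤ phi G (B \ J) + 1 := by
        by_cases hc : 2 ≤ (B \ J).card
        · have := phi_three_of_two G hc
          have := phi_le G (insert v (B \ J))
          omega
        · have hcard1 : (B \ J).card = 1 := by
            have : 1 ≤ (B \ J).card := card_pos.mpr ⟨b₁, hb1Y⟩
            omega
          obtain ⟨a, ha⟩ := card_eq_one.mp hcard1
          have hab : a = b₁ := by
            have := hb1Y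
            rw [ha, mem_singleton] at this
            exact this.symm
          rw [hab] at ha
          rw [ha]
          have h3 := phi_pair_edge G hvb1 ha1
          have h2' := phi_singleton G b₁
          calc phi G (insert v {b₁}) = phi G {v, b₁} := rfl
            _ ≤ 3 := h3
            _ = phi G {b₁} + 1 := by rw [h2']
      omega
    · -- neither : nonedge b₁ b₂ inside B \ J
      have hb1Y : b₁ ∈ B \ J := mem_sdiff.mpr ⟨h1, hb1J⟩
      have hb2Y : b₂ ∈ B \ J := mem_sdiff.mpr ⟨h2, hb2J⟩
      have h4 : phi G (B \ J) = 4 := phi_nonedge G hb1Y hb2Y hne hna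
      have h4' := phi_le G (insert v (B \ J))
      have hcard := card_le_card hsub
      omega

lemma card_two_disjoint {α : Type*} {S₁ S₂ F : Finset α} (h1 : S₁ ⊆ F) (h2 : S₂ ⊆ F)
    (hd : ∀ e ∈ S₁, e ∉ S₂) : S₁.card + S₂.card ≤ F.card := by
  classical
  have hdisj : Disjoint S₁ S₂ := by
    rw [disjoint_left]
    intro a ha
    exact hd a ha
  calc S₁.card + S₂.card = (S₁ ∪ S₂).card := (card_union_of_disjoint hdisj).symm
    _ ≤ F.card := card_le_card (union_subset h1 h2)

lemma glue_count0 (B P J : Finset V) :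
    (touch G B (J ∩ B)).card + (touch G P (J \ B)).card ≤ (touch G (B ∪ P) J).card := by
  apply card_two_disjoint
  · exact touch_mono G subset_union_left inter_subset_left
  · exact touch_mono G subset_union_right (sdiff_subset)
  · intro e he hc
    rw [mem_touch] at he hc
    obtain ⟨w, hwe, hwJ⟩ := hc.2.2
    rw [mem_sdiff] at hwJ
    exact hwJ.2 (he.2.1 w hwe)

lemma glue_count1 {B P J : Finset V} {u : V} (hu : u ∈ P) (huB : u ∉ B) (huJ : u ∉ J) :
    (touch G B (J ∩ B)).card + (touch G P (insert u (J \ B))).card ≤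
      (touch G (B ∪ P) J).card + ((P \ J).erase u).card := by
  set S₂ := touch G P (insert u (J \ B)) with hS₂def
  set S₂g := S₂.filter (fun e => ∃ w ∈ e, w ∈ J) with hS₂gdef
  have hstep1 : S₂.card ≤ S₂g.card + ((P \ J).erase u).card := by
    have hsub : S₂ \ S₂g ⊆ ((P \ J).erase u).image (fun w => s(u, w)) := by
      intro e he
      rw [mem_sdiff] at he
      obtain ⟨heS, heg⟩ := he
      have heS' := heS
      rw [mem_touch] at heS'
      obtain ⟨hedge, hins, w, hwe, hwmem⟩ := heS'
      have hnotJ : ∀ z ∈ e, z ∉ J := by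
        intro z hz hzJ
        exact heg (mem_filter.mpr ⟨heS, z, hz, hzJ⟩)
      have hue : u ∈ e := by
        rcases mem_insert.mp hwmem with rfl | hwJB
        · exact hwe
        · exact absurd (mem_sdiff.mp hwJB).1 (hnotJ w hwe)
      induction e using Sym2.ind with
      | _ a b =>
        have hadj : G.Adj a b := G.mem_edgeSet.mp hedge
        have hab : a ≠ b := G.ne_of_adj hadj
        rw [Sym2.mem_iff] at hue
        rw [mem_image]
        rcases hue with rfl | rfl
        · refine ⟨b, ?_, rfl⟩
          rw [mem_erase, mem_sdiff]
          refine ⟨hab.symm, hins b (by rw [Sym2.mem_iff]; right; rfl),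
            hnotJ b (by rw [Sym2.mem_iff]; right; rfl)⟩
        · refine ⟨a, ?_, ?_⟩
          · rw [mem_erase, mem_sdiff]
            exact ⟨hab, hins a (by rw [Sym2.mem_iff]; left; rfl),
              hnotJ a (by rw [Sym2.mem_iff]; left; rfl)⟩
          · exact Sym2.eq_swap
    have hc1 : (S₂ \ S₂g).card ≤ ((P \ J).erase u).card := by
      calc (S₂ \ S₂g).card ≤ (((P \ J).erase u).image (fun w => s(u, w))).card :=
            card_le_card hsub
        _ ≤ ((P \ J).erase u).card := card_image_le
    have h5 : (S₂ \ S₂g).card + S₂g.card = S₂.card :=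
      card_sdiff_add_card_eq_card (by rw [hS₂gdef]; exact filter_subset _ _)
    omega
  have hstep2 : (touch G B (J ∩ B)).card + S₂g.card ≤ (touch G (B ∪ P) J).card := by
    apply card_two_disjoint
    · exact touch_mono G subset_union_left inter_subset_left
    · intro e he
      rw [mem_filter] at he
      obtain ⟨heS, w, hwe, hwJ⟩ := he
      rw [mem_touch] at heS ⊢
      exact ⟨heS.1, fun z hz => mem_union_right _ (heS.2.1 z hz), w, hwe, hwJ⟩
    · intro e he hc
      rw [mem_filter] at hc
      obtain ⟨hcS, -⟩ := hc
      rw [mem_touch] at he hcS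
      obtain ⟨z, hze, hzmem⟩ := hcS.2.2
      rcases mem_insert.mp hzmem with rfl | hzJB
      · exact huB (he.2.1 z hze)
      · exact (mem_sdiff.mp hzJB).2 (he.2.1 z hze)
  omega

lemma sdiff_inter_self_eq (B J : Finset V) : B \ (J ∩ B) = B \ J := by
  ext z
  simp only [mem_sdiff, mem_inter]
  tauto

lemma good_glue {B P : Finset V} {x y : V} (hB : Good G B) (hP : Good G P) (hxB : x ∈ B)
    (hxP : x ∈ P) (hyB : y ∈ B) (hyP : y ∈ P) (hxy : x ≠ y) (hna : ¬ G.Adj x y) :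
    Good G (B ∪ P) := by
  -- a one-sided estimate, stated so that it can be used with roles of B,P swapped
  have main : ∀ (B' P' : Finset V), Good G B' → Good G P' → x ∈ B' → x ∈ P' → y ∈ B' →
      y ∈ P' → ∀ J ⊆ B' ∪ P',
      2 * J.card + phi G (B' \ J) ≤ (touch G (B' ∪ P') J).card + 4 := by
    intro B' P' hB' hP' hxB' hxP' hyB' hyP' J hJ
    have hJB : J ∩ B' ⊆ B' := inter_subset_right
    have hJP : J \ B' ⊆ P' := by
      intro z hz
      rw [mem_sdiff] at hz
      rcases mem_union.mp (hJ hz.1) with h | h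
      · exact absurd h hz.2
      · exact h
    have IA := hB' (J ∩ B') hJB
    have IB := hP' (J \ B') hJP
    rw [sdiff_inter_self_eq] at IA
    have hmemx : x ∈ P' \ (J \ B') := by
      rw [mem_sdiff]
      exact ⟨hxP', fun hc => (mem_sdiff.mp hc).2 hxB'⟩
    have hmemy : y ∈ P' \ (J \ B') := by
      rw [mem_sdiff]
      exact ⟨hyP', fun hc => (mem_sdiff.mp hc).2 hyB'⟩
    have hphiP : phi G (P' \ (J \ B')) = 4 :=
      phi_nonedge G hmemx hmemy hxy hna
    rw [hphiP] at IB
    have hcount := glue_count0 G B' P' J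
    have hsplit : (J ∩ B').card + (J \ B').card = J.card := by
      rw [← card_inter_add_card_sdiff J B']
    omega
  -- the refined one-sided estimate with a helper vertex u
  have refined : ∀ (B' P' : Finset V), Good G B' → Good G P' → x ∈ B' → x ∈ P' → y ∈ B' →
      y ∈ P' → ∀ J ⊆ B' ∪ P', ∀ u ∈ P' \ J, u ∉ B' →
      2 * J.card + phi G (B' \ J) ≤ (touch G (B' ∪ P') J).card + 2 +
        ((P' \ J).erase u).card := by
    intro B' P' hB' hP' hxB' hxP' hyB' hyP' J hJ u hu huB
    rw [mem_sdiff] at hu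
    obtain ⟨huP, huJ⟩ := hu
    have hJB : J ∩ B' ⊆ B' := inter_subset_right
    have hJP : insert u (J \ B') ⊆ P' := by
      intro z hz
      rcases mem_insert.mp hz with rfl | hz'
      · exact huP
      · rw [mem_sdiff] at hz'
        rcases mem_union.mp (hJ hz'.1) with h | h
        · exact absurd h hz'.2
        · exact h
    have IA := hB' (J ∩ B') hJB
    have IB := hP' (insert u (J \ B')) hJP
    rw [sdiff_inter_self_eq] at IA
    have hmemx : x ∈ P' \ insert u (J \ B') := by
      rw [mem_sdiff, mem_insert]
      push_neg
      exact ⟨hxP', fun h => huB (h ▸ hxB'), fun hc => (mem_sdiff.mp hc).2 hxB'⟩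
    have hmemy : y ∈ P' \ insert u (J \ B') := by
      rw [mem_sdiff, mem_insert]
      push_neg
      exact ⟨hyP', fun h => huB (h ▸ hyB'), fun hc => (mem_sdiff.mp hc).2 hyB'⟩
    have hphiP : phi G (P' \ insert u (J \ B')) = 4 :=
      phi_nonedge G hmemx hmemy hxy hna
    rw [hphiP] at IB
    have huJB : u ∉ J \ B' := fun hc => huJ (mem_sdiff.mp hc).1
    have hcardins : (insert u (J \ B')).card = (J \ B').card + 1 :=
      card_insert_of_notMem huJB
    have hcount := glue_count1 G huP huB huJ
    have hsplit : (J ∩ B').card + (J \ B').card = J.card := by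
      rw [← card_inter_add_card_sdiff J B']
    omega
  intro J hJ
  set Y := (B ∪ P) \ J with hYdef
  set Y₁ := B \ J with hY₁def
  set Y₂ := P \ J with hY₂def
  have hYsplit : Y = Y₁ ∪ Y₂ := by
    ext z
    simp only [hYdef, hY₁def, hY₂def, mem_sdiff, mem_union]
    tauto
  have hJ' : J ⊆ P ∪ B := by rw [union_comm]; exact hJ
  have hUcomm : P ∪ B = B ∪ P := union_comm P B
  by_cases hc1 : phi G Y ≤ phi G Y₁
  · have := main B P hB hP hxB hxP hyB hyP J hJ
    rw [← hY₁def] at this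
    omega
  by_cases hc2 : phi G Y ≤ phi G Y₂
  · have := main P B hP hB hxP hxB hyP hyB J hJ'
    rw [hUcomm, ← hY₂def] at this
    omega
  -- now phi Y > phi Y₁ and > phi Y₂
  push_neg at hc1 hc2
  have hY1sub : Y₁ ⊆ Y := by rw [hYsplit]; exact subset_union_left
  have hY2sub : Y₂ ⊆ Y := by rw [hYsplit]; exact subset_union_right
  have hY2card : Y₂.card ≤ 2 := by
    by_contra hcon
    push_neg at hcon
    have := phi_card3 G (Y := Y₂) (by omega)
    have := phi_le G Y
    omega
  have hY1card : Y₁.card ≤ 2 := by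
    by_contra hcon
    push_neg at hcon
    have := phi_card3 G (Y := Y₁) (by omega)
    have := phi_le G Y
    omega
  have hY1ne : Y₁.Nonempty := by
    by_contra hcon
    rw [not_nonempty_iff_eq_empty] at hcon
    have : Y = Y₂ := by rw [hYsplit, hcon, empty_union]
    rw [this] at hc2
    omega
  have hY2ne : Y₂.Nonempty := by
    by_contra hcon
    rw [not_nonempty_iff_eq_empty] at hcon
    have : Y = Y₁ := by rw [hYsplit, hcon, union_empty]
    rw [this] at hc1
    omega
  have hphiY := phi_le G Y
  -- helper u ∈ Y₂ \ B exists
  have hexu : ∃ u ∈ Y₂, u ∉ B := by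
    by_contra hcon
    push_neg at hcon
    have hsub : Y₂ ⊆ Y₁ := by
      intro z hz
      rw [hY₁def, mem_sdiff]
      exact ⟨hcon z hz, (mem_sdiff.mp hz).2⟩
    have : Y = Y₁ := by
      apply Subset.antisymm
      · rw [hYsplit]
        exact union_subset (Subset.refl _) hsub
      · exact hY1sub
    rw [this] at hc1
    omega
  obtain ⟨u, huY₂, huB⟩ := hexu
  have huPJ : u ∈ P \ J := by rw [← hY₂def]; exact huY₂
  by_cases hY2one : Y₂.card = 1
  · -- refined with u, erase empty
    have hWzero : (Y₂.erase u).card = 0 := by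
      rw [card_erase_of_mem huY₂]
      omega
    have := refined B P hB hP hxB hxP hyB hyP J hJ u huPJ huB
    rw [← hY₁def, ← hY₂def] at this
    have hphi1 : 2 ≤ phi G Y₁ := phi_pos G hY1ne
    omega
  · have hY2two : Y₂.card = 2 := by
      have : 1 ≤ Y₂.card := card_pos.mpr hY2ne
      omega
    by_cases hY1two : 2 ≤ Y₁.card
    · -- refined with u, erase card 1, phi Y₁ ≥ 3
      have hWone : (Y₂.erase u).card = 1 := by
        rw [card_erase_of_mem huY₂]
        omega
      have := refined B P hB hP hxB hxP hyB hyP J hJ u huPJ huB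
      rw [← hY₁def, ← hY₂def] at this
      have hphi1 : 3 ≤ phi G Y₁ := phi_three_of_two G hY1two
      omega
    · -- Y₁ is a singleton; swap roles
      have hY1one : Y₁.card = 1 := by
        have : 1 ≤ Y₁.card := card_pos.mpr hY1ne
        omega
      have hexu' : ∃ u' ∈ Y₁, u' ∉ P := by
        by_contra hcon
        push_neg at hcon
        have hsub : Y₁ ⊆ Y₂ := by
          intro z hz
          rw [hY₂def, mem_sdiff]
          exact ⟨hcon z hz, (mem_sdiff.mp hz).2⟩
        have : Y = Y₂ := by
          apply Subset.antisymm
          · rw [hYsplit]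
            exact union_subset hsub (Subset.refl _)
          · exact hY2sub
        rw [this] at hc2
        omega
      obtain ⟨u', hu'Y₁, hu'P⟩ := hexu'
      have hu'BJ : u' ∈ B \ J := by rw [← hY₁def]; exact hu'Y₁
      have hWzero : (Y₁.erase u').card = 0 := by
        rw [card_erase_of_mem hu'Y₁]
        omega
      have := refined P B hP hB hxP hxB hyP hyB J hJ' u' hu'BJ hu'P
      rw [hUcomm, ← hY₂def, ← hY₁def] at this
      have hphi2 : 2 ≤ phi G Y₂ := phi_pos G hY2ne
      omega

lemma phi_card_one {Y : Finset V} (h : Y.card = 1) : phi G Y = 2 := by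
  obtain ⟨a, ha⟩ := card_eq_one.mp h
  rw [ha]
  exact phi_singleton G a

lemma good_pair {x y : V} (hxy : x ≠ y) (hna : ¬ G.Adj x y) : Good G {x, y} := by
  intro J hJ
  have hc2 : ({x, y} : Finset V).card = 2 := card_pair hxy
  have hJc : J.card ≤ 2 := hc2 ▸ card_le_card hJ
  have hYc : (({x, y} : Finset V) \ J).card = 2 - J.card := by
    rw [card_sdiff_of_subset hJ, hc2]
  have hcases : J.card = 0 ∨ J.card = 1 ∨ J.card = 2 := by omega
  rcases hcases with h0 | h1 | h2
  · have := phi_le G (({x, y} : Finset V) \ J)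
    omega
  · have : phi G (({x, y} : Finset V) \ J) = 2 := phi_card_one G (by omega)
    omega
  · have : (({x, y} : Finset V) \ J).card = 0 := by omega
    have hYe : ({x, y} : Finset V) \ J = ∅ := card_eq_zero.mp this
    rw [hYe, phi_empty]
    omega

/-- Buildable vertex sets. -/
inductive Built : Finset V → Prop
  | base {x y : V} : x ≠ y → ¬ G.Adj x y → Built {x, y}
  | grow {B : Finset V} {v b₁ b₂ : V} : Built B → v ∉ B → b₁ ∈ B → b₂ ∈ B →
      b₁ ≠ b₂ → ¬ G.Adj b₁ b₂ → G.Adj v b₁ → G.Adj v b₂ → Built (insert v B)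
  | glue {B P : Finset V} {x y : V} : Built B → Built P → x ∈ B → x ∈ P → y ∈ B →
      y ∈ P → x ≠ y → ¬ G.Adj x y → Built (B ∪ P)

lemma built_good {U : Finset V} (h : Built G U) : Good G U := by
  induction h with
  | base hxy hna => exact good_pair G hxy hna
  | grow hB hv h1 h2 hne hna ha1 ha2 ih => exact good_grow G ih hv h1 h2 hne hna ha1 ha2
  | glue hB hP hxB hxP hyB hyP hxy hna ihB ihP =>
      exact good_glue G ihB ihP hxB hxP hyB hyP hxy hna

lemma built_insert_corner {B : Finset V} {a c v : V} (hB : Built G B) (ha : a ∈ B)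
    (hc : c ∈ B) (hac : a ≠ c) (hna : ¬ G.Adj a c) (hva : G.Adj v a) (hvc : G.Adj v c) :
    Built G (insert v B) := by
  by_cases hv : v ∈ B
  · rwa [insert_eq_self.mpr hv]
  · exact Built.grow hB hv ha hc hac hna hva hvc

lemma built_cover {S B₀ : Finset V} (hB₀ : Built G B₀) (hB₀S : B₀ ⊆ S)
    (hstep : ∀ B, Built G B → B₀ ⊆ B → B ⊆ S → ∀ v ∈ S, v ∉ B →
      ∃ B', Built G B' ∧ B ⊆ B' ∧ B' ⊆ S ∧ v ∈ B') :
    Built G S := by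
  suffices h : ∀ n (B : Finset V), Built G B → B₀ ⊆ B → B ⊆ S → (S \ B).card ≤ n →
      Built G S by
    exact h (S \ B₀).card B₀ hB₀ (Finset.Subset.refl _) hB₀S le_rfl
  intro n
  induction n with
  | zero =>
    intro B hB hB0 hBS hcard
    have hempty : S \ B = ∅ := card_eq_zero.mp (Nat.le_zero.mp hcard)
    have hSB : S ⊆ B := by
      intro z hz
      by_contra hzB
      have : z ∈ S \ B := mem_sdiff.mpr ⟨hz, hzB⟩
      rw [hempty] at this
      exact absurd this (notMem_empty z)
    rwa [Finset.Subset.antisymm hBS hSB] at hB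
  | succ n ih =>
    intro B hB hB0 hBS hcard
    by_cases hempty : S \ B = ∅
    · have hSB : S ⊆ B := by
        intro z hz
        by_contra hzB
        have : z ∈ S \ B := mem_sdiff.mpr ⟨hz, hzB⟩
        rw [hempty] at this
        exact absurd this (notMem_empty z)
      rwa [Finset.Subset.antisymm hBS hSB] at hB
    · obtain ⟨v, hv⟩ := nonempty_iff_ne_empty.mpr hempty
      rw [mem_sdiff] at hv
      obtain ⟨B', hB', hBB', hB'S, hvB'⟩ := hstep B hB hB0 hBS v hv.1 hv.2
      apply ih B' hB' (hB0.trans hBB') hB'S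
      have hsub : S \ B' ⊆ (S \ B).erase v := by
        intro z hz
        obtain ⟨hzS, hzB'⟩ := mem_sdiff.mp hz
        rw [mem_erase, mem_sdiff]
        exact ⟨fun h => hzB' (h ▸ hvB'), hzS, fun h => hzB' (hBB' h)⟩
      calc (S \ B').card ≤ ((S \ B).erase v).card := card_le_card hsub
        _ = (S \ B).card - 1 := card_erase_of_mem (mem_sdiff.mpr hv)
        _ ≤ n := by omega

section RACGpart

open RACG

lemma isNonEdge_mk {a b : V} : IsNonEdge G s(a, b) ↔ a ≠ b ∧ ¬ G.Adj a b := by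
  unfold IsNonEdge
  rw [Sym2.mk_isDiag_iff, SimpleGraph.mem_edgeSet]

/-- The connected component of `f₀` in `T_k`. -/
def compSet (k : ℕ) (f₀ : Sym2 V) : Set (Sym2 V) :=
  {g | IsNonEdge G g ∧ Relation.ReflTransGen (Tadj G k) f₀ g}

/-- Finset version of the support. -/
noncomputable def suppFin (k : ℕ) (C : Set (Sym2 V)) : Finset V :=
  (Set.toFinite (supp G k C)).toFinset

lemma mem_suppFin {k : ℕ} {C : Set (Sym2 V)} {v : V} :
    v ∈ suppFin G k C ↔ v ∈ supp G k C := Set.Finite.mem_toFinset _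

lemma vert_mem_supp {k : ℕ} {C : Set (Sym2 V)} {f : Sym2 V} {v : V} (hf : f ∈ C)
    (hv : v ∈ f) : v ∈ supp G k C := by
  unfold RACG.supp
  split_ifs
  · exact ⟨f, hf, hv⟩
  · exact ⟨f, hf, Or.inl hv⟩

lemma self_mem_comp {k : ℕ} {f : Sym2 V} (hf : IsNonEdge G f) : f ∈ compSet G k f :=
  ⟨hf, Relation.ReflTransGen.refl⟩

lemma mem_latch_self {k j : ℕ} {h f : Sym2 V} (hf : f ∈ compSet G j h) :
    f ∈ latch G k (compSet G j h) :=
  ⟨hf.1, fun v hv => vert_mem_supp G hf hv⟩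

lemma tadj_two {k : ℕ} {f₁ f₂ : Sym2 V} {h₁ h₂ : Sym2 V} (hn₁ : IsNonEdge G h₁)
    (hn₂ : IsNonEdge G h₂) (hf₁ : f₁ ∈ latch G (k + 1) (compSet G (k + 1) h₁))
    (hf₂ : f₂ ∈ latch G (k + 1) (compSet G (k + 1) h₂))
    (hmeet : (latch G (k + 1) (compSet G (k + 1) h₁) ∩
      latch G (k + 1) (compSet G (k + 1) h₂)).Nonempty) :
    Tadj G (k + 2) f₁ f₂ := by
  show ∃ C₁ C₂ : Set (Sym2 V), _
  exact ⟨compSet G (k + 1) h₁, compSet G (k + 1) h₂, ⟨h₁, hn₁, rfl⟩, ⟨h₂, hn₂, rfl⟩,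
    hf₁, hf₂, hmeet⟩

lemma latch_sub {k : ℕ} {f₀ h f₁ f' : Sym2 V} (hD : IsNonEdge G h)
    (hf₁L : f₁ ∈ latch G (k + 1) (compSet G (k + 1) h))
    (hf₁C : f₁ ∈ compSet G (k + 2) f₀)
    (hf'L : f' ∈ latch G (k + 1) (compSet G (k + 1) h)) :
    f' ∈ compSet G (k + 2) f₀ := by
  refine ⟨hf'L.1, hf₁C.2.tail ?_⟩
  exact tadj_two G hD hD hf₁L hf'L ⟨f₁, hf₁L, hf₁L⟩

lemma lower_supp_sub {k : ℕ} {f₀ h f₁ : Sym2 V} (hD : IsNonEdge G h)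
    (hf₁L : f₁ ∈ latch G (k + 1) (compSet G (k + 1) h))
    (hf₁C : f₁ ∈ compSet G (k + 2) f₀) :
    supp G (k + 1) (compSet G (k + 1) h) ⊆ supp G (k + 2) (compSet G (k + 2) f₀) := by
  intro v hv
  have hgoal : ∀ f, f ∈ compSet G (k + 1) h → (v ∈ f ∨ v ∈ susp G f) →
      v ∈ supp G (k + 2) (compSet G (k + 2) f₀) := by
    intro f hfD hvf
    have hfC : f ∈ compSet G (k + 2) f₀ :=
      latch_sub G hD hf₁L hf₁C (mem_latch_self G hfD)
    unfold RACG.supp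
    rw [if_neg (by omega : ¬ k + 2 ≤ 1)]
    exact ⟨f, hfC, hvf⟩
  unfold RACG.supp at hv
  by_cases hk : k + 1 ≤ 1
  · rw [if_pos hk] at hv
    obtain ⟨f, hfD, hvf⟩ := hv
    exact hgoal f hfD (Or.inl hvf)
  · rw [if_neg hk] at hv
    obtain ⟨f, hfD, hvf⟩ := hv
    exact hgoal f hfD hvf

end RACGpart

section BuiltSupp

open RACG

lemma squareAdj_nonedge_left {f g : Sym2 V} (h : squareAdj G f g) : IsNonEdge G f := h.1
lemma squareAdj_nonedge_right {f g : Sym2 V} (h : squareAdj G f g) : IsNonEdge G g := h.2.1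

/-- Level 1: the support of a square-component is buildable. -/
lemma built_supp_one (f₀ : Sym2 V) (h₀ : IsNonEdge G f₀) :
    Built G (suppFin G 1 (compSet G 1 f₀)) := by
  induction f₀ using Sym2.ind with
  | _ x₀ y₀ =>
  obtain ⟨hxy₀, hna₀⟩ := (isNonEdge_mk G).mp h₀
  set C := compSet G 1 s(x₀, y₀) with hCdef
  have hf₀C : s(x₀, y₀) ∈ C := self_mem_comp G h₀
  have hTadj1 : Tadj G 1 = squareAdj G := rfl
  -- step 1: each member of the component has its pair inside a built subset
  have step1 : ∀ g : Sym2 V, Relation.ReflTransGen (Tadj G 1) s(x₀, y₀) g →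
      ∃ B : Finset V, Built G B ∧ (∀ w ∈ B, w ∈ supp G 1 C) ∧ x₀ ∈ B ∧ y₀ ∈ B ∧
        ∀ w ∈ g, w ∈ B := by
    intro g hg
    induction hg with
    | refl =>
      refine ⟨{x₀, y₀}, Built.base hxy₀ hna₀, ?_, ?_, ?_, ?_⟩
      · intro w hw
        rcases mem_insert.mp hw with rfl | hw
        · exact vert_mem_supp G hf₀C (by rw [Sym2.mem_iff]; left; rfl)
        · rw [mem_singleton] at hw
          subst hw
          exact vert_mem_supp G hf₀C (by rw [Sym2.mem_iff]; right; rfl)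
      · exact mem_insert_self _ _
      · exact mem_insert_of_mem (mem_singleton_self _)
      · intro w hw
        rw [Sym2.mem_iff] at hw
        rcases hw with rfl | rfl
        · exact mem_insert_self _ _
        · exact mem_insert_of_mem (mem_singleton_self _)
    | @tail b c hab hstep ih =>
      obtain ⟨B, hB, hBsupp, hx₀, hy₀, hverts⟩ := ih
      rw [hTadj1] at hstep
      obtain ⟨hnb, hnc, p, q, r, t, hbEq, hcEq, h1, h2, h3, h4⟩ := hstep
      have hcC : c ∈ C := ⟨hnc, hab.tail (by rw [hTadj1]; exact ⟨hnb, hnc, p, q, r, t, hbEq, hcEq, h1, h2, h3, h4⟩)⟩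
      rw [hbEq] at hnb
      obtain ⟨hpr, hnapr⟩ := (isNonEdge_mk G).mp hnb
      have hp : p ∈ B := hverts p (by rw [hbEq, Sym2.mem_iff]; left; rfl)
      have hr : r ∈ B := hverts r (by rw [hbEq, Sym2.mem_iff]; right; rfl)
      have hB1 : Built G (insert q B) :=
        built_insert_corner G hB hp hr hpr hnapr h1.symm h2
      have hB2 : Built G (insert t (insert q B)) :=
        built_insert_corner G hB1 (mem_insert_of_mem hp) (mem_insert_of_mem hr)
          hpr hnapr h4 h3.symm
      refine ⟨insert t (insert q B), hB2, ?_, by simp [hx₀], by simp [hy₀], ?_⟩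
      · intro w hw
        rcases mem_insert.mp hw with rfl | hw
        · exact vert_mem_supp G hcC (by rw [hcEq, Sym2.mem_iff]; right; rfl)
        · rcases mem_insert.mp hw with rfl | hw
          · exact vert_mem_supp G hcC (by rw [hcEq, Sym2.mem_iff]; left; rfl)
          · exact hBsupp w hw
      · intro w hw
        rw [hcEq, Sym2.mem_iff] at hw
        rcases hw with rfl | rfl
        · exact mem_insert_of_mem (mem_insert_self _ _)
        · exact mem_insert_self _ _
  -- cover
  apply built_cover G (B₀ := {x₀, y₀}) (Built.base hxy₀ hna₀)
  · intro w hw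
    rw [mem_suppFin G]
    rcases mem_insert.mp hw with rfl | hw
    · exact vert_mem_supp G hf₀C (by rw [Sym2.mem_iff]; left; rfl)
    · rw [mem_singleton] at hw
      subst hw
      exact vert_mem_supp G hf₀C (by rw [Sym2.mem_iff]; right; rfl)
  · intro B hB hB0 hBS v hvS hvB
    have hvsupp : v ∈ supp G 1 C := (mem_suppFin G).mp hvS
    have hvsupp' : ∃ f ∈ C, v ∈ f := by
      unfold RACG.supp at hvsupp
      rw [if_pos (by omega : (1:ℕ) ≤ 1)] at hvsupp
      exact hvsupp
    obtain ⟨f, hfC, hvf⟩ := hvsupp'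
    obtain ⟨B', hB', hB'supp, hx₀', hy₀', hverts'⟩ := step1 f hfC.2
    refine ⟨B ∪ B', Built.glue hB hB' (hB0 (mem_insert_self _ _)) hx₀'
      (hB0 (mem_insert_of_mem (mem_singleton_self _))) hy₀' hxy₀ hna₀, subset_union_left,
      ?_, mem_union_right _ (hverts' v hvf)⟩
    intro w hw
    rcases mem_union.mp hw with hw | hw
    · exact hBS hw
    · rw [mem_suppFin G]
      exact hB'supp w hw

end BuiltSupp

section BuiltSuppAll

open RACG

lemma built_glue_nonedge {B P : Finset V} {f : Sym2 V} (hB : Built G B) (hP : Built G P)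
    (hf : IsNonEdge G f) (hfB : ∀ w ∈ f, w ∈ B) (hfP : ∀ w ∈ f, w ∈ P) :
    Built G (B ∪ P) := by
  induction f using Sym2.ind with
  | _ a b =>
  obtain ⟨hab, hna⟩ := (isNonEdge_mk G).mp hf
  exact Built.glue hB hP (hfB a (by rw [Sym2.mem_iff]; left; rfl))
    (hfP a (by rw [Sym2.mem_iff]; left; rfl))
    (hfB b (by rw [Sym2.mem_iff]; right; rfl))
    (hfP b (by rw [Sym2.mem_iff]; right; rfl)) hab hna

lemma built_insert_susp {B : Finset V} {f : Sym2 V} {v : V} (hB : Built G B)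
    (hf : IsNonEdge G f) (hfB : ∀ w ∈ f, w ∈ B) (hv : v ∈ susp G f) :
    Built G (insert v B) := by
  induction f using Sym2.ind with
  | _ a b =>
  obtain ⟨hab, hna⟩ := (isNonEdge_mk G).mp hf
  have hva : G.Adj v a := hv a (by rw [Sym2.mem_iff]; left; rfl)
  have hvb : G.Adj v b := hv b (by rw [Sym2.mem_iff]; right; rfl)
  exact built_insert_corner G hB (hfB a (by rw [Sym2.mem_iff]; left; rfl))
    (hfB b (by rw [Sym2.mem_iff]; right; rfl)) hab hna hva hvb

lemma vert_mem_suppFin_self {k : ℕ} {f : Sym2 V} (hf : IsNonEdge G f) :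
    ∀ w ∈ f, w ∈ suppFin G k (compSet G k f) := by
  intro w hw
  rw [mem_suppFin G]
  exact vert_mem_supp G (self_mem_comp G hf) hw

lemma built_supp : ∀ (k : ℕ) (f₀ : Sym2 V), IsNonEdge G f₀ →
    Built G (suppFin G (k + 1) (compSet G (k + 1) f₀)) := by
  intro k
  induction k with
  | zero => exact built_supp_one G
  | succ n ih =>
    intro f₀ h₀
    induction f₀ using Sym2.ind with
    | _ x₀ y₀ =>
    obtain ⟨hxy₀, hna₀⟩ := (isNonEdge_mk G).mp h₀
    set C := compSet G (n + 2) s(x₀, y₀) with hCdef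
    have hf₀C : s(x₀, y₀) ∈ C := self_mem_comp G h₀
    -- step 1
    have step1 : ∀ g, Relation.ReflTransGen (Tadj G (n + 2)) s(x₀, y₀) g → IsNonEdge G g →
        ∃ B : Finset V, Built G B ∧ (∀ w ∈ B, w ∈ supp G (n + 2) C) ∧ x₀ ∈ B ∧ y₀ ∈ B ∧
          ∀ w ∈ suppFin G (n + 1) (compSet G (n + 1) g), w ∈ B := by
      intro g hg
      induction hg with
      | refl =>
        intro _
        refine ⟨suppFin G (n + 1) (compSet G (n + 1) s(x₀, y₀)), ih _ h₀, ?_, ?_, ?_,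
          fun w hw => hw⟩
        · intro w hw
          exact lower_supp_sub G h₀ (mem_latch_self G (self_mem_comp G h₀)) hf₀C
            ((mem_suppFin G).mp hw)
        · exact vert_mem_suppFin_self G h₀ x₀ (by rw [Sym2.mem_iff]; left; rfl)
        · exact vert_mem_suppFin_self G h₀ y₀ (by rw [Sym2.mem_iff]; right; rfl)
      | @tail b c hab hstep ihs =>
        intro hcne
        have hstep' := hstep
        obtain ⟨C₁, C₂, ⟨e₁, hne₁, hC₁⟩, ⟨e₂, hne₂, hC₂⟩, hbL, hcL, ⟨w, hwL₁, hwL₂⟩⟩ := hstep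
        have hC₁' : C₁ = compSet G (n + 1) e₁ := hC₁
        have hC₂' : C₂ = compSet G (n + 1) e₂ := hC₂
        rw [hC₁'] at hbL hwL₁
        rw [hC₂'] at hcL hwL₂
        have hbne : IsNonEdge G b := hbL.1
        have hbC : b ∈ C := ⟨hbne, hab⟩
        have hcC : c ∈ C := ⟨hcne, hab.tail hstep'⟩
        obtain ⟨B, hB, hBsupp, hx₀, hy₀, hBcont⟩ := ihs hbne
        set P₁ := suppFin G (n + 1) (compSet G (n + 1) e₁) with hP₁def
        set P₂ := suppFin G (n + 1) (compSet G (n + 1) e₂) with hP₂def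
        set P₃ := suppFin G (n + 1) (compSet G (n + 1) c) with hP₃def
        have hP₁b : Built G P₁ := ih _ hne₁
        have hP₂b : Built G P₂ := ih _ hne₂
        have hP₃b : Built G P₃ := ih _ hcne
        -- glue B with P₁ along b
        have hbB : ∀ v ∈ b, v ∈ B := by
          intro v hv
          exact hBcont v (vert_mem_suppFin_self G hbne v hv)
        have hbP₁ : ∀ v ∈ b, v ∈ P₁ := by
          intro v hv
          rw [hP₁def, mem_suppFin G]
          exact hbL.2 v hv
        have hBP₁ : Built G (B ∪ P₁) := built_glue_nonedge G hB hP₁b hbne hbB hbP₁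
        -- glue with P₂ along w
        have hwP₁ : ∀ v ∈ w, v ∈ B ∪ P₁ := by
          intro v hv
          apply mem_union_right
          rw [hP₁def, mem_suppFin G]
          exact hwL₁.2 v hv
        have hwP₂ : ∀ v ∈ w, v ∈ P₂ := by
          intro v hv
          rw [hP₂def, mem_suppFin G]
          exact hwL₂.2 v hv
        have hBP₂ : Built G ((B ∪ P₁) ∪ P₂) :=
          built_glue_nonedge G hBP₁ hP₂b hwL₁.1 hwP₁ hwP₂
        -- glue with P₃ along c
        have hcP₂ : ∀ v ∈ c, v ∈ (B ∪ P₁) ∪ P₂ := by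
          intro v hv
          apply mem_union_right
          rw [hP₂def, mem_suppFin G]
          exact hcL.2 v hv
        have hcP₃ : ∀ v ∈ c, v ∈ P₃ := vert_mem_suppFin_self G hcne
        have hBP₃ : Built G (((B ∪ P₁) ∪ P₂) ∪ P₃) :=
          built_glue_nonedge G hBP₂ hP₃b hcne hcP₂ hcP₃
        -- supp condition
        have hwC : w ∈ C := latch_sub G hne₁ hbL hbC hwL₁
        refine ⟨((B ∪ P₁) ∪ P₂) ∪ P₃, hBP₃, ?_, by simp [hx₀], by simp [hy₀], ?_⟩
        · intro v hv
          rcases mem_union.mp hv with hv | hv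
          · rcases mem_union.mp hv with hv | hv
            · rcases mem_union.mp hv with hv | hv
              · exact hBsupp v hv
              · exact lower_supp_sub G hne₁ hbL hbC ((mem_suppFin G).mp hv)
            · exact lower_supp_sub G hne₂ hwL₂ hwC ((mem_suppFin G).mp hv)
          · exact lower_supp_sub G hcne (mem_latch_self G (self_mem_comp G hcne)) hcC
              ((mem_suppFin G).mp hv)
        · intro v hv
          exact mem_union_right _ hv
    -- cover
    have hB₀sub : ∀ w ∈ suppFin G (n + 1) (compSet G (n + 1) s(x₀, y₀)),
        w ∈ suppFin G (n + 2) C := by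
      intro w hw
      rw [mem_suppFin G]
      exact lower_supp_sub G h₀ (mem_latch_self G (self_mem_comp G h₀)) hf₀C
        ((mem_suppFin G).mp hw)
    apply built_cover G (B₀ := suppFin G (n + 1) (compSet G (n + 1) s(x₀, y₀))) (ih _ h₀)
      hB₀sub
    intro B hB hB0 hBS v hvS hvB
    have hx₀B : x₀ ∈ B := hB0 (vert_mem_suppFin_self G h₀ x₀ (by rw [Sym2.mem_iff]; left; rfl))
    have hy₀B : y₀ ∈ B := hB0 (vert_mem_suppFin_self G h₀ y₀ (by rw [Sym2.mem_iff]; right; rfl))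
    have hvsupp : v ∈ supp G (n + 2) C := (mem_suppFin G).mp hvS
    have hvsupp' : ∃ f ∈ C, v ∈ f ∨ v ∈ susp G f := by
      unfold RACG.supp at hvsupp
      rw [if_neg (by omega : ¬ n + 2 ≤ 1)] at hvsupp
      exact hvsupp
    obtain ⟨f, hfC, hvf⟩ := hvsupp'
    obtain ⟨Bf, hBf, hBfsupp, hx₀', hy₀', hBfcont⟩ := step1 f hfC.2 hfC.1
    have hglue : Built G (B ∪ Bf) := Built.glue hB hBf hx₀B hx₀' hy₀B hy₀' hxy₀ hna₀
    have hBBfS : B ∪ Bf ⊆ suppFin G (n + 2) C := by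
      intro z hz
      rcases mem_union.mp hz with hz | hz
      · exact hBS hz
      · rw [mem_suppFin G]
        exact hBfsupp z hz
    rcases hvf with hvf | hvf
    · refine ⟨B ∪ Bf, hglue, subset_union_left, hBBfS, ?_⟩
      exact mem_union_right _ (hBfcont v (vert_mem_suppFin_self G hfC.1 v hvf))
    · -- v is a suspension vertex of f
      have hfBBf : ∀ u ∈ f, u ∈ B ∪ Bf := by
        intro u hu
        exact mem_union_right _ (hBfcont u (vert_mem_suppFin_self G hfC.1 u hu))
      refine ⟨insert v (B ∪ Bf), built_insert_susp G hglue hfC.1 hfBBf hvf,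
        (subset_union_left).trans (subset_insert _ _), ?_, mem_insert_self _ _⟩
      intro z hz
      rcases mem_insert.mp hz with rfl | hz
      · exact hvS
      · exact hBBfS hz

end BuiltSuppAll

section Final

open RACG

lemma touch_univ : touch G (univ : Finset V) (univ : Finset V) = G.edgeFinset := by
  ext e
  rw [mem_touch, SimpleGraph.mem_edgeFinset]
  constructor
  · intro h; exact h.1
  · intro h
    refine ⟨h, fun v _ => mem_univ v, ?_⟩
    induction e using Sym2.ind with
    | _ a b => exact ⟨a, by rw [Sym2.mem_iff]; left; rfl, mem_univ a⟩

lemma edge_ncard_eq : G.edgeSet.ncard = G.edgeFinset.card := by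
  rw [← SimpleGraph.coe_edgeFinset]
  exact Set.ncard_coe_finset _

lemma built_univ_bound (h : Built G (univ : Finset V)) :
    2 * Fintype.card V ≤ G.edgeSet.ncard + 4 := by
  rw [edge_ncard_eq G]
  have hgood := built_good G h
  have := hgood univ (Finset.Subset.refl _)
  rw [sdiff_self, bot_eq_empty, phi_empty, touch_univ] at this
  simpa [Finset.card_univ] using this

lemma full_contra {k : ℕ} (hful : FullAt G (k + 1)) :
    2 * Fintype.card V ≤ G.edgeSet.ncard + 4 := by
  obtain ⟨C, ⟨f₀, hf₀ne, hCeq⟩, hlatch⟩ := hful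
  have hCeq' : C = compSet G (k + 1) f₀ := hCeq
  rw [hCeq'] at hlatch
  clear hCeq hCeq'
  induction f₀ using Sym2.ind with
  | _ x₀ y₀ =>
  obtain ⟨hxy₀, hna₀⟩ := (isNonEdge_mk G).mp hf₀ne
  have hSbuilt : Built G (suppFin G (k + 1) (compSet G (k + 1) s(x₀, y₀))) :=
    built_supp G k _ hf₀ne
  set S := suppFin G (k + 1) (compSet G (k + 1) s(x₀, y₀)) with hSdef
  have hx₀S : x₀ ∈ S := vert_mem_suppFin_self G hf₀ne x₀ (by rw [Sym2.mem_iff]; left; rfl)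
  have hy₀S : y₀ ∈ S := vert_mem_suppFin_self G hf₀ne y₀ (by rw [Sym2.mem_iff]; right; rfl)
  have huniv : Built G (univ : Finset V) := by
    apply built_cover G hSbuilt (subset_univ S)
    intro B hB hB0 hBS v hvS hvB
    have hx₀B : x₀ ∈ B := hB0 hx₀S
    have hy₀B : y₀ ∈ B := hB0 hy₀S
    have hkey : ∀ z ∈ B, ¬ G.Adj v z → False := by
      intro z hzB hcadj
      have hvz : v ≠ z := fun h => hvB (h ▸ hzB)
      have hne : IsNonEdge G s(v, z) := (isNonEdge_mk G).mpr ⟨hvz, hcadj⟩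
      have hmem : s(v, z) ∈ latch G (k + 1) (compSet G (k + 1) s(x₀, y₀)) := by
        rw [hlatch]
        exact hne
      have hvsupp : v ∈ supp G (k + 1) (compSet G (k + 1) s(x₀, y₀)) :=
        hmem.2 v (by rw [Sym2.mem_iff]; left; rfl)
      have : v ∈ S := (mem_suppFin G).mpr hvsupp
      exact hvB (hB0 this)
    have hvx : G.Adj v x₀ := by
      by_contra hc
      exact hkey x₀ hx₀B hc
    have hvy : G.Adj v y₀ := by
      by_contra hc
      exact hkey y₀ hy₀B hc
    exact ⟨insert v B, Built.grow hB hvB hx₀B hy₀B hxy₀ hna₀ hvx hvy,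
      subset_insert _ _, subset_univ _, mem_insert_self _ _⟩
  exact built_univ_bound G huniv

lemma thickzero_contra (h : ThickZeroSet G Set.univ) :
    2 * Fintype.card V ≤ G.edgeSet.ncard + 4 := by
  rw [edge_ncard_eq G]
  obtain ⟨A, B, hunion, hdisj, hnA, hnB, hadj⟩ := h
  have hAfin : A.Finite := Set.toFinite A
  have hBfin : B.Finite := Set.toFinite B
  set A' := hAfin.toFinset with hA'def
  set B' := hBfin.toFinset with hB'def
  -- two distinct non-adjacent vertices in each side
  rw [SimpleGraph.isClique_iff] at hnA hnB
  rw [Set.Pairwise] at hnA hnB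
  push_neg at hnA hnB
  obtain ⟨a₁, ha₁, a₂, ha₂, ha12, -⟩ := hnA
  obtain ⟨b₁, hb₁, b₂, hb₂, hb12, -⟩ := hnB
  have hcardA : 2 ≤ A'.card := by
    have : ({a₁, a₂} : Finset V) ⊆ A' := by
      intro z hz
      rcases mem_insert.mp hz with rfl | hz
      · exact hAfin.mem_toFinset.mpr ha₁
      · rw [mem_singleton] at hz
        subst hz
        exact hAfin.mem_toFinset.mpr ha₂
    calc 2 = ({a₁, a₂} : Finset V).card := (card_pair ha12).symm
      _ ≤ A'.card := card_le_card this
  have hcardB : 2 ≤ B'.card := by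
    have : ({b₁, b₂} : Finset V) ⊆ B' := by
      intro z hz
      rcases mem_insert.mp hz with rfl | hz
      · exact hBfin.mem_toFinset.mpr hb₁
      · rw [mem_singleton] at hz
        subst hz
        exact hBfin.mem_toFinset.mpr hb₂
    calc 2 = ({b₁, b₂} : Finset V).card := (card_pair hb12).symm
      _ ≤ B'.card := card_le_card this
  have hdisj' : Disjoint A' B' := by
    rw [Finset.disjoint_left]
    intro z hzA hzB
    exact (Set.disjoint_left.mp hdisj) (hAfin.mem_toFinset.mp hzA) (hBfin.mem_toFinset.mp hzB)
  have hsum : A'.card + B'.card = Fintype.card V := by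
    have huniv' : A' ∪ B' = (univ : Finset V) := by
      ext z
      simp only [mem_union, mem_univ, iff_true]
      have : z ∈ A ∪ B := by rw [hunion]; trivial
      rcases this with hz | hz
      · exact Or.inl (hAfin.mem_toFinset.mpr hz)
      · exact Or.inr (hBfin.mem_toFinset.mpr hz)
    calc A'.card + B'.card = (A' ∪ B').card := (card_union_of_disjoint hdisj').symm
      _ = Fintype.card V := by rw [huniv', Finset.card_univ]
  -- injection from pairs to edges
  have himg : (A' ×ˢ B').image (fun p => s(p.1, p.2)) ⊆ G.edgeFinset := by
    intro e he
    rw [mem_image] at he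
    obtain ⟨⟨a, b⟩, hab, rfl⟩ := he
    rw [mem_product] at hab
    rw [SimpleGraph.mem_edgeFinset]
    exact (hadj a (hAfin.mem_toFinset.mp hab.1) b (hBfin.mem_toFinset.mp hab.2))
  have hinj : Set.InjOn (fun p : V × V => s(p.1, p.2)) ↑(A' ×ˢ B') := by
    intro p hp q hq heq
    simp only [Finset.coe_product, Set.mem_prod, Finset.mem_coe] at hp hq
    obtain ⟨hp1, hp2⟩ := hp
    obtain ⟨hq1, hq2⟩ := hq
    simp only at heq
    rw [Sym2.eq_iff] at heq
    rcases heq with ⟨h1, h2⟩ | ⟨h1, h2⟩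
    · exact Prod.ext h1 h2
    · exfalso
      apply (Set.disjoint_left.mp hdisj) (hAfin.mem_toFinset.mp hp1)
      rw [h1]
      exact hBfin.mem_toFinset.mp hq2
  have hcount : A'.card * B'.card ≤ G.edgeFinset.card := by
    calc A'.card * B'.card = (A' ×ˢ B').card := (card_product A' B').symm
      _ = ((A' ×ˢ B').image (fun p => s(p.1, p.2))).card := (card_image_of_injOn hinj).symm
      _ ≤ G.edgeFinset.card := card_le_card himg
  nlinarith [hcardA, hcardB, hsum, hcount]

end Final

end NT


open RACG in
/-- If a finite simple graph `Γ` satisfies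
`|E(Γ)| < 2|V(Γ)| - 4`, then `Γ` is not thick, i.e. not thick of order `k`
for any integer `k ≥ 0`. -/
theorem not_thick_of_few_edges {V : Type*} [Fintype V] (G : SimpleGraph V)
    (hG : (G.edgeSet.ncard : ℤ) < 2 * (Fintype.card V : ℤ) - 4) :
    ¬ Thick G := by
  rintro ⟨k, hk⟩
  have hbound : 2 * Fintype.card V ≤ G.edgeSet.ncard + 4 := by
    cases k with
    | zero =>
      exact NT.thickzero_contra G hk
    | succ k =>
      exact NT.full_contra G hk.1
  have hbound' : (2 * Fintype.card V : ℤ) ≤ (G.edgeSet.ncard : ℤ) + 4 := by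
    exact_mod_cast hbound
  linarith
end

section
/- Let k ≥ 0 be an integer. Suppose that every finite simple graph Γ which is thick of order at most k satisfies e(Γ) ≥ 2v(Γ) − 4, and that in addition for every finite simple graph Γ₁ = (V₁,E₁) and every thick of order at most k graph Γ₂ = (V₂,E₂) such that Γ₂[V₁ ∩ V₂] is not a clique on at most 2 vertices, one has e(Γ₁ ∪ Γ₂) ≥ e(Γ₁) + 2|V₂ \ V₁|. Then every finite simple graph Γ' that is thick of order at most k+1 satisfies e(Γ') ≥ 2v(Γ') − 4. -/
namespace RACG

variable {V : Type*}

/-! ### Auxiliary lemmas -/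

open Relation

lemma aux_isNonEdge_mk {G : SimpleGraph V} {x y : V} (hxy : x ≠ y) (h : ¬ G.Adj x y) :
    IsNonEdge G s(x, y) :=
  ⟨by simpa [Sym2.isDiag_iff_proj_eq] using hxy, by simpa [SimpleGraph.mem_edgeSet] using h⟩

lemma aux_isNonEdge_pair {G : SimpleGraph V} {x y : V} (h : IsNonEdge G s(x, y)) :
    x ≠ y ∧ ¬ G.Adj x y :=
  ⟨fun hxy => h.1 (by simp [Sym2.isDiag_iff_proj_eq, hxy]),
   fun hadj => h.2 (by simpa [SimpleGraph.mem_edgeSet] using hadj)⟩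

lemma aux_squareAdj_symm {G : SimpleGraph V} {f g : Sym2 V} (h : squareAdj G f g) :
    squareAdj G g f := by
  obtain ⟨hf, hg, a, b, c, d, hfe, hge, hab, hbc, hcd, hda⟩ := h
  exact ⟨hg, hf, b, c, d, a, hge, by rw [hfe, Sym2.eq_swap], hbc, hcd, hda, hab⟩

lemma aux_Tadj_symm {G : SimpleGraph V} : ∀ {j : ℕ} {f g : Sym2 V},
    Tadj G j f g → Tadj G j g f
  | 0, _, _, h => aux_squareAdj_symm h
  | 1, _, _, h => aux_squareAdj_symm h
  | (k + 2), f, g, ⟨C₁, C₂, h₁, h₂, hf, hg, hne⟩ =>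
      ⟨C₂, C₁, h₂, h₁, hg, hf, by rwa [Set.inter_comm]⟩

lemma aux_Tadj_nonEdge {G : SimpleGraph V} : ∀ {j : ℕ} {f g : Sym2 V},
    Tadj G j f g → IsNonEdge G f ∧ IsNonEdge G g
  | 0, _, _, h => ⟨h.1, h.2.1⟩
  | 1, _, _, h => ⟨h.1, h.2.1⟩
  | (k + 2), f, g, ⟨C₁, C₂, h₁, h₂, hf, hg, hne⟩ => ⟨hf.1, hg.1⟩

lemma aux_mem_supp_of_mem {G : SimpleGraph V} {j : ℕ} {C : Set (Sym2 V)} {f : Sym2 V}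
    (hf : f ∈ C) {v : V} (hv : v ∈ f) : v ∈ supp G j C := by
  by_cases hj : j ≤ 1 <;> simp only [supp, hj, if_true, if_false, Set.mem_setOf_eq]
  · exact ⟨f, hf, hv⟩
  · exact ⟨f, hf, Or.inl hv⟩

lemma aux_mem_supp_of_susp {G : SimpleGraph V} {j : ℕ} (hj : 2 ≤ j) {C : Set (Sym2 V)}
    {f : Sym2 V} (hf : f ∈ C) {v : V} (hv : v ∈ susp G f) : v ∈ supp G j C := by
  have : ¬ j ≤ 1 := by omega
  simp only [supp, this, if_false, Set.mem_setOf_eq]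
  exact ⟨f, hf, Or.inr hv⟩

lemma aux_mem_latch_self {G : SimpleGraph V} {j : ℕ} {C : Set (Sym2 V)} {f : Sym2 V}
    (hne : IsNonEdge G f) (hf : f ∈ C) : f ∈ latch G j C :=
  ⟨hne, fun _ hv => aux_mem_supp_of_mem hf hv⟩

lemma aux_mem_comp_self {G : SimpleGraph V} {adj : Sym2 V → Sym2 V → Prop} {C : Set (Sym2 V)}
    (hC : IsComp G adj C) : ∃ f₀ ∈ C, C = {g | IsNonEdge G g ∧ ReflTransGen adj f₀ g} := by
  obtain ⟨f₀, hf₀, rfl⟩ := hC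
  exact ⟨f₀, ⟨hf₀, ReflTransGen.refl⟩, rfl⟩

/-- Two elements of the latch of a level-`j` component are `Tadj (j+1)`-adjacent. -/
lemma aux_latch_pair_adj {G : SimpleGraph V} {j : ℕ} (hj : 1 ≤ j) {C : Set (Sym2 V)}
    (hC : IsComp G (Tadj G j) C) {f g : Sym2 V}
    (hf : f ∈ latch G j C) (hg : g ∈ latch G j C) : Tadj G (j + 1) f g := by
  obtain ⟨j', rfl⟩ : ∃ j', j = j' + 1 := ⟨j - 1, by omega⟩
  exact ⟨C, C, hC, hC, hf, hg, ⟨f, hf, hf⟩⟩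

lemma aux_comp_closed {G : SimpleGraph V} {adj : Sym2 V → Sym2 V → Prop} {C : Set (Sym2 V)}
    (hC : IsComp G adj C) {f g : Sym2 V} (hf : f ∈ C) (hadj : adj f g)
    (hgne : IsNonEdge G g) : g ∈ C := by
  obtain ⟨f₀, hf₀, rfl⟩ := hC
  exact ⟨hgne, hf.2.tail hadj⟩

/-- Monotonicity: full at level `j ≥ 1` implies full at level `j+1`. -/
lemma aux_fullAt_succ {G : SimpleGraph V} {j : ℕ} (hj : 1 ≤ j) (h : FullAt G j) :
    FullAt G (j + 1) := by
  obtain ⟨C, hC, hlatch⟩ := h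
  obtain ⟨f₀, hf₀C, hCeq⟩ := aux_mem_comp_self hC
  have hf₀ne : IsNonEdge G f₀ := (hCeq ▸ hf₀C).1
  refine ⟨{g | IsNonEdge G g ∧ ReflTransGen (Tadj G (j + 1)) f₀ g}, ⟨f₀, hf₀ne, rfl⟩, ?_⟩
  have hmem : ∀ e : Sym2 V, IsNonEdge G e →
      e ∈ {g | IsNonEdge G g ∧ ReflTransGen (Tadj G (j + 1)) f₀ g} := by
    intro e he
    have heL : e ∈ latch G j C := hlatch ▸ he
    have hf₀L : f₀ ∈ latch G j C := hlatch ▸ hf₀ne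
    exact ⟨he, ReflTransGen.single (aux_latch_pair_adj hj hC hf₀L heL)⟩
  ext e
  constructor
  · exact fun he => he.1
  · intro he
    exact aux_mem_latch_self he (hmem e he)

lemma aux_fullAt_mono {G : SimpleGraph V} {i j : ℕ} (hi : 1 ≤ i) (hij : i ≤ j)
    (h : FullAt G i) : FullAt G j := by
  induction j, hij using Nat.le_induction with
  | base => exact h
  | succ n hn ih => exact aux_fullAt_succ (le_trans hi hn) ih

/-- A graph that is thick of order zero and has a non-edge is full at level 1. -/
lemma aux_fullAt_one_of_thickZero {G : SimpleGraph V} (h : ThickZeroSet G Set.univ) :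
    FullAt G 1 := by
  obtain ⟨A, B, hAB, hdisj, hA, hB, hadj⟩ := h
  rw [SimpleGraph.isClique_iff] at hA hB
  simp only [Set.Pairwise] at hA hB
  push_neg at hA hB
  obtain ⟨a, ha, a', ha', haa', hnaa⟩ := hA
  obtain ⟨b, hb, b', hb', hbb', hnbb⟩ := hB
  -- every non-edge has both ends in A or both ends in B
  have hside : ∀ x y : V, ¬ G.Adj x y → x ≠ y → (x ∈ A ∧ y ∈ A) ∨ (x ∈ B ∧ y ∈ B) := by
    intro x y hxy hne
    have hx : x ∈ A ∪ B := hAB ▸ Set.mem_univ x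
    have hy : y ∈ A ∪ B := hAB ▸ Set.mem_univ y
    rcases hx with hx | hx <;> rcases hy with hy | hy
    · exact Or.inl ⟨hx, hy⟩
    · exact absurd (hadj x hx y hy) hxy
    · exact absurd ((hadj y hy x hx).symm) hxy
    · exact Or.inr ⟨hx, hy⟩
  have hf₀ : IsNonEdge G s(a, a') := aux_isNonEdge_mk haa' hnaa
  have hg₀ : IsNonEdge G s(b, b') := aux_isNonEdge_mk hbb' hnbb
  -- a nonedge in B is square-adjacent to any nonedge in A and vice versa
  have hsqA : ∀ x y : V, IsNonEdge G s(x, y) → x ∈ A → y ∈ A →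
      squareAdj G s(x, y) s(b, b') := by
    intro x y hxy hx hy
    exact ⟨hxy, hg₀, x, b, y, b', rfl, rfl, hadj x hx b hb, (hadj y hy b hb).symm,
      hadj y hy b' hb', (hadj x hx b' hb').symm⟩
  have hsqB : ∀ x y : V, IsNonEdge G s(x, y) → x ∈ B → y ∈ B →
      squareAdj G s(a, a') s(x, y) := by
    intro x y hxy hx hy
    exact ⟨hf₀, hxy, a, x, a', y, rfl, rfl, hadj a ha x hx, (hadj a' ha' x hx).symm,
      hadj a' ha' y hy, (hadj a ha y hy).symm⟩
  refine ⟨{g | IsNonEdge G g ∧ ReflTransGen (Tadj G 1) s(a, a') g}, ⟨s(a, a'), hf₀, rfl⟩, ?_⟩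
  have hmem : ∀ e : Sym2 V, IsNonEdge G e → ReflTransGen (Tadj G 1) s(a, a') e := by
    intro e he
    induction e using Sym2.ind with
    | _ x y =>
      obtain ⟨hne, hnadj⟩ := aux_isNonEdge_pair he
      rcases hside x y hnadj hne with ⟨hx, hy⟩ | ⟨hx, hy⟩
      · exact (ReflTransGen.single (show Tadj G 1 s(a,a') s(b,b') from hsqB b b' hg₀ hb hb')).tail
          (show Tadj G 1 s(b,b') s(x,y) from aux_squareAdj_symm (hsqA x y he hx hy))
      · exact ReflTransGen.single (show Tadj G 1 s(a,a') s(x,y) from hsqB x y he hx hy)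
  ext e
  exact ⟨fun he => he.1, fun he => aux_mem_latch_self he ⟨he, hmem e he⟩⟩

/-! ### Lifting Sym2 elements to subtypes -/

lemma aux_sym2_lift {S : Set V} (e : Sym2 V) (he : ∀ v ∈ e, v ∈ S) :
    ∃ ebar : Sym2 S, Sym2.map Subtype.val ebar = e := by
  induction e using Sym2.ind with
  | _ x y =>
    exact ⟨s(⟨x, he x (by simp)⟩, ⟨y, he y (by simp)⟩), by simp⟩

lemma aux_sym2_val_injective {S : Set V} :
    Function.Injective (Sym2.map (Subtype.val : S → V)) :=
  Sym2.map.injective Subtype.val_injective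

lemma aux_mem_lift {S : Set V} {ebar : Sym2 S} {v : S} :
    v ∈ ebar ↔ (v : V) ∈ Sym2.map Subtype.val ebar := by
  constructor
  · intro hv
    exact Sym2.mem_map.mpr ⟨v, hv, rfl⟩
  · intro hv
    obtain ⟨w, hw, hwv⟩ := Sym2.mem_map.mp hv
    rwa [Subtype.val_injective hwv] at hw

/-! ### Transfer along induced embeddings -/

section Transfer

variable {α β : Type*} {H₁ : SimpleGraph α} {H₂ : SimpleGraph β} {φ : α → β}

/-- `φ` is an induced embedding from `H₁` to `H₂`. -/
def IndEmb (H₁ : SimpleGraph α) (H₂ : SimpleGraph β) (φ : α → β) : Prop :=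
  Function.Injective φ ∧ ∀ u v, H₂.Adj (φ u) (φ v) ↔ H₁.Adj u v

lemma IndEmb.mapNonEdge (h : IndEmb H₁ H₂ φ) {f : Sym2 α} (hf : IsNonEdge H₁ f) :
    IsNonEdge H₂ (Sym2.map φ f) := by
  induction f using Sym2.ind with
  | _ x y =>
    obtain ⟨hne, hnadj⟩ := aux_isNonEdge_pair hf
    rw [Sym2.map_pair_eq]
    exact aux_isNonEdge_mk (fun hh => hne (h.1 hh)) (fun hh => hnadj ((h.2 x y).mp hh))

lemma IndEmb.nonEdge_of_map (h : IndEmb H₁ H₂ φ) {f : Sym2 α}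
    (hf : IsNonEdge H₂ (Sym2.map φ f)) : IsNonEdge H₁ f := by
  induction f using Sym2.ind with
  | _ x y =>
    rw [Sym2.map_pair_eq] at hf
    obtain ⟨hne, hnadj⟩ := aux_isNonEdge_pair hf
    exact aux_isNonEdge_mk (fun hh => hne (by rw [hh])) (fun hh => hnadj ((h.2 x y).mpr hh))

lemma IndEmb.mapSusp (h : IndEmb H₁ H₂ φ) {f : Sym2 α} {v : α} (hv : v ∈ susp H₁ f) :
    φ v ∈ susp H₂ (Sym2.map φ f) := by
  intro u hu
  obtain ⟨w, hw, rfl⟩ := Sym2.mem_map.mp hu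
  exact (h.2 v w).mpr (hv w hw)

/-- Transfer of latches of components, relative to a level transfer hypothesis. -/
lemma IndEmb.compLatch (h : IndEmb H₁ H₂ φ) {j : ℕ}
    (hT : ∀ f g, Tadj H₁ j f g → Tadj H₂ j (Sym2.map φ f) (Sym2.map φ g))
    {C : Set (Sym2 α)} (hC : IsComp H₁ (Tadj H₁ j) C) :
    ∃ C' : Set (Sym2 β), IsComp H₂ (Tadj H₂ j) C' ∧
      ∀ e ∈ latch H₁ j C, Sym2.map φ e ∈ latch H₂ j C' := by
  obtain ⟨f₀, hf₀, rfl⟩ := hC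
  refine ⟨{g | IsNonEdge H₂ g ∧ Relation.ReflTransGen (Tadj H₂ j) (Sym2.map φ f₀) g},
    ⟨Sym2.map φ f₀, h.mapNonEdge hf₀, rfl⟩, ?_⟩
  intro e he
  have hmapC : ∀ g, IsNonEdge H₁ g ∧ Relation.ReflTransGen (Tadj H₁ j) f₀ g →
      Sym2.map φ g ∈ {g | IsNonEdge H₂ g ∧
        Relation.ReflTransGen (Tadj H₂ j) (Sym2.map φ f₀) g} := by
    rintro g ⟨hgne, hrt⟩
    exact ⟨h.mapNonEdge hgne, Relation.ReflTransGen.lift _ hT _ _ hrt⟩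
  refine ⟨h.mapNonEdge he.1, ?_⟩
  intro v hv
  obtain ⟨w, hw, rfl⟩ := Sym2.mem_map.mp hv
  have hws := he.2 w hw
  by_cases hj : j ≤ 1
  · simp only [supp, hj, if_true, Set.mem_setOf_eq] at hws ⊢
    obtain ⟨f, hf, hwf⟩ := hws
    exact ⟨Sym2.map φ f, hmapC f hf, Sym2.mem_map.mpr ⟨w, hwf, rfl⟩⟩
  · simp only [supp, hj, if_false, Set.mem_setOf_eq] at hws ⊢
    obtain ⟨f, hf, hwf | hwf⟩ := hws
    · exact ⟨Sym2.map φ f, hmapC f hf, Or.inl (Sym2.mem_map.mpr ⟨w, hwf, rfl⟩)⟩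
    · exact ⟨Sym2.map φ f, hmapC f hf, Or.inr (h.mapSusp hwf)⟩

/-- Transfer of the level relations along an induced embedding. -/
lemma IndEmb.tadjMap (h : IndEmb H₁ H₂ φ) : ∀ (j : ℕ) (f g : Sym2 α),
    Tadj H₁ j f g → Tadj H₂ j (Sym2.map φ f) (Sym2.map φ g) := by
  intro j
  induction j using Nat.strong_induction_on with
  | _ j ih =>
    match j with
    | 0 =>
      rintro f g ⟨hf, hg, a, b, c, d, rfl, rfl, hab, hbc, hcd, hda⟩
      exact ⟨h.mapNonEdge hf, h.mapNonEdge hg, φ a, φ b, φ c, φ d,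
        Sym2.map_pair_eq .., Sym2.map_pair_eq ..,
        (h.2 a b).mpr hab, (h.2 b c).mpr hbc, (h.2 c d).mpr hcd, (h.2 d a).mpr hda⟩
    | 1 =>
      rintro f g ⟨hf, hg, a, b, c, d, rfl, rfl, hab, hbc, hcd, hda⟩
      exact ⟨h.mapNonEdge hf, h.mapNonEdge hg, φ a, φ b, φ c, φ d,
        Sym2.map_pair_eq .., Sym2.map_pair_eq ..,
        (h.2 a b).mpr hab, (h.2 b c).mpr hbc, (h.2 c d).mpr hcd, (h.2 d a).mpr hda⟩
    | (k + 2) =>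
      rintro f g ⟨C₁, C₂, h₁, h₂, hf, hg, e, he₁, he₂⟩
      obtain ⟨C₁', hC₁', hm₁⟩ := h.compLatch (ih (k + 1) (by omega)) h₁
      obtain ⟨C₂', hC₂', hm₂⟩ := h.compLatch (ih (k + 1) (by omega)) h₂
      exact ⟨C₁', C₂', hC₁', hC₂', hm₁ f hf, hm₂ g hg,
        ⟨Sym2.map φ e, hm₁ e he₁, hm₂ e he₂⟩⟩

end Transfer
/-! ### The piece lemma: supports of components induce thick subgraphs -/

lemma aux_supp_cases {G : SimpleGraph V} {j : ℕ} (h2 : 2 ≤ j) {C : Set (Sym2 V)} {v : V} :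
    v ∈ supp G j C ↔ ∃ f ∈ C, v ∈ f ∨ v ∈ susp G f := by
  have : ¬ j ≤ 1 := by omega
  simp [supp, this]

lemma aux_indEmb_val {G : SimpleGraph V} {S : Set V} :
    IndEmb (G.induce S) G Subtype.val :=
  ⟨Subtype.val_injective, fun _ _ => Iff.rfl⟩

lemma aux_indEmb_inclusion {G : SimpleGraph V} {S T : Set V} (h : S ⊆ T) :
    IndEmb (G.induce S) (G.induce T) (Set.inclusion h) :=
  ⟨Set.inclusion_injective h, fun _ _ => Iff.rfl⟩

lemma aux_pieceFull (G : SimpleGraph V) : ∀ j : ℕ, 1 ≤ j → ∀ D : Set (Sym2 V),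
    IsComp G (Tadj G j) D →
    ∃ i, 1 ≤ i ∧ i ≤ j ∧ FullAt (G.induce (supp G j D)) i := by
  intro j hj
  induction j, hj using Nat.le_induction with
  | base =>
    intro D hD
    obtain ⟨f₀, hf₀ne, hDeq⟩ := hD
    set S := supp G 1 D with hS
    set H := G.induce S with hH
    have hEnds : ∀ f ∈ D, ∀ v ∈ f, (v : V) ∈ S := fun f hf v hv => aux_mem_supp_of_mem hf hv
    have hf₀D : f₀ ∈ D := by rw [hDeq]; exact ⟨hf₀ne, Relation.ReflTransGen.refl⟩
    obtain ⟨f₀bar, hf₀bar⟩ := aux_sym2_lift (S := S) f₀ (hEnds f₀ hf₀D)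
    -- transfer the component chain into H
    have hcl : ∀ g, Relation.ReflTransGen (Tadj G 1) f₀ g → IsNonEdge G g →
        ∀ gbar : Sym2 S, Sym2.map Subtype.val gbar = g →
          Relation.ReflTransGen (Tadj H 1) f₀bar gbar := by
      intro g hrt
      induction hrt with
      | refl =>
        intro _ gbar hgbar
        have : gbar = f₀bar := aux_sym2_val_injective (hgbar.trans hf₀bar.symm)
        rw [this]
      | tail hpre hstep ih =>
        rename_i b c
        intro hgne gbar hgbar
        have hbne : IsNonEdge G b := (aux_Tadj_nonEdge hstep).1
        have hbD : b ∈ D := by rw [hDeq]; exact ⟨hbne, hpre⟩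
        have hcD : c ∈ D := by rw [hDeq]; exact ⟨hgne, hpre.tail hstep⟩
        obtain ⟨bbar, hbbar⟩ := aux_sym2_lift (S := S) b (hEnds b hbD)
        have ihb := ih hbne bbar hbbar
        obtain ⟨_, _, a, p, cc, q, hbeq, hceq, h1, h2, h3, h4⟩ := hstep
        have haS : a ∈ S := hEnds b hbD a (by rw [hbeq]; simp)
        have hccS : cc ∈ S := hEnds b hbD cc (by rw [hbeq]; simp)
        have hpS : p ∈ S := hEnds c hcD p (by rw [hceq]; simp)
        have hqS : q ∈ S := hEnds c hcD q (by rw [hceq]; simp)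
        have hbbar' : bbar = s(⟨a, haS⟩, ⟨cc, hccS⟩) := by
          apply aux_sym2_val_injective
          rw [hbbar, hbeq]; simp
        have hgbar' : gbar = s(⟨p, hpS⟩, ⟨q, hqS⟩) := by
          apply aux_sym2_val_injective
          rw [hgbar, hceq]; simp
        refine ihb.tail ?_
        refine ⟨aux_indEmb_val.nonEdge_of_map (f := bbar) (by rw [hbbar]; exact hbne),
          aux_indEmb_val.nonEdge_of_map (f := gbar) (by rw [hgbar]; exact hgne),
          ⟨a, haS⟩, ⟨p, hpS⟩, ⟨cc, hccS⟩, ⟨q, hqS⟩, hbbar', hgbar', h1, h2, h3, h4⟩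
    refine ⟨1, le_refl 1, le_refl 1,
      ⟨{g | IsNonEdge H g ∧ Relation.ReflTransGen (Tadj H 1) f₀bar g},
        ⟨f₀bar, aux_indEmb_val.nonEdge_of_map (by rw [hf₀bar]; exact hf₀ne), rfl⟩, ?_⟩⟩
    ext e
    refine ⟨fun he => he.1, fun he => ⟨he, ?_⟩⟩
    intro v hv
    have hvS : (v : V) ∈ supp G 1 D := v.2
    simp only [supp, if_pos (le_refl 1), Set.mem_setOf_eq] at hvS
    obtain ⟨f, hfD, hvf⟩ := hvS
    obtain ⟨fbar, hfbar⟩ := aux_sym2_lift (S := S) f (hEnds f hfD)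
    have hfD' := hDeq ▸ hfD
    have hfbarC : fbar ∈ {g | IsNonEdge H g ∧ Relation.ReflTransGen (Tadj H 1) f₀bar g} :=
      ⟨aux_indEmb_val.nonEdge_of_map (by rw [hfbar]; exact hfD'.1),
        hcl f hfD'.2 hfD'.1 fbar hfbar⟩
    exact aux_mem_supp_of_mem hfbarC (aux_mem_lift.mpr (by rw [hfbar]; exact hvf))
  | succ n hn IH =>
    intro D hD
    obtain ⟨m, rfl⟩ : ∃ m, n = m + 1 := ⟨n - 1, by omega⟩
    obtain ⟨f₀, hf₀ne, hDeq⟩ := hD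
    set S := supp G (m + 2) D with hS
    set H := G.induce S with hH
    have h2 : 2 ≤ m + 2 := by omega
    have hEnds : ∀ f ∈ D, ∀ v ∈ f, (v : V) ∈ S := fun f hf v hv => aux_mem_supp_of_mem hf hv
    have hf₀D : f₀ ∈ D := by rw [hDeq]; exact ⟨hf₀ne, Relation.ReflTransGen.refl⟩
    obtain ⟨f₀bar, hf₀bar⟩ := aux_sym2_lift (S := S) f₀ (hEnds f₀ hf₀D)
    have hDmem : ∀ {g}, g ∈ D ↔ IsNonEdge G g ∧ Relation.ReflTransGen (Tadj G (m + 2)) f₀ g := by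
      intro g; rw [hDeq]; rfl
    -- (*) : components of level m+1 whose latch meets D transfer into H
    have hstar : ∀ E : Set (Sym2 V), IsComp G (Tadj G (m + 1)) E →
        (latch G (m + 1) E ∩ D).Nonempty →
        ∃ K : Set (Sym2 S), IsComp H (Tadj H (m + 1)) K ∧
          ∀ e ∈ latch G (m + 1) E, ∀ ebar : Sym2 S,
            Sym2.map Subtype.val ebar = e → ebar ∈ latch H (m + 1) K := by
      intro E hE hmeet
      obtain ⟨e₀, he₀E, he₀D⟩ := hmeet
      -- latch of E is contained in D
      have hlatchD : latch G (m + 1) E ⊆ D := by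
        intro g hg
        exact aux_comp_closed ⟨f₀, hf₀ne, hDeq⟩ he₀D
          (aux_latch_pair_adj (by omega) hE he₀E hg) hg.1
      have hED : E ⊆ D := by
        intro g hg
        obtain ⟨e₁, he₁, hEeq⟩ := hE
        exact hlatchD (aux_mem_latch_self (hEeq ▸ hg).1 hg)
      have hsupp : supp G (m + 1) E ⊆ S := by
        intro v hv
        by_cases hm : m + 1 ≤ 1
        · simp only [supp, hm, if_true, Set.mem_setOf_eq] at hv
          obtain ⟨f, hf, hvf⟩ := hv
          exact aux_mem_supp_of_mem (hED hf) hvf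
        · simp only [supp, hm, if_false, Set.mem_setOf_eq] at hv
          obtain ⟨f, hf, hvf | hvf⟩ := hv
          · exact aux_mem_supp_of_mem (hED hf) hvf
          · exact aux_mem_supp_of_susp h2 (hED hf) hvf
      -- the piece is thick by the induction hypothesis; transfer it into H
      obtain ⟨i, hi1, him, hfull⟩ := IH E hE
      obtain ⟨K₀, hK₀, hK₀latch⟩ := aux_fullAt_mono hi1 him hfull
      set P := G.induce (supp G (m + 1) E) with hP
      have hemb : IndEmb P H (Set.inclusion hsupp) := aux_indEmb_inclusion hsupp
      obtain ⟨K, hK, hKmap⟩ := hemb.compLatch (hemb.tadjMap (m + 1)) hK₀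
      refine ⟨K, hK, ?_⟩
      intro e he ebar hebar
      obtain ⟨ehat, hehat⟩ := aux_sym2_lift (S := supp G (m + 1) E) e he.2
      have hehatne : IsNonEdge P ehat :=
        aux_indEmb_val.nonEdge_of_map (by rw [hehat]; exact he.1)
      have hehatlatch : ehat ∈ latch P (m + 1) K₀ := by rw [hK₀latch]; exact hehatne
      have := hKmap ehat hehatlatch
      have heq : Sym2.map (Set.inclusion hsupp) ehat = ebar := by
        apply aux_sym2_val_injective
        rw [Sym2.map_map]
        have : (Subtype.val ∘ Set.inclusion hsupp : (supp G (m + 1) E : Set V) → V)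
            = Subtype.val := rfl
        rw [this, hehat, hebar]
      rwa [heq] at this
    -- transfer the component chain into H
    have hcl : ∀ g, Relation.ReflTransGen (Tadj G (m + 2)) f₀ g → IsNonEdge G g →
        ∀ gbar : Sym2 S, Sym2.map Subtype.val gbar = g →
          Relation.ReflTransGen (Tadj H (m + 2)) f₀bar gbar := by
      intro g hrt
      induction hrt with
      | refl =>
        intro _ gbar hgbar
        have : gbar = f₀bar := aux_sym2_val_injective (hgbar.trans hf₀bar.symm)
        rw [this]
      | tail hpre hstep ih =>
        rename_i b c
        intro hgne gbar hgbar
        have hbne : IsNonEdge G b := (aux_Tadj_nonEdge hstep).1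
        have hbD : b ∈ D := hDmem.mpr ⟨hbne, hpre⟩
        have hcD : c ∈ D := hDmem.mpr ⟨hgne, hpre.tail hstep⟩
        obtain ⟨bbar, hbbar⟩ := aux_sym2_lift (S := S) b (hEnds b hbD)
        have ihb := ih hbne bbar hbbar
        obtain ⟨C₁, C₂, hC₁, hC₂, hbL, hcL, w, hw₁, hw₂⟩ := hstep
        have hwne : IsNonEdge G w := hw₁.1
        have hwD : w ∈ D := by
          apply aux_comp_closed ⟨f₀, hf₀ne, hDeq⟩ hbD _ hwne
          exact aux_latch_pair_adj (by omega) hC₁ hbL hw₁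
        obtain ⟨K₁, hK₁, hK₁map⟩ := hstar C₁ hC₁ ⟨b, hbL, hbD⟩
        obtain ⟨K₂, hK₂, hK₂map⟩ := hstar C₂ hC₂ ⟨c, hcL, hcD⟩
        obtain ⟨wbar, hwbar⟩ := aux_sym2_lift (S := S) w (hEnds w hwD)
        have hadj₁ : Tadj H (m + 2) bbar wbar :=
          aux_latch_pair_adj (by omega) hK₁ (hK₁map b hbL bbar hbbar) (hK₁map w hw₁ wbar hwbar)
        have hadj₂ : Tadj H (m + 2) wbar gbar :=
          aux_latch_pair_adj (by omega) hK₂ (hK₂map w hw₂ wbar hwbar) (hK₂map c hcL gbar hgbar)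
        exact (ihb.tail hadj₁).tail hadj₂
    refine ⟨m + 2, by omega, le_refl _,
      ⟨{g | IsNonEdge H g ∧ Relation.ReflTransGen (Tadj H (m + 2)) f₀bar g},
        ⟨f₀bar, aux_indEmb_val.nonEdge_of_map (by rw [hf₀bar]; exact hf₀ne), rfl⟩, ?_⟩⟩
    ext e
    refine ⟨fun he => he.1, fun he => ⟨he, ?_⟩⟩
    intro v hv
    have hvS : (v : V) ∈ supp G (m + 2) D := v.2
    rw [aux_supp_cases h2] at hvS
    obtain ⟨f, hfD, hvf⟩ := hvS
    obtain ⟨fbar, hfbar⟩ := aux_sym2_lift (S := S) f (hEnds f hfD)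
    have hfD' := hDmem.mp hfD
    have hfbarC : fbar ∈ {g | IsNonEdge H g ∧ Relation.ReflTransGen (Tadj H (m + 2)) f₀bar g} :=
      ⟨aux_indEmb_val.nonEdge_of_map (by rw [hfbar]; exact hfD'.1),
        hcl f hfD'.2 hfD'.1 fbar hfbar⟩
    rcases hvf with hvf | hvf
    · exact aux_mem_supp_of_mem hfbarC (aux_mem_lift.mpr (by rw [hfbar]; exact hvf))
    · refine aux_mem_supp_of_susp h2 hfbarC ?_
      intro u hu
      have huf : (u : V) ∈ f := by rw [← hfbar]; exact aux_mem_lift.mp hu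
      exact hvf (u : V) huf
/-! ### Thickness from fullness -/

lemma aux_thickAtMost_of_fullAt {G : SimpleGraph V} {j K : ℕ} (hj : 1 ≤ j) (hjK : j ≤ K)
    (h : FullAt G j) : ThickOfOrderAtMost G K := by
  classical
  have hex : ∃ i, 1 ≤ i ∧ FullAt G i := ⟨j, hj, h⟩
  have hspec := Nat.find_spec hex
  have hmin' : Nat.find hex ≤ j := Nat.find_min' hex ⟨hj, h⟩
  obtain ⟨m, hm⟩ : ∃ m, Nat.find hex = m + 1 := ⟨Nat.find hex - 1, by omega⟩
  refine ⟨m + 1, by omega, ?_⟩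
  show FullAt G (m + 1) ∧ ∀ i, 1 ≤ i → i < m + 1 → ¬ FullAt G i
  refine ⟨hm ▸ hspec.2, ?_⟩
  intro i hi1 him hFull
  exact Nat.find_min hex (by omega) ⟨hi1, hFull⟩

/-! ### The restriction of a graph to a vertex subset, as a graph on the ambient type -/

def auxWithin (G : SimpleGraph V) (s : Set V) : SimpleGraph V where
  Adj u v := G.Adj u v ∧ u ∈ s ∧ v ∈ s
  symm := ⟨by rintro u v ⟨h, hu, hv⟩; exact ⟨h.symm, hv, hu⟩⟩
  loopless := ⟨by rintro v ⟨h, _, _⟩; exact G.irrefl h⟩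

lemma auxWithin_le {G : SimpleGraph V} {s : Set V} : auxWithin G s ≤ G :=
  fun _ _ h => h.1

lemma auxWithin_mem {G : SimpleGraph V} {s : Set V} {u v : V} (h : (auxWithin G s).Adj u v) :
    u ∈ s ∧ v ∈ s := ⟨h.2.1, h.2.2⟩

lemma auxWithin_induce {G : SimpleGraph V} {s : Set V} :
    (auxWithin G s).induce s = G.induce s := by
  ext ⟨u, hu⟩ ⟨v, hv⟩
  show (auxWithin G s).Adj u v ↔ G.Adj u v
  exact ⟨fun h => h.1, fun h => ⟨h, hu, hv⟩⟩

lemma aux_ncard_induce (G : SimpleGraph V) (s : Set V) :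
    (G.induce s).edgeSet.ncard = (auxWithin G s).edgeSet.ncard := by
  have himg : (auxWithin G s).edgeSet = Sym2.map Subtype.val '' (G.induce s).edgeSet := by
    ext e
    constructor
    · intro he
      induction e using Sym2.ind with
      | _ u v =>
        rw [SimpleGraph.mem_edgeSet] at he
        obtain ⟨hadj, hu, hv⟩ := he
        exact ⟨s(⟨u, hu⟩, ⟨v, hv⟩), (SimpleGraph.mem_edgeSet _).mpr hadj, by simp⟩
    · rintro ⟨e', he', rfl⟩
      induction e' using Sym2.ind with
      | _ u v =>
        rw [SimpleGraph.mem_edgeSet] at he'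
        rw [Sym2.map_pair_eq, SimpleGraph.mem_edgeSet]
        exact ⟨he', u.2, v.2⟩
  rw [himg, Set.ncard_image_of_injective _ aux_sym2_val_injective]

/-! ### Counting: each outside vertex with two neighbours inside adds two edges -/

lemma aux_count {W : Type} [Fintype W] [DecidableEq W] (G' G₁ : SimpleGraph W) (U : Finset W)
    (hle : G₁ ≤ G') (hin : ∀ u v, G₁.Adj u v → u ∈ U ∧ v ∈ U)
    (hnb : ∀ v : W, v ∉ U → ∃ x y : W, x ∈ U ∧ y ∈ U ∧ x ≠ y ∧ G'.Adj v x ∧ G'.Adj v y) :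
    (G₁.edgeSet.ncard : ℤ) + 2 * ((Uᶜ).card : ℤ) ≤ (G'.edgeSet.ncard : ℤ) := by
  classical
  choose! x y hx hy hxy hax hay using hnb
  set E₁ := (Set.toFinite G₁.edgeSet).toFinset with hE₁
  set F : W → Finset (Sym2 W) := fun v => {s(v, x v), s(v, y v)} with hF
  set E₂ := (Uᶜ).biUnion F with hE₂
  have hmemF : ∀ v ∉ U, ∀ e ∈ F v, ∃ z ∈ U, e = s(v, z) := by
    intro v hv e he
    simp only [hF, Finset.mem_insert, Finset.mem_singleton] at he
    rcases he with rfl | rfl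
    · exact ⟨x v, hx v hv, rfl⟩
    · exact ⟨y v, hy v hv, rfl⟩
  have hcardF : ∀ v ∉ U, (F v).card = 2 := by
    intro v hv
    apply Finset.card_pair
    intro hcon
    rw [Sym2.eq_iff] at hcon
    rcases hcon with ⟨-, hxyv⟩ | ⟨hvy, -⟩
    · exact hxy v hv hxyv
    · exact hv (hvy ▸ hy v hv)
  have hE₂card : E₂.card = 2 * (Uᶜ).card := by
    rw [hE₂, Finset.card_biUnion, Finset.sum_congr rfl
      (fun v hv => hcardF v (Finset.mem_compl.mp hv))]
    · simp [Finset.sum_const, mul_comm]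
    · intro v hv w hw hvw
      simp only [Finset.disjoint_left]
      intro e hev hew
      obtain ⟨z, hz, rfl⟩ := hmemF v (Finset.mem_compl.mp hv) e hev
      obtain ⟨z', hz', heq⟩ := hmemF w (Finset.mem_compl.mp hw) _ hew
      rw [Sym2.eq_iff] at heq
      rcases heq with ⟨hvw', -⟩ | ⟨hvz', hzw⟩
      · exact hvw hvw'
      · exact (Finset.mem_compl.mp hw) (hzw ▸ hz)
  have hdisj : Disjoint E₁ E₂ := by
    rw [Finset.disjoint_left]
    intro e he₁ he₂
    obtain ⟨v, hv, hef⟩ := Finset.mem_biUnion.mp he₂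
    obtain ⟨z, hz, rfl⟩ := hmemF v (Finset.mem_compl.mp hv) e hef
    rw [Set.Finite.mem_toFinset, SimpleGraph.mem_edgeSet] at he₁
    exact (Finset.mem_compl.mp hv) (hin v z he₁).1
  have hsub : E₁ ∪ E₂ ⊆ (Set.toFinite G'.edgeSet).toFinset := by
    intro e he
    rw [Set.Finite.mem_toFinset]
    rcases Finset.mem_union.mp he with he | he
    · rw [Set.Finite.mem_toFinset] at he
      exact SimpleGraph.edgeSet_mono hle he
    · obtain ⟨v, hv, hef⟩ := Finset.mem_biUnion.mp he
      simp only [hF, Finset.mem_insert, Finset.mem_singleton] at hef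
      rcases hef with rfl | rfl
      · exact (SimpleGraph.mem_edgeSet _).mpr (hax v (Finset.mem_compl.mp hv))
      · exact (SimpleGraph.mem_edgeSet _).mpr (hay v (Finset.mem_compl.mp hv))
  have hcard : E₁.card + 2 * (Uᶜ).card ≤ G'.edgeSet.ncard := by
    rw [Set.ncard_eq_toFinset_card _ (Set.toFinite G'.edgeSet)]
    calc E₁.card + 2 * (Uᶜ).card = (E₁ ∪ E₂).card := by
          rw [Finset.card_union_of_disjoint hdisj, hE₂card]
      _ ≤ _ := Finset.card_le_card hsub
  have hE₁card : G₁.edgeSet.ncard = E₁.card :=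
    Set.ncard_eq_toFinset_card _ (Set.toFinite G₁.edgeSet)
  rw [hE₁card]
  exact_mod_cast hcard
/-! ### Gluing pieces along shared non-edges -/

lemma aux_exit {A : Type*} {r : A → A → Prop} {Q : A → Prop} {a b : A}
    (h : Relation.ReflTransGen r a b) (ha : Q a) (hb : ¬ Q b) :
    ∃ x y, Q x ∧ ¬ Q y ∧ r x y := by
  induction h with
  | refl => exact absurd ha hb
  | tail hpre hstep ih =>
    rename_i u w
    by_cases hu : Q u
    · exact ⟨u, w, hu, hb, hstep⟩
    · exact ih hu

def auxLink {W : Type} (G' : SimpleGraph W) (Pfam : Finset (Finset W)) (P Q : Finset W) : Prop :=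
  P ∈ Pfam ∧ Q ∈ Pfam ∧ ∃ x y : W, x ≠ y ∧ ¬ G'.Adj x y ∧ x ∈ P ∧ x ∈ Q ∧ y ∈ P ∧ y ∈ Q

lemma aux_glue (k : ℕ)
    (hbound : ∀ (W : Type) [Fintype W] (G : SimpleGraph W),
      ThickOfOrderAtMost G k →
      2 * (Fintype.card W : ℤ) - 4 ≤ (G.edgeSet.ncard : ℤ))
    (hunion : ∀ (W : Type) [Fintype W] [DecidableEq W]
      (V₁ V₂ : Finset W) (G₁ G₂ : SimpleGraph W),
      (∀ u v, G₁.Adj u v → u ∈ V₁ ∧ v ∈ V₁) →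
      (∀ u v, G₂.Adj u v → u ∈ V₂ ∧ v ∈ V₂) →
      ThickOfOrderAtMost (G₂.induce (V₂ : Set W)) k →
      ¬ (G₂.IsClique ((V₁ ∩ V₂ : Finset W) : Set W) ∧ (V₁ ∩ V₂).card ≤ 2) →
      (G₁.edgeSet.ncard : ℤ) + 2 * ((V₂ \ V₁).card : ℤ)
        ≤ ((G₁ ⊔ G₂).edgeSet.ncard : ℤ))
    (W : Type) [Fintype W] [DecidableEq W] (G' : SimpleGraph W)
    (Pfam : Finset (Finset W)) (p₀ : Finset W) (hp₀ : p₀ ∈ Pfam)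
    (hthick : ∀ P ∈ Pfam, ThickOfOrderAtMost (G'.induce (P : Set W)) k)
    (hconn : ∀ P ∈ Pfam, Relation.ReflTransGen (auxLink G' Pfam) p₀ P) :
    ∃ G₁ : SimpleGraph W, G₁ ≤ G' ∧
      (∀ u v, G₁.Adj u v → u ∈ Pfam.biUnion id ∧ v ∈ Pfam.biUnion id) ∧
      2 * (((Pfam.biUnion id).card : ℤ)) - 4 ≤ (G₁.edgeSet.ncard : ℤ) := by
  -- invariant-carrying induction on the number of pieces not yet glued
  suffices h : ∀ r : ℕ, ∀ Qfam : Finset (Finset W), Qfam ⊆ Pfam → p₀ ∈ Qfam → (Pfam \ Qfam).card = r →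
      (∃ G₁ : SimpleGraph W, G₁ ≤ G' ∧
        (∀ u v, G₁.Adj u v → u ∈ Qfam.biUnion id ∧ v ∈ Qfam.biUnion id) ∧
        2 * (((Qfam.biUnion id).card : ℤ)) - 4 ≤ (G₁.edgeSet.ncard : ℤ)) →
      ∃ G₁ : SimpleGraph W, G₁ ≤ G' ∧
        (∀ u v, G₁.Adj u v → u ∈ Pfam.biUnion id ∧ v ∈ Pfam.biUnion id) ∧
        2 * (((Pfam.biUnion id).card : ℤ)) - 4 ≤ (G₁.edgeSet.ncard : ℤ) by
    -- base data : the single piece p₀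
    refine h (Pfam \ {p₀}).card {p₀} (Finset.singleton_subset_iff.mpr hp₀)
      (Finset.mem_singleton_self p₀) rfl ?_
    refine ⟨auxWithin G' (p₀ : Set W), auxWithin_le, ?_, ?_⟩
    · intro u v huv
      have := auxWithin_mem huv
      simpa using this
    · have hb := hbound ((p₀ : Set W)) (G'.induce (p₀ : Set W)) (hthick p₀ hp₀)
      rw [aux_ncard_induce] at hb
      have hcardeq : (Fintype.card ((p₀ : Set W)) : ℤ) = (p₀.card : ℤ) := by
        norm_cast
        simp
      rw [hcardeq] at hb
      simpa using hb
  intro r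
  induction r with
  | zero =>
    intro Qfam hsub hp₀Q hcard hinv
    have : Pfam = Qfam := Finset.Subset.antisymm
      (fun P hP => by
        by_contra hPQ
        have : P ∈ Pfam \ Qfam := Finset.mem_sdiff.mpr ⟨hP, hPQ⟩
        rw [Finset.card_eq_zero] at hcard
        simp [hcard] at this) hsub
    rwa [this]
  | succ r ih =>
    intro Qfam hsub hp₀Q hcard hinv
    obtain ⟨G₁, hle, hedges, hbnd⟩ := hinv
    -- there is a piece outside Qfam; find a crossing link
    have hne : (Pfam \ Qfam).Nonempty := Finset.card_pos.mp (by omega)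
    obtain ⟨T, hT⟩ := hne
    rw [Finset.mem_sdiff] at hT
    obtain ⟨P, Q₂, hPQ, hQ₂Q, hlink⟩ := aux_exit (hconn T hT.1) hp₀Q hT.2
    obtain ⟨hPPfam, hQ₂Pfam, xx, yy, hxyne, hxynadj, hxP, hxQ, hyP, hyQ⟩ := hlink
    set V₁ := Qfam.biUnion id with hV₁
    have hxV₁ : xx ∈ V₁ := Finset.mem_biUnion.mpr ⟨P, hPQ, hxP⟩
    have hyV₁ : yy ∈ V₁ := Finset.mem_biUnion.mpr ⟨P, hPQ, hyP⟩
    set G₂ := auxWithin G' (Q₂ : Set W) with hG₂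
    have hG₂edges : ∀ u v, G₂.Adj u v → u ∈ Q₂ ∧ v ∈ Q₂ := by
      intro u v huv
      have := auxWithin_mem huv
      simpa using this
    have hthick₂ : ThickOfOrderAtMost (G₂.induce ((Q₂ : Finset W) : Set W)) k := by
      rw [hG₂, auxWithin_induce]
      exact hthick Q₂ hQ₂Pfam
    have hnclq : ¬ (G₂.IsClique ((V₁ ∩ Q₂ : Finset W) : Set W) ∧ (V₁ ∩ Q₂).card ≤ 2) := by
      rintro ⟨hclq, -⟩
      have hadj := hclq (by simp [hxV₁, hxQ]) (by simp [hyV₁, hyQ]) hxyne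
      exact hxynadj hadj.1
    have hun := hunion W V₁ Q₂ G₁ G₂ hedges hG₂edges hthick₂ hnclq
    -- set up the recursive call
    refine ih (insert Q₂ Qfam) (Finset.insert_subset hQ₂Pfam hsub)
      (Finset.mem_insert_of_mem hp₀Q) ?_ ?_
    · rw [Finset.sdiff_insert]
      rw [Finset.card_erase_of_mem (Finset.mem_sdiff.mpr ⟨hQ₂Pfam, hQ₂Q⟩), hcard]
      omega
    · refine ⟨G₁ ⊔ G₂, sup_le hle auxWithin_le, ?_, ?_⟩
      · intro u v huv
        rw [Finset.biUnion_insert]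
        rcases huv with huv | huv
        · have := hedges u v huv
          exact ⟨Finset.mem_union_right _ this.1, Finset.mem_union_right _ this.2⟩
        · have := hG₂edges u v huv
          exact ⟨Finset.mem_union_left _ (by simpa using this.1),
            Finset.mem_union_left _ (by simpa using this.2)⟩
      · rw [Finset.biUnion_insert]
        have hcardun : ((Q₂ ∪ V₁).card : ℤ) = ((Q₂ \ V₁).card : ℤ) + (V₁.card : ℤ) := by
          norm_cast
          exact (Finset.card_sdiff_add_card Q₂ V₁).symm
        have : ((id Q₂ : Finset W) ∪ V₁).card = (Q₂ ∪ V₁).card := rfl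
        rw [this, hcardun]
        have h2 : (2 : ℤ) * ((Q₂ \ V₁).card : ℤ) + (2 * (V₁.card : ℤ) - 4)
            ≤ (G₁.edgeSet.ncard : ℤ) + 2 * ((Q₂ \ V₁).card : ℤ) := by linarith
        calc 2 * (((Q₂ \ V₁).card : ℤ) + (V₁.card : ℤ)) - 4
            = 2 * ((Q₂ \ V₁).card : ℤ) + (2 * (V₁.card : ℤ) - 4) := by ring
          _ ≤ (G₁.edgeSet.ncard : ℤ) + 2 * ((Q₂ \ V₁).card : ℤ) := h2
          _ ≤ ((G₁ ⊔ G₂).edgeSet.ncard : ℤ) := hun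
/-! ### Final assembly helpers -/

lemma aux_rep (e : Sym2 V) : ∃ x y : V, e = s(x, y) :=
  Sym2.ind (fun a b => ⟨a, b, rfl⟩) e

lemma aux_assemble {W : Type} [Fintype W] [DecidableEq W] (G' G₁ : SimpleGraph W)
    (U : Finset W) (hle : G₁ ≤ G') (hin : ∀ u v, G₁.Adj u v → u ∈ U ∧ v ∈ U)
    (hbnd : 2 * ((U.card : ℤ)) - 4 ≤ (G₁.edgeSet.ncard : ℤ))
    (hnb : ∀ v : W, v ∉ U → ∃ x y : W, x ∈ U ∧ y ∈ U ∧ x ≠ y ∧ G'.Adj v x ∧ G'.Adj v y) :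
    2 * (Fintype.card W : ℤ) - 4 ≤ (G'.edgeSet.ncard : ℤ) := by
  have hcount := aux_count G' G₁ U hle hin hnb
  have hcards : (U.card : ℤ) + ((Uᶜ).card : ℤ) = (Fintype.card W : ℤ) := by
    exact_mod_cast congrArg Nat.cast (Finset.card_add_card_compl U)
  linarith

/-- The four vertices of an induced square give a thick-of-order-0 induced subgraph. -/
lemma aux_square_thick {G : SimpleGraph V} {f g : Sym2 V} (h : squareAdj G f g) :
    ThickOfOrderAtMost (G.induce {v | v ∈ f ∨ v ∈ g}) 0 := by
  obtain ⟨hf, hg, a, b, c, d, hfe, hge, hab, hbc, hcd, hda⟩ := h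
  have hac : a ≠ c ∧ ¬ G.Adj a c := aux_isNonEdge_pair (hfe ▸ hf)
  have hbd : b ≠ d ∧ ¬ G.Adj b d := aux_isNonEdge_pair (hge ▸ hg)
  set S : Set V := {v | v ∈ f ∨ v ∈ g} with hS
  have haS : a ∈ S := Or.inl (by rw [hfe]; simp)
  have hcS : c ∈ S := Or.inl (by rw [hfe]; simp)
  have hbS : b ∈ S := Or.inr (by rw [hge]; simp)
  have hdS : d ∈ S := Or.inr (by rw [hge]; simp)
  refine ⟨0, le_refl 0, ?_⟩
  show ThickZeroSet (G.induce S) Set.univ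
  refine ⟨{w : S | (w : V) ∈ f}, {w : S | (w : V) ∈ g}, ?_, ?_, ?_, ?_, ?_⟩
  · ext w
    simp only [Set.mem_union, Set.mem_setOf_eq, Set.mem_univ, iff_true]
    exact w.2
  · rw [Set.disjoint_left]
    intro w hwf hwg
    simp only [Set.mem_setOf_eq, hfe, hge, Sym2.mem_iff] at hwf hwg
    rcases hwf with h1 | h1 <;> rcases hwg with h2 | h2
    · exact hab.ne (h1 ▸ h2 ▸ rfl)
    · exact hda.ne' (h1 ▸ h2 ▸ rfl)
    · exact hbc.ne' (h1 ▸ h2 ▸ rfl)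
    · exact hcd.ne (h1 ▸ h2 ▸ rfl)
  · intro hclq
    have := hclq (Set.mem_setOf_eq ▸ (show ((⟨a, haS⟩ : S) : V) ∈ f by rw [hfe]; simp))
      (show ((⟨c, hcS⟩ : S) : V) ∈ f by rw [hfe]; simp)
      (by simp [Subtype.ext_iff]; exact hac.1)
    exact hac.2 this
  · intro hclq
    have := hclq (show ((⟨b, hbS⟩ : S) : V) ∈ g by rw [hge]; simp)
      (show ((⟨d, hdS⟩ : S) : V) ∈ g by rw [hge]; simp)
      (by simp [Subtype.ext_iff]; exact hbd.1)
    exact hbd.2 this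
  · rintro ⟨wa, hwaS⟩ hwaf ⟨wb, hwbS⟩ hwbg
    simp only [Set.mem_setOf_eq] at hwaf hwbg
    rw [hfe, Sym2.mem_iff] at hwaf
    rw [hge, Sym2.mem_iff] at hwbg
    show G.Adj wa wb
    rcases hwaf with rfl | rfl <;> rcases hwbg with rfl | rfl
    · exact hab
    · exact hda.symm
    · exact hbc.symm
    · exact hcd

end RACG

open RACG in
/-- Let `k ≥ 0`.  Suppose every finite simple graph which is
thick of order at most `k` satisfies `e(Γ) ≥ 2v(Γ) - 4`, and that moreover
for every finite simple graph `Γ₁ = (V₁, E₁)` and every thick of order at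
most `k` graph `Γ₂ = (V₂, E₂)` (modelled on a common ambient vertex type)
such that `Γ₂[V₁ ∩ V₂]` is not a clique on at most two vertices one has
`e(Γ₁ ∪ Γ₂) ≥ e(Γ₁) + 2|V₂ \ V₁|`.  Then every finite simple graph `Γ'`
that is thick of order at most `k + 1` satisfies `e(Γ') ≥ 2v(Γ') - 4`. -/
theorem edge_bound_inductive_step (k : ℕ)
    (hbound : ∀ (W : Type) [Fintype W] (G : SimpleGraph W),
      ThickOfOrderAtMost G k →
      2 * (Fintype.card W : ℤ) - 4 ≤ (G.edgeSet.ncard : ℤ))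
    (hunion : ∀ (W : Type) [Fintype W] [DecidableEq W]
      (V₁ V₂ : Finset W) (G₁ G₂ : SimpleGraph W),
      (∀ u v, G₁.Adj u v → u ∈ V₁ ∧ v ∈ V₁) →
      (∀ u v, G₂.Adj u v → u ∈ V₂ ∧ v ∈ V₂) →
      ThickOfOrderAtMost (G₂.induce (V₂ : Set W)) k →
      ¬ (G₂.IsClique ((V₁ ∩ V₂ : Finset W) : Set W) ∧ (V₁ ∩ V₂).card ≤ 2) →
      (G₁.edgeSet.ncard : ℤ) + 2 * ((V₂ \ V₁).card : ℤ)
        ≤ ((G₁ ⊔ G₂).edgeSet.ncard : ℤ))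
    (W' : Type) [Fintype W'] (G' : SimpleGraph W')
    (hG' : ThickOfOrderAtMost G' (k + 1)) :
    2 * (Fintype.card W' : ℤ) - 4 ≤ (G'.edgeSet.ncard : ℤ) := by
  classical
  obtain ⟨k', hk'le, ht⟩ := hG'
  by_cases hk'k : k' ≤ k
  · exact hbound W' G' ⟨k', hk'k, ht⟩
  · have hk'eq : k' = k + 1 := by omega
    subst hk'eq
    have hfull : FullAt G' (k + 1) := ht.1
    obtain ⟨C, hC, hlatch⟩ := hfull
    obtain ⟨f₀, hf₀ne, hCeq⟩ := hC
    have hf₀C : f₀ ∈ C := by rw [hCeq]; exact ⟨hf₀ne, Relation.ReflTransGen.refl⟩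
    have hmemC : ∀ {g}, g ∈ C ↔
        IsNonEdge G' g ∧ Relation.ReflTransGen (Tadj G' (k + 1)) f₀ g := by
      intro g; rw [hCeq]; rfl
    have hlatchAll : ∀ {e}, IsNonEdge G' e → e ∈ latch G' (k + 1) C := by
      intro e he; rw [hlatch]; exact he
    obtain ⟨x₀, y₀, hf₀rep⟩ := aux_rep f₀
    have hx₀y₀ := aux_isNonEdge_pair (hf₀rep ▸ hf₀ne)
    have hx₀f₀ : x₀ ∈ f₀ := by rw [hf₀rep]; simp
    have hy₀f₀ : y₀ ∈ f₀ := by rw [hf₀rep]; simp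
    rcases Nat.eq_zero_or_pos k with rfl | hkpos
    · -- level one: the component is a component of the square graph
      by_cases hiso : ∃ g, Tadj G' 1 f₀ g
      · obtain ⟨h₀, hh₀⟩ := hiso
        set pieceOf : Sym2 W' → Sym2 W' → Finset W' :=
          fun f g => (Set.toFinite {v | v ∈ f ∨ v ∈ g}).toFinset with hpieceOf
        have hmemPiece : ∀ {v f g}, v ∈ pieceOf f g ↔ (v ∈ f ∨ v ∈ g) := by
          intro v f g
          rw [hpieceOf]
          rw [Set.Finite.mem_toFinset]
          rfl
        set PS : Set (Finset W') := {P | ∃ f g, f ∈ C ∧ Tadj G' 1 f g ∧ P = pieceOf f g}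
          with hPS
        set Pfam : Finset (Finset W') := (Set.toFinite PS).toFinset with hPfam
        have hmemPfam : ∀ {P}, P ∈ Pfam ↔ ∃ f g, f ∈ C ∧ Tadj G' 1 f g ∧ P = pieceOf f g := by
          intro P
          rw [hPfam, Set.Finite.mem_toFinset]
          rfl
        set p₀ := pieceOf f₀ h₀ with hp₀def
        have hp₀ : p₀ ∈ Pfam := hmemPfam.mpr ⟨f₀, h₀, hf₀C, hh₀, rfl⟩
        have hthickP : ∀ P ∈ Pfam, ThickOfOrderAtMost (G'.induce (P : Set W')) 0 := by
          intro P hP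
          obtain ⟨f, g, hfC, hfg, rfl⟩ := hmemPfam.mp hP
          have hcoe : ((pieceOf f g : Finset W') : Set W') = {v | v ∈ f ∨ v ∈ g} := by
            rw [hpieceOf]
            exact Set.Finite.coe_toFinset _
          rw [hcoe]
          exact aux_square_thick hfg
        have hclaim : ∀ b, Relation.ReflTransGen (Tadj G' 1) f₀ b → ∀ g, Tadj G' 1 b g →
            Relation.ReflTransGen (auxLink G' Pfam) p₀ (pieceOf b g) := by
          intro b hrt
          induction hrt with
          | refl =>
            intro g hg
            exact Relation.ReflTransGen.single
              ⟨hp₀, hmemPfam.mpr ⟨f₀, g, hf₀C, hg, rfl⟩, x₀, y₀, hx₀y₀.1, hx₀y₀.2,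
                hmemPiece.mpr (Or.inl hx₀f₀), hmemPiece.mpr (Or.inl hx₀f₀),
                hmemPiece.mpr (Or.inl hy₀f₀), hmemPiece.mpr (Or.inl hy₀f₀)⟩
          | tail hpre hstep ihb =>
            rename_i bb cc
            intro g hg
            have hbbC : bb ∈ C := hmemC.mpr ⟨(aux_Tadj_nonEdge hstep).1, hpre⟩
            have hccC : cc ∈ C := hmemC.mpr ⟨(aux_Tadj_nonEdge hstep).2, hpre.tail hstep⟩
            obtain ⟨cx, cy, hccrep⟩ := aux_rep cc
            have hcc2 := aux_isNonEdge_pair (hccrep ▸ (aux_Tadj_nonEdge hstep).2)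
            have hcxcc : cx ∈ cc := by rw [hccrep]; simp
            have hcycc : cy ∈ cc := by rw [hccrep]; simp
            exact (ihb cc hstep).tail
              ⟨hmemPfam.mpr ⟨bb, cc, hbbC, hstep, rfl⟩, hmemPfam.mpr ⟨cc, g, hccC, hg, rfl⟩,
                cx, cy, hcc2.1, hcc2.2, hmemPiece.mpr (Or.inr hcxcc),
                hmemPiece.mpr (Or.inl hcxcc), hmemPiece.mpr (Or.inr hcycc),
                hmemPiece.mpr (Or.inl hcycc)⟩
        have hconnP : ∀ P ∈ Pfam, Relation.ReflTransGen (auxLink G' Pfam) p₀ P := by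
          intro P hP
          obtain ⟨f, g, hfC, hfg, rfl⟩ := hmemPfam.mp hP
          exact hclaim f (hmemC.mp hfC).2 g hfg
        obtain ⟨G₁, hle, hin, hbnd⟩ :=
          aux_glue 0 hbound hunion W' G' Pfam p₀ hp₀ hthickP hconnP
        refine aux_assemble G' G₁ (Pfam.biUnion id) hle hin hbnd ?_
        intro v hvU
        by_cases hdom : ∃ u, u ≠ v ∧ ¬ G'.Adj v u
        · obtain ⟨u, hune, hunadj⟩ := hdom
          exfalso
          have he : IsNonEdge G' s(v, u) := aux_isNonEdge_mk (Ne.symm hune) hunadj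
          have hvsupp := (hlatchAll he).2 v (by simp)
          have hvsupp' : ∃ f ∈ C, v ∈ f := by simpa [supp] using hvsupp
          obtain ⟨f, hfC, hvf⟩ := hvsupp'
          rcases (hmemC.mp hfC).2.cases_tail with heq | ⟨c, -, hcf⟩
          · exact hvU (Finset.mem_biUnion.mpr
              ⟨p₀, hp₀, hmemPiece.mpr (Or.inl (heq ▸ hvf))⟩)
          · exact hvU (Finset.mem_biUnion.mpr
              ⟨pieceOf f c, hmemPfam.mpr ⟨f, c, hfC, aux_Tadj_symm hcf, rfl⟩,
                hmemPiece.mpr (Or.inl hvf)⟩)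
        · push_neg at hdom
          have hxU : x₀ ∈ Pfam.biUnion id :=
            Finset.mem_biUnion.mpr ⟨p₀, hp₀, hmemPiece.mpr (Or.inl hx₀f₀)⟩
          have hyU : y₀ ∈ Pfam.biUnion id :=
            Finset.mem_biUnion.mpr ⟨p₀, hp₀, hmemPiece.mpr (Or.inl hy₀f₀)⟩
          refine ⟨x₀, y₀, hxU, hyU, hx₀y₀.1, hdom x₀ ?_, hdom y₀ ?_⟩
          · intro h; exact hvU (h ▸ hxU)
          · intro h; exact hvU (h ▸ hyU)
      · -- the base non-edge is isolated in the square graph: the unique non-edge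
        have hCsing : ∀ g ∈ C, g = f₀ := by
          intro g hg
          rcases Relation.ReflTransGen.cases_head (hmemC.mp hg).2 with h | ⟨c, hc, -⟩
          · exact h.symm
          · exact absurd ⟨c, hc⟩ hiso
        refine aux_assemble G' ⊥ {x₀, y₀} bot_le
          (fun u v h => absurd h (by simp)) ?_ ?_
        · have hcard : ({x₀, y₀} : Finset W').card = 2 := Finset.card_pair hx₀y₀.1
          rw [hcard]
          simp
        · intro v hvU
          by_cases hdom : ∃ u, u ≠ v ∧ ¬ G'.Adj v u
          · obtain ⟨u, hune, hunadj⟩ := hdom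
            exfalso
            have he : IsNonEdge G' s(v, u) := aux_isNonEdge_mk (Ne.symm hune) hunadj
            have hvsupp := (hlatchAll he).2 v (by simp)
            have hvsupp' : ∃ f ∈ C, v ∈ f := by simpa [supp] using hvsupp
            obtain ⟨f, hfC, hvf⟩ := hvsupp'
            rw [hCsing f hfC, hf₀rep, Sym2.mem_iff] at hvf
            rcases hvf with rfl | rfl <;> simp at hvU
          · push_neg at hdom
            refine ⟨x₀, y₀, by simp, by simp, hx₀y₀.1, hdom x₀ ?_, hdom y₀ ?_⟩
            · intro h; rw [h] at hvU; simp at hvU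
            · intro h; rw [h] at hvU; simp at hvU
    · -- level at least two
      obtain ⟨k₁, rfl⟩ : ∃ k₁, k = k₁ + 1 := ⟨k - 1, by omega⟩
      set pieceOf : Set (Sym2 W') → Finset W' :=
        fun E => (Set.toFinite (supp G' (k₁ + 1) E)).toFinset with hpieceOf
      have hmemPiece : ∀ {v E}, v ∈ pieceOf E ↔ v ∈ supp G' (k₁ + 1) E := by
        intro v E
        rw [hpieceOf, Set.Finite.mem_toFinset]
      set DS : Set (Set (Sym2 W')) :=
        {E | IsComp G' (Tadj G' (k₁ + 1)) E ∧ (latch G' (k₁ + 1) E ∩ C).Nonempty} with hDS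
      set Pfam : Finset (Finset W') := (Set.toFinite (pieceOf '' DS)).toFinset with hPfam
      have hmemPfam : ∀ {E}, E ∈ DS → pieceOf E ∈ Pfam := by
        intro E hE
        rw [hPfam, Set.Finite.mem_toFinset]
        exact ⟨E, hE, rfl⟩
      set comp₀ : Set (Sym2 W') :=
        {g | IsNonEdge G' g ∧ Relation.ReflTransGen (Tadj G' (k₁ + 1)) f₀ g} with hcomp₀def
      have hcomp₀ : IsComp G' (Tadj G' (k₁ + 1)) comp₀ := ⟨f₀, hf₀ne, rfl⟩
      have hf₀comp₀ : f₀ ∈ comp₀ := ⟨hf₀ne, Relation.ReflTransGen.refl⟩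
      have hf₀latch₀ : f₀ ∈ latch G' (k₁ + 1) comp₀ := aux_mem_latch_self hf₀ne hf₀comp₀
      have hcomp₀DS : comp₀ ∈ DS := ⟨hcomp₀, ⟨f₀, hf₀latch₀, hf₀C⟩⟩
      set p₀ := pieceOf comp₀ with hp₀def
      have hp₀ : p₀ ∈ Pfam := hmemPfam hcomp₀DS
      have hthickP : ∀ P ∈ Pfam, ThickOfOrderAtMost (G'.induce (P : Set W')) (k₁ + 1) := by
        intro P hP
        rw [hPfam, Set.Finite.mem_toFinset] at hP
        obtain ⟨E, hEDS, rfl⟩ := hP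
        obtain ⟨i, hi1, hik, hfullP⟩ := aux_pieceFull G' (k₁ + 1) (by omega) E hEDS.1
        have hcoe : ((pieceOf E : Finset W') : Set W') = supp G' (k₁ + 1) E := by
          rw [hpieceOf]
          exact Set.Finite.coe_toFinset _
        rw [hcoe]
        exact aux_thickAtMost_of_fullAt hi1 hik hfullP
      have hlink : ∀ E E', E ∈ DS → E' ∈ DS → ∀ w, IsNonEdge G' w →
          w ∈ latch G' (k₁ + 1) E → w ∈ latch G' (k₁ + 1) E' →
          auxLink G' Pfam (pieceOf E) (pieceOf E') := by
        intro E E' hE hE' w hwne hwL hwL'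
        obtain ⟨wx, wy, hwrep⟩ := aux_rep w
        have hw2 := aux_isNonEdge_pair (hwrep ▸ hwne)
        have hwxw : wx ∈ w := by rw [hwrep]; simp
        have hwyw : wy ∈ w := by rw [hwrep]; simp
        exact ⟨hmemPfam hE, hmemPfam hE', wx, wy, hw2.1, hw2.2,
          hmemPiece.mpr (hwL.2 wx hwxw), hmemPiece.mpr (hwL'.2 wx hwxw),
          hmemPiece.mpr (hwL.2 wy hwyw), hmemPiece.mpr (hwL'.2 wy hwyw)⟩
      have hclaim : ∀ b, Relation.ReflTransGen (Tadj G' (k₁ + 2)) f₀ b →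
          ∀ E', IsComp G' (Tadj G' (k₁ + 1)) E' → b ∈ latch G' (k₁ + 1) E' →
          Relation.ReflTransGen (auxLink G' Pfam) p₀ (pieceOf E') := by
        intro b hrt
        induction hrt with
        | refl =>
          intro E' hE' hbL
          exact Relation.ReflTransGen.single
            (hlink comp₀ E' hcomp₀DS ⟨hE', f₀, hbL, hf₀C⟩ f₀ hf₀ne hf₀latch₀ hbL)
        | tail hpre hstep ih =>
          rename_i bb cc
          intro E' hE' hccL'
          obtain ⟨C₁, C₂, hC₁, hC₂, hbbL, hccL, w, hw₁, hw₂⟩ := hstep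
          have hbbC : bb ∈ C := hmemC.mpr ⟨hbbL.1, hpre⟩
          have hccC : cc ∈ C := by
            refine hmemC.mpr ⟨hccL.1, hpre.tail ?_⟩
            exact ⟨C₁, C₂, hC₁, hC₂, hbbL, hccL, w, hw₁, hw₂⟩
          have hC₁DS : C₁ ∈ DS := ⟨hC₁, bb, hbbL, hbbC⟩
          have hC₂DS : C₂ ∈ DS := ⟨hC₂, cc, hccL, hccC⟩
          have hE'DS : E' ∈ DS := ⟨hE', cc, hccL', hccC⟩
          exact (((ih C₁ hC₁ hbbL).tail
            (hlink C₁ C₂ hC₁DS hC₂DS w hw₁.1 hw₁ hw₂)).tail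
            (hlink C₂ E' hC₂DS hE'DS cc hccL.1 hccL hccL'))
      have hconnP : ∀ P ∈ Pfam, Relation.ReflTransGen (auxLink G' Pfam) p₀ P := by
        intro P hP
        rw [hPfam, Set.Finite.mem_toFinset] at hP
        obtain ⟨E, hEDS, rfl⟩ := hP
        obtain ⟨hE, f₁, hf₁L, hf₁C⟩ := hEDS
        exact hclaim f₁ (hmemC.mp hf₁C).2 E hE hf₁L
      obtain ⟨G₁, hle, hin, hbnd⟩ :=
        aux_glue (k₁ + 1) hbound hunion W' G' Pfam p₀ hp₀ hthickP hconnP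
      refine aux_assemble G' G₁ (Pfam.biUnion id) hle hin hbnd ?_
      intro v hvU
      by_cases hdom : ∃ u, u ≠ v ∧ ¬ G'.Adj v u
      · obtain ⟨u, hune, hunadj⟩ := hdom
        have he : IsNonEdge G' s(v, u) := aux_isNonEdge_mk (Ne.symm hune) hunadj
        have hvsupp := (hlatchAll he).2 v (by simp)
        rw [aux_supp_cases (by omega)] at hvsupp
        obtain ⟨f, hfC, hvf | hvsusp⟩ := hvsupp
        · exfalso
          have hfne : IsNonEdge G' f := (hmemC.mp hfC).1
          have hcompf : IsComp G' (Tadj G' (k₁ + 1))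
              {g | IsNonEdge G' g ∧ Relation.ReflTransGen (Tadj G' (k₁ + 1)) f g} :=
            ⟨f, hfne, rfl⟩
          have hfmem : f ∈ {g | IsNonEdge G' g ∧
              Relation.ReflTransGen (Tadj G' (k₁ + 1)) f g} :=
            ⟨hfne, Relation.ReflTransGen.refl⟩
          have hfDS : _ ∈ DS := ⟨hcompf, f, aux_mem_latch_self hfne hfmem, hfC⟩
          exact hvU (Finset.mem_biUnion.mpr
            ⟨pieceOf _, hmemPfam hfDS, hmemPiece.mpr (aux_mem_supp_of_mem hfmem hvf)⟩)
        · have hfne : IsNonEdge G' f := (hmemC.mp hfC).1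
          obtain ⟨fx, fy, hfrep⟩ := aux_rep f
          have hf2 := aux_isNonEdge_pair (hfrep ▸ hfne)
          have hfxf : fx ∈ f := by rw [hfrep]; simp
          have hfyf : fy ∈ f := by rw [hfrep]; simp
          have hcompf : IsComp G' (Tadj G' (k₁ + 1))
              {g | IsNonEdge G' g ∧ Relation.ReflTransGen (Tadj G' (k₁ + 1)) f g} :=
            ⟨f, hfne, rfl⟩
          have hfmem : f ∈ {g | IsNonEdge G' g ∧
              Relation.ReflTransGen (Tadj G' (k₁ + 1)) f g} :=
            ⟨hfne, Relation.ReflTransGen.refl⟩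
          have hfDS : _ ∈ DS := ⟨hcompf, f, aux_mem_latch_self hfne hfmem, hfC⟩
          refine ⟨fx, fy, ?_, ?_, hf2.1, hvsusp fx hfxf, hvsusp fy hfyf⟩
          · exact Finset.mem_biUnion.mpr
              ⟨pieceOf _, hmemPfam hfDS, hmemPiece.mpr (aux_mem_supp_of_mem hfmem hfxf)⟩
          · exact Finset.mem_biUnion.mpr
              ⟨pieceOf _, hmemPfam hfDS, hmemPiece.mpr (aux_mem_supp_of_mem hfmem hfyf)⟩
      · push_neg at hdom
        have hxU : x₀ ∈ Pfam.biUnion id := Finset.mem_biUnion.mpr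
          ⟨p₀, hp₀, hmemPiece.mpr (aux_mem_supp_of_mem hf₀comp₀ hx₀f₀)⟩
        have hyU : y₀ ∈ Pfam.biUnion id := Finset.mem_biUnion.mpr
          ⟨p₀, hp₀, hmemPiece.mpr (aux_mem_supp_of_mem hf₀comp₀ hy₀f₀)⟩
        refine ⟨x₀, y₀, hxU, hyU, hx₀y₀.1, hdom x₀ ?_, hdom y₀ ?_⟩
        · intro h; exact hvU (h ▸ hxU)
        · intro h; exact hvU (h ▸ hyU)
end

section
/- Let Γ₁ = (V₁, E₁) be a finite simple graph, and let Γ₂ = (V₂, E₂) be a finite simple graph which is thick of order 0. Set I := V₁ ∩ V₂, and suppose that Γ₂[I] is not a clique on at most 2 vertices (in particular I is non-empty and Γ₂[I] is not isomorphic to K₁ or K₂). Then e(Γ₁ ∪ Γ₂) ≥ e(Γ₁) + 2|V₂ \ V₁|, where Γ₁ ∪ Γ₂ is the graph with vertex set V₁ ∪ V₂ and edge set E₁ ∪ E₂. -/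
open RACG in
private lemma aux'' {V : Type*} [Fintype V] [DecidableEq V] (V₁ V₂ : Finset V)
    (G₁ G₂ : SimpleGraph V)
    (hsupp₁ : ∀ u v, G₁.Adj u v → u ∈ V₁ ∧ v ∈ V₁)
    (A B : Set V)
    (hAsub : A ⊆ ↑V₂)
    (hcover : ∀ v ∈ V₂, v ∈ A ∨ v ∈ B)
    (hdisj : Disjoint A B)
    (hjoin : ∀ a ∈ A, ∀ b ∈ B, G₂.Adj a b)
    (hA2 : ∃ p ∈ A, ∃ q ∈ A, p ≠ q)
    (hB2 : ∃ p ∈ B ∩ ↑V₁, ∃ q ∈ B ∩ ↑V₁, p ≠ q) :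
    (G₁.edgeSet.ncard : ℤ) + 2 * ((V₂ \ V₁).card : ℤ)
      ≤ ((G₁ ⊔ G₂).edgeSet.ncard : ℤ) := by
  classical
  set Afin : Finset V := V₂.filter (· ∈ A) with hAfin
  set Bfin : Finset V := V₁.filter (· ∈ B) with hBfin
  set Da : Finset V := (V₂ \ V₁).filter (· ∈ A) with hDa
  set Db : Finset V := (V₂ \ V₁).filter (· ∈ B) with hDb
  have hAcard : 2 ≤ Afin.card := by
    obtain ⟨p, hp, q, hq, hpq⟩ := hA2
    have hpm : p ∈ Afin := Finset.mem_filter.mpr ⟨Finset.mem_coe.mp (hAsub hp), hp⟩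
    have hqm : q ∈ Afin := Finset.mem_filter.mpr ⟨Finset.mem_coe.mp (hAsub hq), hq⟩
    have hsub : ({p, q} : Finset V) ⊆ Afin := by
      intro x hx
      simp only [Finset.mem_insert, Finset.mem_singleton] at hx
      rcases hx with rfl | rfl
      · exact hpm
      · exact hqm
    calc 2 = ({p, q} : Finset V).card := (Finset.card_pair hpq).symm
      _ ≤ _ := Finset.card_le_card hsub
  have hBcard : 2 ≤ Bfin.card := by
    obtain ⟨p, ⟨hpB, hpV⟩, q, ⟨hqB, hqV⟩, hpq⟩ := hB2
    have hpm : p ∈ Bfin := Finset.mem_filter.mpr ⟨Finset.mem_coe.mp hpV, hpB⟩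
    have hqm : q ∈ Bfin := Finset.mem_filter.mpr ⟨Finset.mem_coe.mp hqV, hqB⟩
    have hsub : ({p, q} : Finset V) ⊆ Bfin := by
      intro x hx
      simp only [Finset.mem_insert, Finset.mem_singleton] at hx
      rcases hx with rfl | rfl
      · exact hpm
      · exact hqm
    calc 2 = ({p, q} : Finset V).card := (Finset.card_pair hpq).symm
      _ ≤ _ := Finset.card_le_card hsub
  have hDsplit : (V₂ \ V₁).card = Da.card + Db.card := by
    have h := Finset.card_filter_add_card_filter_not
      (s := V₂ \ V₁) (p := (· ∈ A))
    have hDbeq : (V₂ \ V₁).filter (fun v => ¬ v ∈ A) = Db := by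
      ext v
      simp only [Finset.mem_filter, hDb, Finset.mem_sdiff]
      constructor
      · rintro ⟨⟨h2, h1⟩, hnA⟩
        exact ⟨⟨h2, h1⟩, (hcover v h2).resolve_left hnA⟩
      · rintro ⟨⟨h2, h1⟩, hB⟩
        exact ⟨⟨h2, h1⟩, fun hA => Set.disjoint_left.mp hdisj hA hB⟩
    rw [hDbeq, ← hDa] at h
    omega
  -- injectivity of the Sym2 pairing on A × B pairs
  have key : ∀ p q : V × V, p.1 ∈ A → p.2 ∈ B → q.1 ∈ A → q.2 ∈ B →
      s(p.1, p.2) = s(q.1, q.2) → p = q := by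
    rintro ⟨a, b⟩ ⟨c, d⟩ ha hb hc hd h
    rw [Sym2.eq_iff] at h
    rcases h with ⟨rfl, rfl⟩ | ⟨rfl, rfl⟩
    · rfl
    · exact absurd hc (fun hc => Set.disjoint_left.mp hdisj hc hb)
  set F : Finset (Sym2 V) :=
    (Da ×ˢ Bfin).image (fun p => s(p.1, p.2)) ∪
      (Afin ×ˢ Db).image (fun p => s(p.1, p.2)) with hF
  have hmem1 : ∀ p ∈ Da ×ˢ Bfin, (p : V × V).1 ∈ A ∧ p.2 ∈ B ∧ p.1 ∉ V₁ := by
    rintro ⟨a, b⟩ hp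
    rw [Finset.mem_product] at hp
    simp only [hDa, hBfin, Finset.mem_filter, Finset.mem_sdiff] at hp
    exact ⟨hp.1.2, hp.2.2, hp.1.1.2⟩
  have hmem2 : ∀ p ∈ Afin ×ˢ Db, (p : V × V).1 ∈ A ∧ p.2 ∈ B ∧ p.2 ∉ V₁ := by
    rintro ⟨a, b⟩ hp
    rw [Finset.mem_product] at hp
    simp only [hDa, hDb, hAfin, Finset.mem_filter, Finset.mem_sdiff] at hp
    exact ⟨hp.1.2, hp.2.2, hp.2.1.2⟩
  have hcard1 : ((Da ×ˢ Bfin).image (fun p : V × V => s(p.1, p.2))).card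
      = Da.card * Bfin.card := by
    rw [Finset.card_image_of_injOn, Finset.card_product]
    intro p hp q hq h
    have hp' := hmem1 p (by simpa using hp)
    have hq' := hmem1 q (by simpa using hq)
    exact key p q hp'.1 hp'.2.1 hq'.1 hq'.2.1 h
  have hcard2 : ((Afin ×ˢ Db).image (fun p : V × V => s(p.1, p.2))).card
      = Afin.card * Db.card := by
    rw [Finset.card_image_of_injOn, Finset.card_product]
    intro p hp q hq h
    have hp' := hmem2 p (by simpa using hp)
    have hq' := hmem2 q (by simpa using hq)
    exact key p q hp'.1 hp'.2.1 hq'.1 hq'.2.1 h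
  have hdisjF : Disjoint ((Da ×ˢ Bfin).image (fun p : V × V => s(p.1, p.2)))
      ((Afin ×ˢ Db).image (fun p : V × V => s(p.1, p.2))) := by
    rw [Finset.disjoint_left]
    intro e he1 he2
    simp only [Finset.mem_image] at he1 he2
    obtain ⟨⟨a, b⟩, hab, rfl⟩ := he1
    obtain ⟨⟨c, d⟩, hcd, h⟩ := he2
    have h1 := hmem1 _ hab
    have h2 := hmem2 _ hcd
    rw [Finset.mem_product] at hab hcd
    rw [Sym2.eq_iff] at h
    have hb1 : b ∈ V₁ := by
      have := hab.2; simp only [hBfin, Finset.mem_filter] at this; exact this.1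
    rcases h with ⟨h3, h4⟩ | ⟨h3, h4⟩
    · exact h2.2.2 (h4 ▸ hb1)
    · -- c = b : c ∈ A, b ∈ B
      exact Set.disjoint_left.mp hdisj (h3 ▸ h2.1) h1.2.1
  have hFcard : F.card = Da.card * Bfin.card + Afin.card * Db.card := by
    rw [hF, Finset.card_union_of_disjoint hdisjF, hcard1, hcard2]
  have hFprop : ∀ e ∈ F, e ∈ G₂.edgeSet ∧ e ∉ G₁.edgeSet := by
    intro e he
    rw [hF, Finset.mem_union] at he
    rcases he with he | he
    · simp only [Finset.mem_image] at he
      obtain ⟨⟨a, b⟩, hab, rfl⟩ := he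
      have h1 := hmem1 _ hab
      refine ⟨hjoin a h1.1 b h1.2.1, fun hc => ?_⟩
      rw [SimpleGraph.mem_edgeSet] at hc
      exact h1.2.2 (hsupp₁ a b hc).1
    · simp only [Finset.mem_image] at he
      obtain ⟨⟨a, b⟩, hab, rfl⟩ := he
      have h1 := hmem2 _ hab
      refine ⟨hjoin a h1.1 b h1.2.1, fun hc => ?_⟩
      rw [SimpleGraph.mem_edgeSet] at hc
      exact h1.2.2 (hsupp₁ a b hc).2
  have hsub : G₁.edgeSet ∪ ↑F ⊆ (G₁ ⊔ G₂).edgeSet := by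
    rw [SimpleGraph.edgeSet_sup]
    intro e he
    rcases he with he | he
    · exact Or.inl he
    · exact Or.inr (hFprop e he).1
  have hdisjEF : Disjoint G₁.edgeSet (↑F : Set (Sym2 V)) := by
    rw [Set.disjoint_right]
    intro e he
    exact (hFprop e he).2
  have h1 : (G₁.edgeSet ∪ ↑F).ncard = G₁.edgeSet.ncard + F.card := by
    rw [Set.ncard_union_eq hdisjEF (Set.toFinite _) (Set.toFinite _),
      Set.ncard_coe_finset]
  have h2 : (G₁.edgeSet ∪ ↑F).ncard ≤ (G₁ ⊔ G₂).edgeSet.ncard :=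
    Set.ncard_le_ncard hsub (Set.toFinite _)
  have h3 : 2 * (V₂ \ V₁).card ≤ F.card := by
    rw [hFcard, hDsplit]
    nlinarith [hAcard, hBcard]
  have : G₁.edgeSet.ncard + 2 * (V₂ \ V₁).card ≤ (G₁ ⊔ G₂).edgeSet.ncard := by
    omega
  exact_mod_cast this


open RACG in
/-- Let `Γ₁ = (V₁, E₁)` be a finite simple graph and let
`Γ₂ = (V₂, E₂)` be a finite simple graph which is thick of order `0` (both
modelled on a common ambient vertex type, supported on their respective
vertex sets).  If `I := V₁ ∩ V₂` induces in `Γ₂` a subgraph which is not a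
clique on at most two vertices, then
`e(Γ₁ ∪ Γ₂) ≥ e(Γ₁) + 2|V₂ \ V₁|`. -/
theorem union_with_thick_zero_edge_bound {V : Type*} [Fintype V]
    [DecidableEq V] (V₁ V₂ : Finset V) (G₁ G₂ : SimpleGraph V)
    (hsupp₁ : ∀ u v, G₁.Adj u v → u ∈ V₁ ∧ v ∈ V₁)
    (hsupp₂ : ∀ u v, G₂.Adj u v → u ∈ V₂ ∧ v ∈ V₂)
    (hG₂ : ThickOfOrder (G₂.induce (V₂ : Set V)) 0)
    (hI : ¬ (G₂.IsClique ((V₁ ∩ V₂ : Finset V) : Set V) ∧ (V₁ ∩ V₂).card ≤ 2)) :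
    (G₁.edgeSet.ncard : ℤ) + 2 * ((V₂ \ V₁).card : ℤ)
      ≤ ((G₁ ⊔ G₂).edgeSet.ncard : ℤ) := by
  have hG₂' : ThickZeroSet (G₂.induce (V₂ : Set V)) Set.univ := hG₂
  classical
  obtain ⟨A₀, B₀, hcov, hdisj₀, hAnc, hBnc, hjoin₀⟩ := hG₂'
  set A : Set V := Subtype.val '' A₀ with hA
  set B : Set V := Subtype.val '' B₀ with hB
  have hAsub : A ⊆ ↑V₂ := by rintro x ⟨⟨x, hx⟩, _, rfl⟩; exact hx
  have hBsub : B ⊆ ↑V₂ := by rintro x ⟨⟨x, hx⟩, _, rfl⟩; exact hx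
  have hcover : ∀ v ∈ V₂, v ∈ A ∨ v ∈ B := by
    intro v hv
    have : (⟨v, hv⟩ : ↑(V₂ : Set V)) ∈ A₀ ∪ B₀ := by
      rw [hcov]; trivial
    rcases this with h | h
    · exact Or.inl ⟨⟨v, hv⟩, h, rfl⟩
    · exact Or.inr ⟨⟨v, hv⟩, h, rfl⟩
  have hdisj : Disjoint A B := by
    rw [Set.disjoint_left]
    rintro x ⟨a, ha, rfl⟩ ⟨b, hb, hba⟩
    have : b = a := Subtype.val_injective hba
    exact Set.disjoint_left.mp hdisj₀ ha (this ▸ hb)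
  have hjoin : ∀ a ∈ A, ∀ b ∈ B, G₂.Adj a b := by
    rintro x ⟨a, ha, rfl⟩ y ⟨b, hb, rfl⟩
    exact hjoin₀ a ha b hb
  have two_of_nonclique : ∀ (S₀ : Set ↑(V₂ : Set V)),
      ¬ (G₂.induce (V₂ : Set V)).IsClique S₀ →
      ∃ p ∈ Subtype.val '' S₀, ∃ q ∈ Subtype.val '' S₀, p ≠ q := by
    intro S₀ hnc
    by_contra h
    push_neg at h
    refine hnc fun x hx y hy hxy => ?_
    exact absurd (Subtype.val_injective
      (h x ⟨x, hx, rfl⟩ y ⟨y, hy, rfl⟩)) hxy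
  have hA2 : ∃ p ∈ A, ∃ q ∈ A, p ≠ q := two_of_nonclique A₀ hAnc
  have hB2 : ∃ p ∈ B, ∃ q ∈ B, p ≠ q := two_of_nonclique B₀ hBnc
  by_cases hBV : ∃ p ∈ B ∩ ↑V₁, ∃ q ∈ B ∩ ↑V₁, p ≠ q
  · exact aux'' V₁ V₂ G₁ G₂ hsupp₁ A B hAsub hcover hdisj hjoin hA2 hBV
  by_cases hAV : ∃ p ∈ A ∩ ↑V₁, ∃ q ∈ A ∩ ↑V₁, p ≠ q
  · exact aux'' V₁ V₂ G₁ G₂ hsupp₁ B A hBsub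
      (fun v hv => (hcover v hv).symm) hdisj.symm
      (fun b hb a ha => (hjoin a ha b hb).symm) hB2 hAV
  -- contradiction with hI
  exfalso
  push_neg at hBV hAV
  apply hI
  constructor
  · intro x hx y hy hxy
    have hx' : x ∈ V₁ ∧ x ∈ V₂ := by
      simpa [Finset.mem_inter] using hx
    have hy' : y ∈ V₁ ∧ y ∈ V₂ := by
      simpa [Finset.mem_inter] using hy
    rcases hcover x hx'.2 with hxA | hxB <;> rcases hcover y hy'.2 with hyA | hyB
    · exact absurd (hAV x ⟨hxA, hx'.1⟩ y ⟨hyA, hy'.1⟩) hxy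
    · exact hjoin x hxA y hyB
    · exact (hjoin y hyA x hxB).symm
    · exact absurd (hBV x ⟨hxB, hx'.1⟩ y ⟨hyB, hy'.1⟩) hxy
  · set SA : Finset V := V₁.filter (· ∈ A) with hSA
    set SB : Finset V := V₁.filter (· ∈ B) with hSB
    have hsub : V₁ ∩ V₂ ⊆ SA ∪ SB := by
      intro v hv
      rw [Finset.mem_inter] at hv
      rcases hcover v hv.2 with h | h
      · exact Finset.mem_union_left _ (Finset.mem_filter.mpr ⟨hv.1, h⟩)
      · exact Finset.mem_union_right _ (Finset.mem_filter.mpr ⟨hv.1, h⟩)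
    have hSAc : SA.card ≤ 1 := Finset.card_le_one.mpr fun a ha b hb => by
      rw [hSA, Finset.mem_filter] at ha hb
      exact hAV a ⟨ha.2, ha.1⟩ b ⟨hb.2, hb.1⟩
    have hSBc : SB.card ≤ 1 := Finset.card_le_one.mpr fun a ha b hb => by
      rw [hSB, Finset.mem_filter] at ha hb
      exact hBV a ⟨ha.2, ha.1⟩ b ⟨hb.2, hb.1⟩
    calc (V₁ ∩ V₂).card ≤ (SA ∪ SB).card := Finset.card_le_card hsub
      _ ≤ SA.card + SB.card := Finset.card_union_le _ _
      _ ≤ 2 := by omega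
end

section
/- Let Γ₁ = (V₁, E₁) be a finite simple graph and let Γ₂ = (V₂, E₂) be a finite simple graph admitting a partition V₂ = A ⊔ B such that every vertex of A is adjacent in Γ₂ to every vertex of B. Set I := V₁ ∩ V₂ and suppose V₂ \ V₁ ≠ ∅. Write a := |A|, b := |B|, x := |A ∩ I| and y := |B ∩ I|. Then e(Γ₁ ∪ Γ₂) − e(Γ₁) − 2|V₂ \ V₁| ≥ |B \ I|(|A| − 2) + |A \ I|(|B ∩ I| − 2) = (b − y)(a − 2) + (a − x)(y − 2), where Γ₁ ∪ Γ₂ is the graph with vertex set V₁ ∪ V₂ and edge set E₁ ∪ E₂. -/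
open RACG in
/-- Let `Γ₁ = (V₁, E₁)` be a finite simple graph, and let
`Γ₂ = (V₂, E₂)` admit a partition `V₂ = A ⊔ B` such that every vertex of `A`
is adjacent in `Γ₂` to every vertex of `B` (both graphs modelled on a common
ambient vertex type, supported on their respective vertex sets).  Set
`I := V₁ ∩ V₂` and suppose `V₂ \ V₁ ≠ ∅`.  Writing `a := |A|`, `b := |B|`,
`x := |A ∩ I|` and `y := |B ∩ I|`, we have
`e(Γ₁ ∪ Γ₂) - e(Γ₁) - 2|V₂ \ V₁| ≥ |B \ I|(|A| - 2) + |A \ I|(|B ∩ I| - 2)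
 = (b - y)(a - 2) + (a - x)(y - 2)`. -/
theorem key_inequality_join {V : Type*} [Fintype V] [DecidableEq V]
    (V₁ V₂ A B : Finset V) (G₁ G₂ : SimpleGraph V)
    (hsupp₁ : ∀ u v, G₁.Adj u v → u ∈ V₁ ∧ v ∈ V₁)
    (hsupp₂ : ∀ u v, G₂.Adj u v → u ∈ V₂ ∧ v ∈ V₂)
    (hpart : A ∪ B = V₂) (hdisj : Disjoint A B)
    (hjoin : ∀ a ∈ A, ∀ b ∈ B, G₂.Adj a b)
    (hne : (V₂ \ V₁).Nonempty) :
    (((B \ (V₁ ∩ V₂)).card : ℤ) * ((A.card : ℤ) - 2)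
        + ((A \ (V₁ ∩ V₂)).card : ℤ) * (((B ∩ (V₁ ∩ V₂)).card : ℤ) - 2)
      ≤ ((G₁ ⊔ G₂).edgeSet.ncard : ℤ) - (G₁.edgeSet.ncard : ℤ)
        - 2 * ((V₂ \ V₁).card : ℤ)) ∧
    (((B \ (V₁ ∩ V₂)).card : ℤ) * ((A.card : ℤ) - 2)
        + ((A \ (V₁ ∩ V₂)).card : ℤ) * (((B ∩ (V₁ ∩ V₂)).card : ℤ) - 2)
      = ((B.card : ℤ) - ((B ∩ (V₁ ∩ V₂)).card : ℤ)) * ((A.card : ℤ) - 2)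
        + ((A.card : ℤ) - ((A ∩ (V₁ ∩ V₂)).card : ℤ))
          * (((B ∩ (V₁ ∩ V₂)).card : ℤ) - 2)) := by

  classical
  set I := V₁ ∩ V₂ with hI
  constructor
  · -- the inequality
    letI : DecidableRel G₁.Adj := Classical.decRel _
    letI : DecidableRel G₂.Adj := Classical.decRel _
    letI : DecidableRel (G₁ ⊔ G₂).Adj := Classical.decRel _
    -- special edge sets
    set S₁ : Finset (Sym2 V) :=
      (A ×ˢ (B \ I)).image (fun p => s(p.1, p.2)) with hS₁
    set S₂ : Finset (Sym2 V) :=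
      ((A \ I) ×ˢ (B ∩ I)).image (fun p => s(p.1, p.2)) with hS₂
    have hmem₁ : ∀ e ∈ S₁, ∃ u ∈ A, ∃ v ∈ B \ I, e = s(u, v) := by
      intro e he
      simp only [hS₁, Finset.mem_image, Finset.mem_product] at he
      obtain ⟨⟨u, v⟩, ⟨hu, hv⟩, rfl⟩ := he
      exact ⟨u, hu, v, hv, rfl⟩
    have hmem₂ : ∀ e ∈ S₂, ∃ u ∈ A \ I, ∃ v ∈ B ∩ I, e = s(u, v) := by
      intro e he
      simp only [hS₂, Finset.mem_image, Finset.mem_product] at he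
      obtain ⟨⟨u, v⟩, ⟨hu, hv⟩, rfl⟩ := he
      exact ⟨u, hu, v, hv, rfl⟩
    -- cardinalities of the special sets
    have hcard₁ : S₁.card = A.card * (B \ I).card := by
      rw [hS₁, Finset.card_image_of_injOn, Finset.card_product]
      rintro ⟨u, v⟩ huv ⟨u', v'⟩ hu'v' h
      obtain ⟨hu, hv⟩ := Finset.mem_product.mp huv
      obtain ⟨hu', hv'⟩ := Finset.mem_product.mp hu'v'
      rw [Finset.mem_sdiff] at hv hv'
      rw [Sym2.eq_iff] at h
      rcases h with ⟨rfl, rfl⟩ | ⟨rfl, rfl⟩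
      · rfl
      · exact absurd hv'.1 (Finset.disjoint_left.mp hdisj hu)
    have hcard₂ : S₂.card = (A \ I).card * (B ∩ I).card := by
      rw [hS₂, Finset.card_image_of_injOn, Finset.card_product]
      rintro ⟨u, v⟩ huv ⟨u', v'⟩ hu'v' h
      obtain ⟨hu, hv⟩ := Finset.mem_product.mp huv
      obtain ⟨hu', hv'⟩ := Finset.mem_product.mp hu'v'
      rw [Finset.mem_sdiff] at hu hu'
      rw [Finset.mem_inter] at hv hv'
      rw [Sym2.eq_iff] at h
      rcases h with ⟨rfl, rfl⟩ | ⟨rfl, rfl⟩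
      · rfl
      · exact absurd hv'.1 (Finset.disjoint_left.mp hdisj hu.1)
    -- special edges lie in G₂
    have hsub₁ : S₁ ⊆ (G₁ ⊔ G₂).edgeFinset := by
      intro e he
      obtain ⟨u, hu, v, hv, rfl⟩ := hmem₁ e he
      rw [Finset.mem_sdiff] at hv
      simp only [SimpleGraph.mem_edgeFinset, SimpleGraph.mem_edgeSet, SimpleGraph.sup_adj]
      exact Or.inr (hjoin u hu v hv.1)
    have hsub₂ : S₂ ⊆ (G₁ ⊔ G₂).edgeFinset := by
      intro e he
      obtain ⟨u, hu, v, hv, rfl⟩ := hmem₂ e he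
      rw [Finset.mem_sdiff] at hu
      rw [Finset.mem_inter] at hv
      simp only [SimpleGraph.mem_edgeFinset, SimpleGraph.mem_edgeSet, SimpleGraph.sup_adj]
      exact Or.inr (hjoin u hu.1 v hv.1)
    -- special edges avoid G₁
    have hA_not : ∀ u ∈ A, u ∈ V₂ := fun u hu => hpart ▸ Finset.mem_union_left _ hu
    have hB_not : ∀ u ∈ B, u ∈ V₂ := fun u hu => hpart ▸ Finset.mem_union_right _ hu
    have hnot₁ : ∀ e ∈ S₁, e ∉ G₁.edgeFinset := by
      intro e he hcon
      obtain ⟨u, hu, v, hv, rfl⟩ := hmem₁ e he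
      rw [Finset.mem_sdiff] at hv
      simp only [SimpleGraph.mem_edgeFinset, SimpleGraph.mem_edgeSet] at hcon
      have hv1 : v ∈ V₁ := (hsupp₁ u v hcon).2
      exact hv.2 (Finset.mem_inter.mpr ⟨hv1, hB_not v hv.1⟩)
    have hnot₂ : ∀ e ∈ S₂, e ∉ G₁.edgeFinset := by
      intro e he hcon
      obtain ⟨u, hu, v, hv, rfl⟩ := hmem₂ e he
      rw [Finset.mem_sdiff] at hu
      simp only [SimpleGraph.mem_edgeFinset, SimpleGraph.mem_edgeSet] at hcon
      have hu1 : u ∈ V₁ := (hsupp₁ u v hcon).1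
      exact hu.2 (Finset.mem_inter.mpr ⟨hu1, hA_not u hu.1⟩)
    -- S₁ and S₂ are disjoint
    have hdisj12 : Disjoint S₁ S₂ := by
      rw [Finset.disjoint_left]
      intro e he1 he2
      obtain ⟨u, hu, v, hv, heq1⟩ := hmem₁ e he1
      obtain ⟨u', hu', v', hv', heq2⟩ := hmem₂ e he2
      rw [Finset.mem_sdiff] at hv hu'
      rw [Finset.mem_inter] at hv'
      rw [heq1, Sym2.eq_iff] at heq2
      rcases heq2 with ⟨rfl, rfl⟩ | ⟨rfl, rfl⟩
      · exact hv.2 hv'.2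
      · exact (Finset.disjoint_left.mp hdisj hu) hv'.1
    -- edge count lower bound
    have hsubU : G₁.edgeFinset ∪ (S₁ ∪ S₂) ⊆ (G₁ ⊔ G₂).edgeFinset := by
      intro e he
      rcases Finset.mem_union.mp he with h | h
      · rw [SimpleGraph.mem_edgeFinset, SimpleGraph.edgeSet_sup]
        exact Or.inl (SimpleGraph.mem_edgeFinset.mp h)
      · rcases Finset.mem_union.mp h with h | h
        exacts [hsub₁ h, hsub₂ h]
    have hdisjE : Disjoint G₁.edgeFinset (S₁ ∪ S₂) := by
      rw [Finset.disjoint_right]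
      intro e he
      rcases Finset.mem_union.mp he with h | h
      exacts [hnot₁ e h, hnot₂ e h]
    have hbig : G₁.edgeFinset.card + S₁.card + S₂.card ≤ (G₁ ⊔ G₂).edgeFinset.card := by
      calc G₁.edgeFinset.card + S₁.card + S₂.card
          = (G₁.edgeFinset ∪ (S₁ ∪ S₂)).card := by
            rw [Finset.card_union_of_disjoint hdisjE, Finset.card_union_of_disjoint hdisj12,
              add_assoc]
        _ ≤ (G₁ ⊔ G₂).edgeFinset.card := Finset.card_le_card hsubU
    -- relate ncard to edgeFinset.card
    have hn1 : (G₁.edgeSet.ncard : ℤ) = (G₁.edgeFinset.card : ℤ) := by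
      rw [Set.ncard_eq_toFinset_card' G₁.edgeSet]
      congr 2
    have hn2 : ((G₁ ⊔ G₂).edgeSet.ncard : ℤ) = ((G₁ ⊔ G₂).edgeFinset.card : ℤ) := by
      rw [Set.ncard_eq_toFinset_card' (G₁ ⊔ G₂).edgeSet]
      congr 2
    -- decomposition of V₂ \ V₁
    have hunion : A \ I ∪ B \ I = V₂ \ V₁ := by
      ext v
      simp only [Finset.mem_union, Finset.mem_sdiff, Finset.mem_inter, hI, ← hpart,
        Finset.mem_union]
      tauto
    have hsplit : (V₂ \ V₁).card = (A \ I).card + (B \ I).card := by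
      rw [← hunion,
        Finset.card_union_of_disjoint (hdisj.mono Finset.sdiff_subset Finset.sdiff_subset)]
    -- arithmetic finish
    have hxA : ((A \ I).card : ℤ) = (A.card : ℤ) - ((A ∩ I).card : ℤ) := by
      have := Finset.card_sdiff_add_card_inter A I
      omega
    have hbig' : (G₁.edgeFinset.card : ℤ) + (A.card : ℤ) * ((B \ I).card : ℤ)
        + ((A \ I).card : ℤ) * ((B ∩ I).card : ℤ) ≤ ((G₁ ⊔ G₂).edgeFinset.card : ℤ) := by
      have := hbig
      rw [hcard₁, hcard₂] at this
      push_cast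
      exact_mod_cast this
    have hsplit' : ((V₂ \ V₁).card : ℤ) = ((A \ I).card : ℤ) + ((B \ I).card : ℤ) := by
      exact_mod_cast hsplit
    rw [hn1, hn2]
    nlinarith [hbig', hsplit']
  · -- the equality
    have h1 : (B \ I).card + (B ∩ I).card = B.card := Finset.card_sdiff_add_card_inter B I
    have h2 : (A \ I).card + (A ∩ I).card = A.card := Finset.card_sdiff_add_card_inter A I
    have h1' : ((B \ I).card : ℤ) = (B.card : ℤ) - ((B ∩ I).card : ℤ) := by omega
    have h2' : ((A \ I).card : ℤ) = (A.card : ℤ) - ((A ∩ I).card : ℤ) := by omega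
    rw [h1', h2']
end

section
/- Let p = p(n) be a sequence of probabilities satisfying p(n) ≤ 1/(4√(n·log n)) for all n, and let Γ ~ G(n,p). Then asymptotically almost surely the following holds: for every integer m with log n ≤ m ≤ 2·log n, every set of m vertices of Γ spans at most 2m − 5 edges of Γ. -/
namespace RACG

/-- The Bernoulli measure on `Bool` with success probability `p`. -/
noncomputable def bern (p : ℝ) : MeasureTheory.Measure Bool :=
  ENNReal.ofReal p • MeasureTheory.Measure.dirac true +
    ENNReal.ofReal (1 - p) • MeasureTheory.Measure.dirac false

/-- The Erdős–Rényi measure: each potential edge of a graph on `Fin n` is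
present independently with probability `p`.  The sample space consists of
functions assigning a Boolean to each unordered pair of vertices. -/
noncomputable def erMeasure (n : ℕ) (p : ℝ) :
    MeasureTheory.Measure (Sym2 (Fin n) → Bool) :=
  MeasureTheory.Measure.pi fun _ => bern p

/-- The simple graph on `Fin n` determined by a sample point `ω`. -/
def graphOf {n : ℕ} (ω : Sym2 (Fin n) → Bool) : SimpleGraph (Fin n) where
  Adj u v := u ≠ v ∧ ω s(u, v) = true
  symm := ⟨by
    rintro u v ⟨h1, h2⟩
    exact ⟨h1.symm, by rwa [Sym2.eq_swap]⟩⟩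
  loopless := ⟨fun u h => h.1 rfl⟩

end RACG

namespace RACG

/-- The number of edges of `G` spanned by the vertex set `S`. -/
noncomputable def edgesWithin {V : Type*} (G : SimpleGraph V) (S : Finset V) : ℕ :=
  {e ∈ G.edgeSet | ∀ v ∈ e, v ∈ S}.ncard

end RACG

namespace RACG
open MeasureTheory Nat

lemma bern_apply_true (p : ℝ) : bern p {true} = ENNReal.ofReal p := by
  simp [bern, Measure.dirac_apply' _ (measurableSet_singleton true)]

lemma bern_univ (p : ℝ) (h0 : 0 ≤ p) (h1 : p ≤ 1) : bern p Set.univ = 1 := by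
  have h : bern p Set.univ = ENNReal.ofReal p + ENNReal.ofReal (1 - p) := by simp [bern]
  rw [h, ← ENNReal.ofReal_add h0 (by linarith)]
  norm_num

instance bern_finite (p : ℝ) : IsFiniteMeasure (bern p) := by
  constructor
  simp [bern]

lemma bern_prob (p : ℝ) (h0 : 0 ≤ p) (h1 : p ≤ 1) : IsProbabilityMeasure (bern p) :=
  ⟨bern_univ p h0 h1⟩


lemma erMeasure_univ (n : ℕ) (p : ℝ) (h0 : 0 ≤ p) (h1 : p ≤ 1) :
    erMeasure n p Set.univ = 1 := by
  haveI : IsProbabilityMeasure (bern p) := bern_prob p h0 h1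
  exact @measure_univ _ _ (erMeasure n p) (Measure.pi.instIsProbabilityMeasure _)

lemma erMeasure_allTrue (n : ℕ) (p : ℝ) (h0 : 0 ≤ p) (h1 : p ≤ 1) (E : Finset (Sym2 (Fin n))) :
    erMeasure n p {ω | ∀ e ∈ E, ω e = true} = ENNReal.ofReal p ^ E.card := by
  have hset : {ω : Sym2 (Fin n) → Bool | ∀ e ∈ E, ω e = true}
      = Set.pi Set.univ (fun e => if e ∈ E then {true} else Set.univ) := by
    ext ω
    simp only [Set.mem_setOf_eq, Set.mem_pi, Set.mem_univ, forall_true_left]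
    constructor
    · intro h e
      by_cases he : e ∈ E <;> simp [he, h]
    · intro h e he
      have := h e
      simpa [he] using this
  rw [erMeasure, hset, Measure.pi_pi]
  have hb : ∀ e : Sym2 (Fin n), bern p (if e ∈ E then ({true} : Set Bool) else Set.univ)
      = if e ∈ E then ENNReal.ofReal p else 1 := by
    intro e
    by_cases he : e ∈ E
    · rw [if_pos he, if_pos he, bern_apply_true]
    · rw [if_neg he, if_neg he, bern_univ p h0 h1]
  simp only [hb]
  rw [Finset.prod_ite, Finset.prod_const, Finset.prod_const_one, mul_one]
  congr 1
  simp

open Classical in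
noncomputable def within {n : ℕ} (S : Finset (Fin n)) : Finset (Sym2 (Fin n)) :=
  Finset.univ.filter (fun e => ¬ e.IsDiag ∧ ∀ v ∈ e, v ∈ S)

noncomputable def toPair {n : ℕ} : Sym2 (Fin n) → Finset (Fin n) :=
  Sym2.lift ⟨fun a b => {a, b}, fun a b => Finset.pair_comm a b⟩

lemma card_within_le {n : ℕ} (S : Finset (Fin n)) :
    (within S).card ≤ S.card.choose 2 := by
  rw [← Finset.card_powersetCard]
  apply Finset.card_le_card_of_injOn toPair
  · intro e he
    induction e with
    | h a b =>
      simp only [within, Finset.coe_filter, Finset.mem_coe, Finset.mem_filter, Set.mem_setOf_eq] at he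
      obtain ⟨_, hd, hS⟩ := he
      rw [Sym2.mk_isDiag_iff] at hd
      rw [Finset.mem_coe, Finset.mem_powersetCard]
      constructor
      · intro v hv
        simp only [toPair, Sym2.lift_mk, Finset.mem_insert, Finset.mem_singleton] at hv
        rcases hv with rfl | rfl
        · exact hS v (Sym2.mem_mk_left _ _)
        · exact hS v (Sym2.mem_mk_right _ _)
      · exact Finset.card_pair hd
  · intro e1 h1 e2 h2 heq
    induction e1 with
    | h a b =>
      induction e2 with
      | h c d =>
        simp only [within, Finset.coe_filter, Set.mem_setOf_eq, Sym2.mk_isDiag_iff] at h1 h2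
        simp only [toPair, Sym2.lift_mk] at heq
        have hac : a ∈ ({c, d} : Finset (Fin n)) := by
          rw [← heq]; simp
        have hbc : b ∈ ({c, d} : Finset (Fin n)) := by
          rw [← heq]; simp
        have hca : c ∈ ({a, b} : Finset (Fin n)) := by
          rw [heq]; simp
        simp only [Finset.mem_insert, Finset.mem_singleton] at hac hbc
        rw [Sym2.eq_iff]
        rcases hac with rfl | rfl <;> rcases hbc with rfl | rfl
        · exact absurd rfl h1.2.1
        · exact Or.inl ⟨rfl, rfl⟩
        · exact Or.inr ⟨rfl, rfl⟩
        · exact absurd rfl h1.2.1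

lemma bad_subset {n : ℕ} (k : ℕ) (S : Finset (Fin n)) :
    {ω : Sym2 (Fin n) → Bool | k ≤ edgesWithin (graphOf ω) S} ⊆
      ⋃ E ∈ (within S).powersetCard k, {ω | ∀ e ∈ E, ω e = true} := by
  intro ω h
  simp only [Set.mem_setOf_eq, edgesWithin] at h
  set T : Set (Sym2 (Fin n)) := {e ∈ (graphOf ω).edgeSet | ∀ v ∈ e, v ∈ S} with hT
  have hfin : T.Finite := Set.toFinite T
  rw [Set.ncard_eq_toFinset_card T hfin] at h
  have hsub : hfin.toFinset ⊆ within S := by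
    intro e he
    rw [Set.Finite.mem_toFinset] at he
    obtain ⟨hedge, hmem⟩ := he
    simp only [within, Finset.mem_filter, Finset.mem_univ, true_and]
    refine ⟨?_, hmem⟩
    induction e with
    | h a b =>
      rw [SimpleGraph.mem_edgeSet] at hedge
      rw [Sym2.mk_isDiag_iff]
      exact (show a ≠ b ∧ ω s(a, b) = true from hedge).1
  obtain ⟨E, hE, hcard⟩ := Finset.exists_subset_card_eq h
  refine Set.mem_iUnion₂.2 ⟨E, ?_, ?_⟩
  · rw [Finset.mem_powersetCard]
    exact ⟨hE.trans hsub, hcard⟩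
  · intro e he
    have : e ∈ T := by
      rw [← Set.Finite.mem_toFinset hfin]
      exact hE he
    obtain ⟨hedge, -⟩ := this
    induction e with
    | h a b =>
      rw [SimpleGraph.mem_edgeSet] at hedge
      exact (show a ≠ b ∧ ω s(a, b) = true from hedge).2

lemma measure_bad_le (n : ℕ) (p : ℝ) (h0 : 0 ≤ p) (h1 : p ≤ 1) (k : ℕ) (S : Finset (Fin n)) :
    erMeasure n p {ω | k ≤ edgesWithin (graphOf ω) S} ≤
      ((S.card.choose 2).choose k : ENNReal) * ENNReal.ofReal p ^ k := by
  refine (measure_mono (bad_subset k S)).trans ?_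
  refine (measure_biUnion_finset_le _ _).trans ?_
  have heq : ∀ E ∈ (within S).powersetCard k,
      erMeasure n p {ω | ∀ e ∈ E, ω e = true} = ENNReal.ofReal p ^ k := by
    intro E hE
    rw [erMeasure_allTrue n p h0 h1 E, (Finset.mem_powersetCard.1 hE).2]
  rw [Finset.sum_congr rfl heq, Finset.sum_const, Finset.card_powersetCard, nsmul_eq_mul]
  apply _root_.mul_le_mul_left
  exact_mod_cast Nat.cast_le.2 (Nat.choose_le_choose k (card_within_le S))

lemma choose_le_epow (N k : ℕ) (hk : 0 < k) :
    (N.choose k : ℝ) ≤ (Real.exp 1 * N / k) ^ k := by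
  have hkR : (0:ℝ) < k := by exact_mod_cast hk
  have hfac : (0:ℝ) < (k ! : ℝ) := by exact_mod_cast k.factorial_pos
  have h1 : (N.choose k : ℝ) ≤ (N:ℝ) ^ k / k ! := Nat.choose_le_pow_div k N
  refine h1.trans ?_
  have hkk : ((k:ℝ)) ^ k ≤ Real.exp k * k ! := by
    have h := Real.pow_div_factorial_le_exp (x := (k:ℝ)) (le_of_lt hkR) k
    rw [div_le_iff₀ hfac] at h
    linarith
  have hrw : (Real.exp 1 * N / k) ^ k = Real.exp k * (N:ℝ)^k / (k:ℝ)^k := by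
    rw [div_pow, mul_pow, ← Real.exp_one_pow]
  rw [hrw, div_le_div_iff₀ hfac (by positivity)]
  calc (N:ℝ)^k * (k:ℝ)^k ≤ (N:ℝ)^k * (Real.exp k * k !) := by
        apply mul_le_mul_of_nonneg_left hkk (by positivity)
    _ = Real.exp k * (N:ℝ)^k * k ! := by ring

lemma key_t (c t : ℝ) (hc : 0 < c) (hlc : Real.log c ≤ -2) (ht1 : 1 ≤ t) (ht2 : t ≤ 2) :
    t * Real.log (c * t) ≤ Real.log c := by
  have ht0 : 0 < t := by linarith
  rw [Real.log_mul (ne_of_gt hc) (ne_of_gt ht0)]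
  have hlt : Real.log t ≤ t - 1 := Real.log_le_sub_one_of_pos ht0
  nlinarith [mul_le_mul_of_nonneg_left hlt ht0.le,
    mul_le_mul_of_nonneg_left hlc (by linarith : (0:ℝ) ≤ t - 1)]

noncomputable def cOne : ℝ := 1089 * Real.exp 1 ^ 3 / 262144

lemma cOne_pos : 0 < cOne := by unfold cOne; positivity

lemma log_cOne : Real.log cOne ≤ -2 := by
  have h5 : Real.exp 1 ^ 5 ≤ 240 := by
    calc Real.exp 1 ^ 5 ≤ 2.7182818286 ^ 5 :=
          pow_le_pow_left₀ (Real.exp_pos 1).le Real.exp_one_lt_d9.le 5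
      _ ≤ 240 := by norm_num
  have hle : cOne ≤ Real.exp (-2) := by
    have h2 : Real.exp (-2) = 1 / Real.exp 1 ^ 2 := by
      have : Real.exp 1 ^ 2 = Real.exp 2 := by
        rw [← Real.exp_nat_mul]; norm_num
      rw [Real.exp_neg, this, one_div]
    rw [h2, cOne, div_le_div_iff₀ (by norm_num) (by positivity)]
    nlinarith [Real.exp_pos 1]
  calc Real.log cOne ≤ Real.log (Real.exp (-2)) :=
        Real.log_le_log cOne_pos hle
    _ = -2 := Real.log_exp _


set_option maxHeartbeats 1000000 in
lemma term_bound (n m : ℕ) (q : ℝ) (hq0 : 0 ≤ q)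
    (hL : 40 ≤ Real.log n) (hm1 : Real.log n ≤ (m:ℝ)) (hm2 : (m:ℝ) ≤ 2 * Real.log n)
    (hq : q ≤ 1 / (4 * Real.sqrt (n * Real.log n))) :
    (n.choose m : ℝ) * (((m.choose 2).choose (2*m-4) : ℕ) * q ^ (2*m-4)) ≤
      Real.exp 1 ^ 2 / cOne ^ 2 / Real.log n ^ 2 := by
  set L := Real.log n with hLdef
  have hL0 : (0:ℝ) < L := by linarith
  have hn0 : (0:ℝ) < (n:ℝ) := by
    rcases Nat.eq_zero_or_pos n with h | h
    · subst h; rw [hLdef] at hL; simp at hL; linarith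
    · exact_mod_cast h
  have hnexp : (n:ℝ) = Real.exp L := (Real.exp_log hn0).symm
  have hm40 : 40 ≤ m := by exact_mod_cast le_trans hL hm1
  have hmR : (40:ℝ) ≤ (m:ℝ) := by exact_mod_cast hm40
  have hm0 : (0:ℝ) < m := by linarith
  set k := 2*m - 4 with hk
  set j := m - 2 with hj
  have hkj : k = 2 * j := by omega
  have hmj : m = j + 2 := by omega
  have hkR : ((k:ℕ):ℝ) = 2*(m:ℝ) - 4 := by
    rw [hk, Nat.cast_sub (by omega : 4 ≤ 2*m)]
    push_cast; ring
  have he : (0:ℝ) < Real.exp 1 := Real.exp_pos 1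
  -- Step A
  have hA : (n.choose m : ℝ) ≤ (Real.exp 1 * n / m) ^ m := choose_le_epow n m (by omega)
  -- Step B
  have hk0 : 0 < k := by omega
  have hB1 : ((m.choose 2).choose k : ℝ) ≤ (Real.exp 1 * (m.choose 2) / k) ^ k :=
    choose_le_epow _ k hk0
  have hB2 : Real.exp 1 * (m.choose 2) / k ≤ (33 * Real.exp 1 / 128) * m := by
    rw [Nat.cast_choose_two, hkR, div_le_iff₀ (by linarith)]
    nlinarith [mul_nonneg (mul_nonneg he.le hm0.le) (by linarith : (0:ℝ) ≤ 2*(m:ℝ) - 68)]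
  have hB : ((m.choose 2).choose k : ℝ) ≤ ((33 * Real.exp 1 / 128) * m) ^ k :=
    hB1.trans (pow_le_pow_left₀ (by positivity) hB2 k)
  -- Step C
  have hnL0 : (0:ℝ) ≤ (n:ℝ) * L := by positivity
  have hq2 : q^2 ≤ 1/(16*((n:ℝ)*L)) := by
    have h2 : q^2 ≤ (1 / (4*Real.sqrt ((n:ℝ)*L)))^2 := pow_le_pow_left₀ hq0 hq 2
    refine h2.trans_eq ?_
    rw [div_pow, mul_pow, Real.sq_sqrt hnL0]
    norm_num
  have hC : q^k ≤ (1/(16*((n:ℝ)*L)))^j := by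
    rw [hkj, pow_mul]
    exact pow_le_pow_left₀ (by positivity) hq2 j
  -- combine
  have hT : (n.choose m : ℝ) * (((m.choose 2).choose k : ℕ) * q ^ k) ≤
      (Real.exp 1 * n / m) ^ m * (((33 * Real.exp 1 / 128) * m) ^ k * (1/(16*((n:ℝ)*L)))^j) := by
    apply mul_le_mul hA (mul_le_mul hB hC (by positivity) (by positivity))
      (by positivity) (by positivity)
  set t := (m:ℝ)/L with ht
  have ht1 : 1 ≤ t := (one_le_div hL0).2 hm1
  have ht2 : t ≤ 2 := by rw [ht, div_le_iff₀ hL0]; linarith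
  have ht0 : 0 < t := by linarith
  have hbpos : 0 < cOne * t := mul_pos cOne_pos ht0
  have hsplit : ∀ x y z : ℝ, x ^ m * (y ^ k * z ^ j) = x ^ 2 * (x * y ^ 2 * z) ^ j := by
    intro x y z
    rw [hmj, hkj, pow_add, pow_mul, mul_pow, mul_pow]
    ring
  have hbracket : (Real.exp 1 * (n:ℝ) / m) * ((33 * Real.exp 1 / 128) * m) ^ 2 * (1/(16*((n:ℝ)*L)))
      = cOne * t := by
    have he3 : Real.exp 1 ^ 3 = Real.exp 3 := by
      rw [← Real.exp_nat_mul]; norm_num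
    rw [cOne, ht, he3]
    field_simp
    rw [← he3]
    ring
  -- Step F
  have hkey : (m:ℝ) * Real.log (cOne * t) ≤ L * Real.log cOne := by
    have hmt : (m:ℝ) = t * L := by rw [ht]; field_simp
    rw [hmt]
    calc t * L * Real.log (cOne * t) = L * (t * Real.log (cOne * t)) := by ring
      _ ≤ L * Real.log cOne :=
        mul_le_mul_of_nonneg_left (key_t cOne t cOne_pos log_cOne ht1 ht2) hL0.le
  have hbm : (cOne*t)^m = Real.exp ((m:ℝ) * Real.log (cOne*t)) := by
    conv_lhs => rw [← Real.exp_log hbpos]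
    rw [← Real.exp_nat_mul]
  have hFj : (cOne*t)^j ≤ (1/cOne^2) * Real.exp (L * Real.log cOne) := by
    have hsq : cOne^2 ≤ (cOne*t)^2 := by
      have h1 : (1:ℝ) ≤ t^2 := by nlinarith
      calc cOne^2 = cOne^2 * 1 := by ring
        _ ≤ cOne^2 * t^2 := mul_le_mul_of_nonneg_left h1 (sq_nonneg cOne)
        _ = (cOne*t)^2 := by ring
    have hpow : (cOne*t)^j * (cOne*t)^2 = (cOne*t)^m := by rw [← pow_add, ← hmj]
    calc (cOne*t)^j = (cOne*t)^m / (cOne*t)^2 := by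
          rw [eq_div_iff (by positivity)]; exact hpow
      _ ≤ (cOne*t)^m / cOne^2 := by
          gcongr
          exact pow_pos cOne_pos 2
      _ = Real.exp ((m:ℝ) * Real.log (cOne*t)) / cOne^2 := by rw [hbm]
      _ ≤ Real.exp (L * Real.log cOne) / cOne^2 := by
          gcongr
      _ = (1/cOne^2) * Real.exp (L * Real.log cOne) := by ring
  -- Step G
  have hexp2 : Real.exp (L * Real.log cOne) ≤ Real.exp (-(2*L)) := by
    apply Real.exp_le_exp.2
    calc L * Real.log cOne ≤ L * (-2) := mul_le_mul_of_nonneg_left log_cOne hL0.le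
      _ = -(2*L) := by ring
  have hfinal : (n.choose m : ℝ) * (((m.choose 2).choose k : ℕ) * q ^ k) ≤
      (Real.exp 1 * n / L) ^ 2 * ((1/cOne^2) * Real.exp (-(2*L))) := by
    calc (n.choose m : ℝ) * (((m.choose 2).choose k : ℕ) * q ^ k)
        ≤ (Real.exp 1 * n / m) ^ m * (((33 * Real.exp 1 / 128) * m) ^ k * (1/(16*((n:ℝ)*L)))^j) := hT
      _ = (Real.exp 1 * n / m) ^ 2 * ((cOne * t)) ^ j := by
          rw [hsplit (Real.exp 1 * n / m) ((33 * Real.exp 1 / 128) * m) (1/(16*((n:ℝ)*L))),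
            hbracket]

      _ ≤ (Real.exp 1 * n / m) ^ 2 * ((1/cOne^2) * Real.exp (L * Real.log cOne)) :=
          mul_le_mul_of_nonneg_left hFj (by positivity)
      _ ≤ (Real.exp 1 * n / L) ^ 2 * ((1/cOne^2) * Real.exp (-(2*L))) := by
          apply mul_le_mul ?_ ?_ (by positivity) (by positivity)
          · apply pow_le_pow_left₀ (by positivity)
            apply div_le_div_of_nonneg_left (by positivity) hL0 hm1
          · exact mul_le_mul_of_nonneg_left hexp2 (by positivity)
  refine hfinal.trans_eq ?_
  have hn2 : (n:ℝ)^2 * Real.exp (-(2*L)) = 1 := by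
    rw [hnexp, sq, ← Real.exp_add, ← Real.exp_add,
      show L + L + -(2*L) = 0 by ring, Real.exp_zero]
  have : (Real.exp 1 * n / L) ^ 2 * ((1/cOne^2) * Real.exp (-(2*L)))
      = (Real.exp 1 ^ 2 / cOne ^ 2 / L ^ 2) * ((n:ℝ)^2 * Real.exp (-(2*L))) := by
    have he2 : Real.exp 1 ^ 2 = Real.exp 2 := by
      rw [← Real.exp_nat_mul]; norm_num
    have hc0 : cOne ≠ 0 := ne_of_gt cOne_pos
    field_simp
  rw [this, hn2, mul_one]


noncomputable def Bnd (n : ℕ) (q : ℝ) : ℝ :=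
  ∑ m ∈ Finset.Icc ⌈Real.log n⌉₊ ⌊2 * Real.log n⌋₊,
    (n.choose m : ℝ) * (((m.choose 2).choose (2*m-4) : ℕ) * q ^ (2*m-4))

lemma measure_compl_le (n : ℕ) (p : ℝ) (h0 : 0 ≤ p) (h1 : p ≤ 1) :
    erMeasure n p {ω | ∀ m : ℕ, Real.log n ≤ (m : ℝ) → (m : ℝ) ≤ 2 * Real.log n →
          ∀ S : Finset (Fin n), S.card = m →
            (edgesWithin (graphOf ω) S : ℤ) ≤ 2 * (m : ℤ) - 5}ᶜ ≤
      ENNReal.ofReal (Bnd n p) := by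
  set a := ⌈Real.log n⌉₊
  set b := ⌊2 * Real.log n⌋₊
  have hsub : {ω : Sym2 (Fin n) → Bool | ∀ m : ℕ, Real.log n ≤ (m : ℝ) →
        (m : ℝ) ≤ 2 * Real.log n → ∀ S : Finset (Fin n), S.card = m →
        (edgesWithin (graphOf ω) S : ℤ) ≤ 2 * (m : ℤ) - 5}ᶜ ⊆
      ⋃ m ∈ Finset.Icc a b, ⋃ S ∈ Finset.powersetCard m (Finset.univ : Finset (Fin n)),
        {ω | 2*m-4 ≤ edgesWithin (graphOf ω) S} := by
    intro ω hω
    simp only [Set.mem_compl_iff, Set.mem_setOf_eq, not_forall] at hω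
    obtain ⟨m, hm1, hm2, S, hS, hgt⟩ := hω
    push_neg at hgt
    refine Set.mem_iUnion₂.2 ⟨m, ?_, Set.mem_iUnion₂.2 ⟨S, ?_, ?_⟩⟩
    · simp only [Finset.mem_Icc]
      exact ⟨Nat.ceil_le.2 hm1, Nat.le_floor hm2⟩
    · simp [Finset.mem_powersetCard_univ, hS]
    · simp only [Set.mem_setOf_eq]
      omega
  refine (measure_mono hsub).trans ?_
  refine (measure_biUnion_finset_le _ _).trans ?_
  have step : ∀ m ∈ Finset.Icc a b,
      erMeasure n p (⋃ S ∈ Finset.powersetCard m (Finset.univ : Finset (Fin n)),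
        {ω | 2*m-4 ≤ edgesWithin (graphOf ω) S}) ≤
      ENNReal.ofReal ((n.choose m : ℝ) * (((m.choose 2).choose (2*m-4) : ℕ) * p ^ (2*m-4))) := by
    intro m _
    refine (measure_biUnion_finset_le _ _).trans ?_
    have hb : ∀ S ∈ Finset.powersetCard m (Finset.univ : Finset (Fin n)),
        erMeasure n p {ω | 2*m-4 ≤ edgesWithin (graphOf ω) S} ≤
        ((m.choose 2).choose (2*m-4) : ENNReal) * ENNReal.ofReal p ^ (2*m-4) := by
      intro S hS
      have hcard : S.card = m := (Finset.mem_powersetCard_univ).1 hS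
      simpa [hcard] using measure_bad_le n p h0 h1 (2*m-4) S
    refine (Finset.sum_le_sum hb).trans ?_
    rw [Finset.sum_const, Finset.card_powersetCard, Finset.card_univ, Fintype.card_fin,
      nsmul_eq_mul]
    rw [ENNReal.ofReal_mul (by positivity), ENNReal.ofReal_mul (by positivity),
      ENNReal.ofReal_pow h0, ENNReal.ofReal_natCast, ENNReal.ofReal_natCast]
  refine (Finset.sum_le_sum step).trans ?_
  rw [Bnd, ENNReal.ofReal_sum_of_nonneg]
  intro i _
  positivity

lemma Bnd_le (n : ℕ) (q : ℝ) (hq0 : 0 ≤ q) (hL : 40 ≤ Real.log n)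
    (hq : q ≤ 1 / (4 * Real.sqrt (n * Real.log n))) :
    Bnd n q ≤ (3 * Real.exp 1 ^ 2 / cOne ^ 2) / Real.log n := by
  set L := Real.log n with hLdef
  have hL0 : (0:ℝ) < L := by linarith
  have hterm : ∀ m ∈ Finset.Icc ⌈L⌉₊ ⌊2 * L⌋₊,
      (n.choose m : ℝ) * (((m.choose 2).choose (2*m-4) : ℕ) * q ^ (2*m-4)) ≤
      Real.exp 1 ^ 2 / cOne ^ 2 / L ^ 2 := by
    intro m hm
    rw [Finset.mem_Icc] at hm
    refine term_bound n m q hq0 hL ?_ ?_ hq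
    · exact le_trans (Nat.le_ceil L) (by exact_mod_cast hm.1)
    · calc (m:ℝ) ≤ (⌊2*L⌋₊ : ℝ) := by exact_mod_cast hm.2
        _ ≤ 2*L := Nat.floor_le (by positivity)
  have hsum : Bnd n q ≤ (Finset.Icc ⌈L⌉₊ ⌊2 * L⌋₊).card • (Real.exp 1 ^ 2 / cOne ^ 2 / L ^ 2) :=
    Finset.sum_le_card_nsmul _ _ _ hterm
  have hcard : ((Finset.Icc ⌈L⌉₊ ⌊2 * L⌋₊).card : ℝ) ≤ 3 * L := by
    rw [Nat.card_Icc]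
    calc ((⌊2*L⌋₊ + 1 - ⌈L⌉₊ : ℕ) : ℝ) ≤ ((⌊2*L⌋₊ + 1 : ℕ) : ℝ) := by
          exact_mod_cast Nat.sub_le _ _
      _ = (⌊2*L⌋₊ : ℝ) + 1 := by push_cast; ring
      _ ≤ 2*L + 1 := by linarith [Nat.floor_le (by positivity : (0:ℝ) ≤ 2*L)]
      _ ≤ 3*L := by linarith
  rw [nsmul_eq_mul] at hsum
  refine hsum.trans ?_
  have hKpos : (0:ℝ) ≤ Real.exp 1 ^ 2 / cOne ^ 2 / L ^ 2 := by
    have := cOne_pos; positivity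
  calc ((Finset.Icc ⌈L⌉₊ ⌊2 * L⌋₊).card : ℝ) * (Real.exp 1 ^ 2 / cOne ^ 2 / L ^ 2)
      ≤ (3*L) * (Real.exp 1 ^ 2 / cOne ^ 2 / L ^ 2) := mul_le_mul_of_nonneg_right hcard hKpos
    _ = (3 * Real.exp 1 ^ 2 / cOne ^ 2) / L := by
        have hLne : L ≠ 0 := ne_of_gt hL0
        have hcne : cOne ≠ 0 := ne_of_gt cOne_pos
        field_simp

end RACG

open MeasureTheory in
open RACG Filter in
/-- Let `p = p(n)` be a sequence of probabilities with
`p(n) ≤ 1/(4√(n log n))` (for all `n ≥ 2`, where the bound is meaningful),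
and let `Γ ~ G(n, p)`.  Then a.a.s. for every integer `m` with
`log n ≤ m ≤ 2 log n`, every set of `m` vertices of `Γ` spans at most
`2m - 5` edges. -/
theorem aas_no_dense_sets (p : ℕ → ℝ) (hp0 : ∀ n, 0 ≤ p n) (hp1 : ∀ n, p n ≤ 1)
    (hp : ∀ n : ℕ, 2 ≤ n → p n ≤ 1 / (4 * Real.sqrt (n * Real.log n))) :
    Tendsto
      (fun n : ℕ => erMeasure n (p n)
        {ω | ∀ m : ℕ, Real.log n ≤ (m : ℝ) → (m : ℝ) ≤ 2 * Real.log n →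
          ∀ S : Finset (Fin n), S.card = m →
            (edgesWithin (graphOf ω) S : ℤ) ≤ 2 * (m : ℤ) - 5})
      atTop (nhds 1) := by
  set G : ∀ n : ℕ, Set (Sym2 (Fin n) → Bool) := fun n =>
    {ω | ∀ m : ℕ, Real.log n ≤ (m : ℝ) → (m : ℝ) ≤ 2 * Real.log n →
      ∀ S : Finset (Fin n), S.card = m →
        (edgesWithin (graphOf ω) S : ℤ) ≤ 2 * (m : ℤ) - 5} with hG
  set g : ℕ → ENNReal := fun n => erMeasure n (p n) (G n)ᶜ with hg
  -- log n → ∞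
  have hlog : Tendsto (fun n : ℕ => Real.log n) atTop atTop :=
    Real.tendsto_log_atTop.comp (tendsto_natCast_atTop_atTop)
  -- g → 0
  have hg0 : Tendsto g atTop (nhds 0) := by
    have hub : ∀ᶠ n : ℕ in atTop,
        g n ≤ ENNReal.ofReal ((3 * Real.exp 1 ^ 2 / cOne ^ 2) / Real.log n) := by
      filter_upwards [hlog.eventually_ge_atTop 40, eventually_ge_atTop 2] with n hL hn2
      calc g n ≤ ENNReal.ofReal (Bnd n (p n)) := measure_compl_le n (p n) (hp0 n) (hp1 n)
        _ ≤ _ := ENNReal.ofReal_le_ofReal (Bnd_le n (p n) (hp0 n) hL (hp n hn2))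
    have hto : Tendsto (fun n : ℕ => ENNReal.ofReal ((3 * Real.exp 1 ^ 2 / cOne ^ 2) / Real.log n))
        atTop (nhds 0) := by
      rw [← ENNReal.ofReal_zero]
      apply ENNReal.tendsto_ofReal
      exact Tendsto.div_atTop tendsto_const_nhds hlog
    exact tendsto_of_tendsto_of_tendsto_of_le_of_le' tendsto_const_nhds hto
      (Eventually.of_forall fun n => zero_le) hub
  -- squeeze for the measure of G n
  have hle1 : ∀ n, erMeasure n (p n) (G n) ≤ 1 := by
    intro n
    calc erMeasure n (p n) (G n) ≤ erMeasure n (p n) Set.univ :=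
          measure_mono (Set.subset_univ _)
      _ = 1 := erMeasure_univ n (p n) (hp0 n) (hp1 n)
  have hge : ∀ n, 1 - g n ≤ erMeasure n (p n) (G n) := by
    intro n
    rw [tsub_le_iff_right]
    calc (1:ENNReal) = erMeasure n (p n) Set.univ :=
          (erMeasure_univ n (p n) (hp0 n) (hp1 n)).symm
      _ = erMeasure n (p n) (G n ∪ (G n)ᶜ) := by rw [Set.union_compl_self]
      _ ≤ erMeasure n (p n) (G n) + g n := measure_union_le _ _
  have hlow : Tendsto (fun n => 1 - g n) atTop (nhds 1) := by
    have := ENNReal.Tendsto.sub (tendsto_const_nhds (x := (1:ENNReal))) hg0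
      (Or.inl ENNReal.one_ne_top)
    simpa using this
  exact tendsto_of_tendsto_of_tendsto_of_le_of_le hlow tendsto_const_nhds hge hle1
end
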